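/- arXiv:0708.2280 — 6 statements merged into one kernel-verified Lean document; each statement's English description precedes it below -/
import Mathlib

section
/- Every finite E-group that can be generated by 3 elements is nilpotent of class at most 2 (i.e., its derived subgroup is contained in its center). -/
open scoped commutatorElement

def IsEGroup (G : Type*) [Group G] : Prop :=
  ∀ (φ : G →* G) (x : G), x * φ x = φ x * x

namespace EGroupAux

variable {G : Type*} [Group G]

def N (x : G) : Subgroup G := Subgroup.normalClosure {x}

lemma mem_N_self (x : G) : x ∈ N x := Subgroup.subset_normalClosure rfl

lemma conj_mem_N {x u : G} (hu : u ∈ N x) (g : G) : g * u * g⁻¹ ∈ N x :=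
  Subgroup.normalClosure_normal.conj_mem u hu g

lemma comm_mem_N_left {x u : G} (hu : u ∈ N x) (g : G) : ⁅u, g⁆ ∈ N x := by
  have h : ⁅u, g⁆ = u * (g * u⁻¹ * g⁻¹) := by group
  rw [h]
  exact mul_mem hu (conj_mem_N (inv_mem hu) g)

lemma comm_mem_N_right {x u : G} (hu : u ∈ N x) (g : G) : ⁅g, u⁆ ∈ N x := by
  have h : ⁅g, u⁆ = (g * u * g⁻¹) * u⁻¹ := by group
  rw [h]
  exact mul_mem (conj_mem_N hu g) (inv_mem hu)

lemma commEl_mem_N_left (x y : G) : ⁅x, y⁆ ∈ N x := comm_mem_N_left (mem_N_self x) y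

lemma commEl_mem_N_right (x y : G) : ⁅y, x⁆ ∈ N x := comm_mem_N_right (mem_N_self x) y

section Engel

variable (hC : ∀ x g : G, Commute x (g * x * g⁻¹))

include hC

lemma N_comm {x : G} {u v : G} (hu : u ∈ N x) (hv : v ∈ N x) : Commute u v := by
  have conj_comm : ∀ g h : G, Commute (g * x * g⁻¹) (h * x * h⁻¹) := by
    intro g h
    have h1 : Commute x ((g⁻¹ * h) * x * (g⁻¹ * h)⁻¹) := hC x (g⁻¹ * h)
    have h2 := h1.map (MulAut.conj g).toMonoidHom
    simpa [mul_assoc] using h2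
  have step1 : N x ≤ Subgroup.centralizer (Group.conjugatesOfSet {x}) := by
    apply (Subgroup.closure_le _).mpr
    intro c hc
    simp only [SetLike.mem_coe]
    rw [Subgroup.mem_centralizer_iff]
    intro h hh
    rw [Group.mem_conjugatesOfSet_iff] at hc hh
    obtain ⟨a, ha, hconj⟩ := hc
    rw [Set.mem_singleton_iff] at ha; subst ha
    obtain ⟨g, rfl⟩ := isConj_iff.mp hconj
    obtain ⟨a, ha, hconj'⟩ := hh
    rw [Set.mem_singleton_iff] at ha; subst ha
    obtain ⟨k, rfl⟩ := isConj_iff.mp hconj'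
    exact (conj_comm k g).eq
  have step2 : N x ≤ Subgroup.centralizer (N x : Set G) := by
    apply (Subgroup.closure_le _).mpr
    intro c hc
    simp only [SetLike.mem_coe]
    rw [Subgroup.mem_centralizer_iff]
    intro h hh
    have h2 := step1 hh
    rw [Subgroup.mem_centralizer_iff] at h2
    exact (h2 c hc).symm
  have h3 := step2 hu
  rw [Subgroup.mem_centralizer_iff] at h3
  exact (h3 v hv).symm

lemma N_conj_eq {x u v : G} (hu : u ∈ N x) (hv : v ∈ N x) : u * v * u⁻¹ = v := by
  have h := (N_comm hC hu hv).eq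
  calc u * v * u⁻¹ = (u * v) * u⁻¹ := by group
  _ = (v * u) * u⁻¹ := by rw [h]
  _ = v := by group

lemma engel (x y : G) : ⁅⁅x, y⁆, y⁆ = 1 := by
  rw [commutatorElement_eq_one_iff_commute]
  exact N_comm hC (commEl_mem_N_right y x) (mem_N_self y)

/-- antisymmetry in the last two arguments -/
lemma antisym23 (x y z : G) : ⁅⁅x, y⁆, z⁆ = ⁅⁅x, z⁆, y⁆⁻¹ := by
  have h0 : ⁅⁅x, y * z⁆, y * z⁆ = 1 := engel hC x (y * z)
  have hexp : ⁅x, y * z⁆ = ⁅x, y⁆ * (y * ⁅x, z⁆ * y⁻¹) := by group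
  have hsN : ⁅x, y⁆ ∈ N x := commEl_mem_N_left x y
  have htN : y * ⁅x, z⁆ * y⁻¹ ∈ N x := conj_mem_N (commEl_mem_N_left x z) y
  have h1 : ⁅⁅x, y⁆ * (y * ⁅x, z⁆ * y⁻¹), y * z⁆
      = ⁅x, y⁆ * ⁅y * ⁅x, z⁆ * y⁻¹, y * z⁆ * ⁅x, y⁆⁻¹ * ⁅⁅x, y⁆, y * z⁆ := by group
  have h2 : ⁅y * ⁅x, z⁆ * y⁻¹, y * z⁆ ∈ N x := comm_mem_N_left htN (y * z)
  have h3 : ⁅x, y⁆ * ⁅y * ⁅x, z⁆ * y⁻¹, y * z⁆ * ⁅x, y⁆⁻¹ = ⁅y * ⁅x, z⁆ * y⁻¹, y * z⁆ :=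
    N_conj_eq hC hsN h2
  have h4 : ⁅⁅x, y⁆, y * z⁆ = ⁅⁅x, y⁆, y⁆ * (y * ⁅⁅x, y⁆, z⁆ * y⁻¹) := by group
  have h5 : ⁅⁅x, y⁆, y⁆ = 1 := engel hC x y
  have h6 : ⁅y * ⁅x, z⁆ * y⁻¹, y * z⁆ = y * ⁅⁅x, z⁆, z * y⁆ * y⁻¹ := by group
  have h7 : ⁅⁅x, z⁆, z * y⁆ = ⁅⁅x, z⁆, z⁆ * (z * ⁅⁅x, z⁆, y⁆ * z⁻¹) := by group
  have h8 : ⁅⁅x, z⁆, z⁆ = 1 := engel hC x z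
  have h9 : z * ⁅⁅x, z⁆, y⁆ * z⁻¹ = ⁅⁅x, z⁆, y⁆ :=
    N_conj_eq (x := z) hC (mem_N_self z) (comm_mem_N_left (commEl_mem_N_right z x) y)
  have key : (1 : G) = y * (⁅⁅x, z⁆, y⁆ * ⁅⁅x, y⁆, z⁆) * y⁻¹ := by
    rw [← h0]
    rw [hexp, h1, h3, h6, h7, h8, h4, h5, h9]
    group
  have key2 : ⁅⁅x, z⁆, y⁆ * ⁅⁅x, y⁆, z⁆ = 1 := by
    calc ⁅⁅x, z⁆, y⁆ * ⁅⁅x, y⁆, z⁆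
        = y⁻¹ * (y * (⁅⁅x, z⁆, y⁆ * ⁅⁅x, y⁆, z⁆) * y⁻¹) * y := by group
      _ = y⁻¹ * 1 * y := by rw [← key]
      _ = 1 := by group
  rw [eq_inv_iff_mul_eq_one]
  calc ⁅⁅x,y⁆,z⁆ * ⁅⁅x,z⁆,y⁆
      = (⁅⁅x,z⁆,y⁆)⁻¹ * (⁅⁅x, z⁆, y⁆ * ⁅⁅x, y⁆, z⁆) * ⁅⁅x,z⁆,y⁆ := by group
    _ = 1 := by rw [key2]; group

end Engel
end EGroupAux

namespace EGroupAux
variable {G : Type*} [Group G]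
section Engel2
variable (hC : ∀ x g : G, Commute x (g * x * g⁻¹))
include hC

lemma antisym12 (x y z : G) : ⁅⁅y, x⁆, z⁆ = ⁅⁅x, y⁆, z⁆⁻¹ := by
  have h1 : ⁅⁅y, x⁆, z⁆ = ⁅⁅x, y⁆⁻¹, z⁆ := by rw [commutatorElement_inv]
  have h2 : ⁅⁅x, y⁆⁻¹, z⁆ = ⁅x, y⁆⁻¹ * ⁅⁅x, y⁆, z⁆⁻¹ * ⁅x, y⁆ := by group
  have h3 : ⁅x, y⁆⁻¹ * ⁅⁅x, y⁆, z⁆⁻¹ * (⁅x, y⁆⁻¹)⁻¹ = ⁅⁅x, y⁆, z⁆⁻¹ :=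
    N_conj_eq hC (inv_mem (commEl_mem_N_left x y))
      (inv_mem (comm_mem_N_left (commEl_mem_N_left x y) z))
  rw [h1, h2]
  rw [inv_inv] at h3
  exact h3

lemma engel2 (x y : G) : ⁅⁅x, y⁆, x⁆ = 1 := by
  rw [antisym12 hC y x x, engel hC y x, inv_one]

lemma cyc (x y z : G) : ⁅⁅x, y⁆, z⁆ = ⁅⁅y, z⁆, x⁆ := by
  rw [antisym23 hC y z x, antisym12 hC x y z, inv_inv]

/-- simplified Hall-Witt factor -/
lemma hw_factor (x y z : G) : y⁻¹ * ⁅⁅y, x⁻¹⁆, z⁻¹⁆ * y = ⁅⁅x, y⁆, z⁆⁻¹ := by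
  have h1 : ⁅y, x⁻¹⁆ = x⁻¹ * ⁅x, y⁆ * x := by group
  have h2 : x⁻¹ * ⁅x, y⁆ * (x⁻¹)⁻¹ = ⁅x, y⁆ :=
    N_conj_eq hC (inv_mem (mem_N_self x)) (commEl_mem_N_left x y)
  rw [inv_inv] at h2
  have h3 : ⁅⁅x, y⁆, z⁻¹⁆ = z⁻¹ * ⁅⁅x, y⁆, z⁆⁻¹ * z := by group
  have h4 : z⁻¹ * ⁅⁅x, y⁆, z⁆⁻¹ * (z⁻¹)⁻¹ = ⁅⁅x, y⁆, z⁆⁻¹ :=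
    N_conj_eq hC (inv_mem (mem_N_self z))
      (inv_mem (comm_mem_N_right (mem_N_self z) ⁅x, y⁆))
  rw [inv_inv] at h4
  have h5 : y⁻¹ * ⁅⁅x, y⁆, z⁆⁻¹ * (y⁻¹)⁻¹ = ⁅⁅x, y⁆, z⁆⁻¹ :=
    N_conj_eq hC (inv_mem (mem_N_self y))
      (inv_mem (comm_mem_N_left (commEl_mem_N_right y x) z))
  rw [inv_inv] at h5
  rw [h1, h2, h3, h4, h5]

lemma cube (x y z : G) : ⁅⁅x, y⁆, z⁆ ^ 3 = 1 := by
  have hw : (y⁻¹ * ⁅⁅y, x⁻¹⁆, z⁻¹⁆ * y) * (z⁻¹ * ⁅⁅z, y⁻¹⁆, x⁻¹⁆ * z)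
      * (x⁻¹ * ⁅⁅x, z⁻¹⁆, y⁻¹⁆ * x) = 1 := by group
  rw [hw_factor hC x y z, hw_factor hC y z x, hw_factor hC z x y] at hw
  rw [← cyc hC x y z, cyc hC z x y] at hw
  -- now hw : ⁅⁅x,y⁆,z⁆⁻¹ * ⁅⁅x,y⁆,z⁆⁻¹ * ⁅⁅x,y⁆,z⁆⁻¹ = 1
  have habs : ∀ v : G, v⁻¹ * v⁻¹ * v⁻¹ = 1 → v ^ 3 = 1 := by
    intro v hv
    have h' : v ^ 3 = (v⁻¹ * v⁻¹ * v⁻¹)⁻¹ := by group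
    rw [h', hv, inv_one]
  exact habs _ hw

/-- commutators of commutators vanish: the derived subgroup is abelian on generators -/
lemma gpab (x t z y : G) : ⁅⁅x, t⁆, ⁅z, y⁆⁆ = 1 := by
  suffices h : ∀ x t z y : G, ⁅⁅x, t⁆, ⁅z⁻¹, y⁆⁆ = 1 by
    have := h x t z⁻¹ y
    rwa [inv_inv] at this
  clear x t z y
  intro x t z y
  have path1 : ⁅⁅x, y⁆, z * t⁆ = ⁅⁅x, y⁆, z⁆ * (z * ⁅⁅x, y⁆, t⁆ * z⁻¹) := by group
  have path2 : ⁅⁅x, y⁆, z * t⁆ = ⁅⁅x, z * t⁆, y⁆⁻¹ := antisym23 hC x y (z * t)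
  have e1 : ⁅x, z * t⁆ = ⁅x, z⁆ * (z * ⁅x, t⁆ * z⁻¹) := by group
  have e2 : ⁅⁅x, z⁆ * (z * ⁅x, t⁆ * z⁻¹), y⁆
      = ⁅x, z⁆ * ⁅z * ⁅x, t⁆ * z⁻¹, y⁆ * ⁅x, z⁆⁻¹ * ⁅⁅x, z⁆, y⁆ := by group
  have e3 : ⁅x, z⁆ * ⁅z * ⁅x, t⁆ * z⁻¹, y⁆ * ⁅x, z⁆⁻¹ = ⁅z * ⁅x, t⁆ * z⁻¹, y⁆ :=
    N_conj_eq hC (commEl_mem_N_left x z)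
      (comm_mem_N_left (conj_mem_N (commEl_mem_N_left x t) z) y)
  have e4 : ⁅z * ⁅x, t⁆ * z⁻¹, y⁆ = z * ⁅⁅x, t⁆, z⁻¹ * y * z⁆ * z⁻¹ := by group
  have e5 : z⁻¹ * y * z = ⁅z⁻¹, y⁆ * y := by group
  have e6 : ⁅⁅x, t⁆, ⁅z⁻¹, y⁆ * y⁆
      = ⁅⁅x, t⁆, ⁅z⁻¹, y⁆⁆ * (⁅z⁻¹, y⁆ * ⁅⁅x, t⁆, y⁆ * ⁅z⁻¹, y⁆⁻¹) := by group
  have e7 : ⁅z⁻¹, y⁆ * ⁅⁅x, t⁆, y⁆ * ⁅z⁻¹, y⁆⁻¹ = ⁅⁅x, t⁆, y⁆ :=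
    N_conj_eq hC (comm_mem_N_right (mem_N_self y) z⁻¹)
      (comm_mem_N_right (mem_N_self y) ⁅x, t⁆)
  have e8 : ⁅⁅x, t⁆, y⁆ = ⁅⁅x, y⁆, t⁆⁻¹ := antisym23 hC x t y
  have e9 : ⁅⁅x, z⁆, y⁆ = ⁅⁅x, y⁆, z⁆⁻¹ := antisym23 hC x z y
  have hA : ⁅⁅x, z * t⁆, y⁆
      = z * (⁅⁅x, t⁆, ⁅z⁻¹, y⁆⁆ * ⁅⁅x, y⁆, t⁆⁻¹) * z⁻¹ * ⁅⁅x, y⁆, z⁆⁻¹ := by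
    calc ⁅⁅x, z * t⁆, y⁆
        = ⁅⁅x, z⁆ * (z * ⁅x, t⁆ * z⁻¹), y⁆ := by rw [e1]
      _ = ⁅x, z⁆ * ⁅z * ⁅x, t⁆ * z⁻¹, y⁆ * ⁅x, z⁆⁻¹ * ⁅⁅x, z⁆, y⁆ := e2
      _ = ⁅z * ⁅x, t⁆ * z⁻¹, y⁆ * ⁅⁅x, z⁆, y⁆ := by rw [e3]
      _ = z * ⁅⁅x, t⁆, z⁻¹ * y * z⁆ * z⁻¹ * ⁅⁅x, z⁆, y⁆ := by rw [e4]
      _ = z * ⁅⁅x, t⁆, ⁅z⁻¹, y⁆ * y⁆ * z⁻¹ * ⁅⁅x, z⁆, y⁆ := by rw [e5]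
      _ = z * (⁅⁅x, t⁆, ⁅z⁻¹, y⁆⁆ * (⁅z⁻¹, y⁆ * ⁅⁅x, t⁆, y⁆ * ⁅z⁻¹, y⁆⁻¹)) * z⁻¹
            * ⁅⁅x, z⁆, y⁆ := by rw [e6]
      _ = z * (⁅⁅x, t⁆, ⁅z⁻¹, y⁆⁆ * ⁅⁅x, t⁆, y⁆) * z⁻¹ * ⁅⁅x, z⁆, y⁆ := by rw [e7]
      _ = z * (⁅⁅x, t⁆, ⁅z⁻¹, y⁆⁆ * ⁅⁅x, y⁆, t⁆⁻¹) * z⁻¹ * ⁅⁅x, y⁆, z⁆⁻¹ := by rw [e8, e9]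
  have key : ⁅⁅x, y⁆, z⁆ * (z * ⁅⁅x, y⁆, t⁆ * z⁻¹)
      = (z * (⁅⁅x, t⁆, ⁅z⁻¹, y⁆⁆ * ⁅⁅x, y⁆, t⁆⁻¹) * z⁻¹ * ⁅⁅x, y⁆, z⁆⁻¹)⁻¹ := by
    rw [← path1, path2, hA]
  have h3 : z * ⁅⁅x, y⁆, t⁆ * z⁻¹
      = z * ⁅⁅x, y⁆, t⁆ * ⁅⁅x, t⁆, ⁅z⁻¹, y⁆⁆⁻¹ * z⁻¹ := by
    apply mul_left_cancel (a := ⁅⁅x, y⁆, z⁆)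
    rw [key]
    group
  have h4 : ⁅⁅x, t⁆, ⁅z⁻¹, y⁆⁆⁻¹ = 1 := by
    calc ⁅⁅x, t⁆, ⁅z⁻¹, y⁆⁆⁻¹
        = ⁅⁅x, y⁆, t⁆⁻¹ * z⁻¹ * (z * ⁅⁅x, y⁆, t⁆ * ⁅⁅x, t⁆, ⁅z⁻¹, y⁆⁆⁻¹ * z⁻¹) * z := by
          group
      _ = ⁅⁅x, y⁆, t⁆⁻¹ * z⁻¹ * (z * ⁅⁅x, y⁆, t⁆ * z⁻¹) * z := by rw [← h3]
      _ = 1 := by group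
  rwa [inv_eq_one] at h4

lemma g3central (x y z g : G) : ⁅⁅⁅x, y⁆, z⁆, g⁆ = 1 := by
  rw [cyc hC ⁅x, y⁆ z g]
  exact gpab hC z g x y

lemma g3commute (x y z h : G) : Commute ⁅⁅x, y⁆, z⁆ h :=
  commutatorElement_eq_one_iff_commute.mp (g3central hC x y z h)

end Engel2
end EGroupAux

namespace EGroupAux
variable {G : Type*} [Group G]
open Subgroup

-- free expansions used repeatedly
lemma exp_mul_left (u v g : G) : ⁅u * v, g⁆ = u * ⁅v, g⁆ * u⁻¹ * ⁅u, g⁆ := by group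
lemma exp_mul_right (g u v : G) : ⁅g, u * v⁆ = ⁅g, u⁆ * (u * ⁅g, v⁆ * u⁻¹) := by group
lemma exp_inv_left (u g : G) : ⁅u⁻¹, g⁆ = u⁻¹ * ⁅g, u⁆ * u := by group
lemma exp_inv_right (g u : G) : ⁅g, u⁻¹⁆ = u⁻¹ * ⁅u, g⁆ * u := by group

lemma conj_eq_of_commute {u v : G} (h : Commute v u) : u * v * u⁻¹ = v := by
  calc u * v * u⁻¹ = (u * v) * u⁻¹ := by group
  _ = (v * u) * u⁻¹ := by rw [h.symm.eq]
  _ = v := by group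

section Engel3
variable (hC : ∀ x g : G, Commute x (g * x * g⁻¹))
include hC

/-- every `γ₃`-type element commutes with everything (class ≤ 3), for general
first argument in the derived subgroup. -/
lemma stepA : ∀ u ∈ commutator G, ∀ g h : G, Commute ⁅u, g⁆ h := by
  intro u hu
  rw [commutator_eq_closure] at hu
  induction hu using Subgroup.closure_induction with
  | mem x hx =>
    obtain ⟨x₁, x₂, rfl⟩ := hx
    exact fun g h => g3commute hC x₁ x₂ g h
  | one => intro g h; rw [commutatorElement_one_left]; exact Commute.one_left h
  | mul x y hx hy ihx ihy =>
    intro g h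
    rw [exp_mul_left x y g, conj_eq_of_commute ((ihy g x))]
    exact ((ihy g h).mul_left (ihx g h))
  | inv x hx ihx =>
    intro g h
    have h1 : ⁅x⁻¹, g⁆ = x⁻¹ * ⁅x, g⁆⁻¹ * (x⁻¹)⁻¹ := by group
    rw [h1, conj_eq_of_commute ((ihx g x⁻¹).inv_left)]
    exact (ihx g h).inv_left

omit hC in
lemma mem_commutator (x y : G) : ⁅x, y⁆ ∈ commutator G :=
  commutator_mem_commutator (mem_top x) (mem_top y)

/-- power rules -/
lemma pow_comm_left (x y : G) (n : ℕ) : ⁅x ^ n, y⁆ = ⁅x, y⁆ ^ n := by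
  induction n with
  | zero => simp [commutatorElement_one_left]
  | succ n ih =>
    have hcom : Commute (⁅x, y⁆ ^ n) x :=
      (commutatorElement_eq_one_iff_commute.mp (engel2 hC x y)).pow_left n
    calc ⁅x ^ (n+1), y⁆ = ⁅x * x ^ n, y⁆ := by rw [pow_succ']
    _ = x * ⁅x ^ n, y⁆ * x⁻¹ * ⁅x, y⁆ := exp_mul_left _ _ _
    _ = x * ⁅x, y⁆ ^ n * x⁻¹ * ⁅x, y⁆ := by rw [ih]
    _ = ⁅x, y⁆ ^ n * ⁅x, y⁆ := by rw [conj_eq_of_commute hcom]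
    _ = ⁅x, y⁆ ^ (n+1) := by rw [pow_succ]

omit hC in
lemma pow_comm_right (x y : G) (hcom : Commute ⁅x, y⁆ y) (n : ℕ) :
    ⁅x, y ^ n⁆ = ⁅x, y⁆ ^ n := by
  induction n with
  | zero => simp [commutatorElement_one_right]
  | succ n ih =>
    have hcom' : Commute (⁅x, y⁆ ^ n) y := hcom.pow_left n
    calc ⁅x, y ^ (n+1)⁆ = ⁅x, y * y ^ n⁆ := by rw [pow_succ']
    _ = ⁅x, y⁆ * (y * ⁅x, y ^ n⁆ * y⁻¹) := exp_mul_right _ _ _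
    _ = ⁅x, y⁆ * (y * ⁅x, y⁆ ^ n * y⁻¹) := by rw [ih]
    _ = ⁅x, y⁆ * ⁅x, y⁆ ^ n := by rw [conj_eq_of_commute hcom']
    _ = ⁅x, y⁆ ^ (n+1) := by rw [pow_succ']

/-- conjugating the inner commutator does not change a triple commutator -/
lemma conj_comm_comm (x y g k : G) : ⁅g * ⁅x, y⁆ * g⁻¹, k⁆ = ⁅⁅x, y⁆, k⁆ := by
  have h1 : ⁅g * ⁅x, y⁆ * g⁻¹, k⁆ = g * ⁅⁅x, y⁆, g⁻¹ * k * g⁆ * g⁻¹ := by group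
  have h2 : g⁻¹ * k * g = ⁅g⁻¹, k⁆ * k := by group
  have h3 : ⁅⁅x, y⁆, ⁅g⁻¹, k⁆ * k⁆
      = ⁅⁅x, y⁆, ⁅g⁻¹, k⁆⁆ * (⁅g⁻¹, k⁆ * ⁅⁅x, y⁆, k⁆ * ⁅g⁻¹, k⁆⁻¹) := exp_mul_right _ _ _
  rw [h1, h2, h3, gpab hC x y g⁻¹ k, one_mul, conj_eq_of_commute (g3commute hC x y k _),
    conj_eq_of_commute (g3commute hC x y k g)]

-- trilinearity
lemma tri_mul_left (x₁ x₂ y k : G) :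
    ⁅⁅x₁ * x₂, y⁆, k⁆ = ⁅⁅x₁, y⁆, k⁆ * ⁅⁅x₂, y⁆, k⁆ := by
  have h1 : ⁅x₁ * x₂, y⁆ = (x₁ * ⁅x₂, y⁆ * x₁⁻¹) * ⁅x₁, y⁆ := by group
  rw [h1, exp_mul_left, conj_eq_of_commute (g3commute hC x₁ y k _),
    conj_comm_comm hC x₂ y x₁ k]

lemma tri_inv_left (x y k : G) : ⁅⁅x⁻¹, y⁆, k⁆ = ⁅⁅x, y⁆, k⁆⁻¹ := by
  have h1 : ⁅x⁻¹, y⁆ = x⁻¹ * ⁅y, x⁆ * x := by group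
  have h2 : x⁻¹ * ⁅y, x⁆ * x = x⁻¹ * ⁅y, x⁆ * (x⁻¹)⁻¹ := by group
  rw [h1, h2, conj_comm_comm hC y x x⁻¹ k, antisym12 hC x y k]

lemma tri_mul_mid (x y₁ y₂ k : G) :
    ⁅⁅x, y₁ * y₂⁆, k⁆ = ⁅⁅x, y₁⁆, k⁆ * ⁅⁅x, y₂⁆, k⁆ := by
  have h1 : ⁅x, y₁ * y₂⁆ = ⁅x, y₁⁆ * (y₁ * ⁅x, y₂⁆ * y₁⁻¹) := exp_mul_right _ _ _
  rw [h1, exp_mul_left, conj_comm_comm hC x y₂ y₁ k,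
    conj_eq_of_commute (g3commute hC x y₂ k _)]
  exact (g3commute hC x y₂ k ⁅⁅x, y₁⁆, k⁆).eq

lemma tri_inv_mid (x y k : G) : ⁅⁅x, y⁻¹⁆, k⁆ = ⁅⁅x, y⁆, k⁆⁻¹ := by
  have h1 : ⁅x, y⁻¹⁆ = y⁻¹ * ⁅y, x⁆ * (y⁻¹)⁻¹ := by group
  rw [h1, conj_comm_comm hC y x y⁻¹ k, antisym12 hC x y k]

lemma tri_mul_right (x y k₁ k₂ : G) :
    ⁅⁅x, y⁆, k₁ * k₂⁆ = ⁅⁅x, y⁆, k₁⁆ * ⁅⁅x, y⁆, k₂⁆ := by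
  rw [exp_mul_right, conj_eq_of_commute (g3commute hC x y k₂ k₁)]

lemma tri_inv_right (x y k : G) : ⁅⁅x, y⁆, k⁻¹⁆ = ⁅⁅x, y⁆, k⁆⁻¹ := by
  have h1 : ⁅⁅x, y⁆, k⁻¹⁆ = k⁻¹ * ⁅⁅x, y⁆, k⁆⁻¹ * (k⁻¹)⁻¹ := by group
  rw [h1, conj_eq_of_commute (g3commute hC x y k k⁻¹).inv_left]

end Engel3

end EGroupAux
namespace EGroupAux
variable {G : Type*} [Group G]
open Subgroup

section Gen
variable (hC : ∀ x g : G, Commute x (g * x * g⁻¹))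
include hC

lemma m_cyc1 (x y z : G) : ⁅⁅y, z⁆, x⁆ ∈ zpowers ⁅⁅x, y⁆, z⁆ := by
  rw [← cyc hC x y z]; exact mem_zpowers _

lemma m_cyc2 (x y z : G) : ⁅⁅z, x⁆, y⁆ ∈ zpowers ⁅⁅x, y⁆, z⁆ := by
  rw [cyc hC z x y]; exact mem_zpowers _

lemma m_sw12 (x y z : G) : ⁅⁅y, x⁆, z⁆ ∈ zpowers ⁅⁅x, y⁆, z⁆ := by
  rw [antisym12 hC x y z]; exact inv_mem (mem_zpowers _)

lemma m_sw23 (x y z : G) : ⁅⁅x, z⁆, y⁆ ∈ zpowers ⁅⁅x, y⁆, z⁆ := by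
  rw [antisym23 hC x z y]; exact inv_mem (mem_zpowers _)

lemma m_sw13 (x y z : G) : ⁅⁅z, y⁆, x⁆ ∈ zpowers ⁅⁅x, y⁆, z⁆ := by
  rw [cyc hC z y x, antisym12 hC x y z]; exact inv_mem (mem_zpowers _)

lemma base27 (a b c : G) :
    ∀ x y z : G, x ∈ ({a, b, c} : Set G) → y ∈ ({a, b, c} : Set G) →
      z ∈ ({a, b, c} : Set G) → ⁅⁅x, y⁆, z⁆ ∈ zpowers ⁅⁅a, b⁆, c⁆ := by
  intro x y z hx hy hz
  simp only [Set.mem_insert_iff, Set.mem_singleton_iff] at hx hy hz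
  rcases hx with rfl | rfl | rfl <;> rcases hy with rfl | rfl | rfl <;>
    rcases hz with rfl | rfl | rfl <;>
    first
    | exact mem_zpowers _
    | exact m_cyc1 hC _ _ _
    | exact m_cyc2 hC _ _ _
    | exact m_sw12 hC _ _ _
    | exact m_sw23 hC _ _ _
    | exact m_sw13 hC _ _ _
    | (rw [commutatorElement_self, commutatorElement_one_left]; exact one_mem _)
    | (rw [engel hC]; exact one_mem _)
    | (rw [engel2 hC]; exact one_mem _)

variable {a b c : G} (hc : Subgroup.closure ({a, b, c} : Set G) = ⊤)
include hc

omit hC in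
lemma mem_closure_gens (x : G) : x ∈ Subgroup.closure ({a, b, c} : Set G) := by
  rw [hc]; exact mem_top x

/-- all triple commutators lie in the cyclic subgroup generated by w -/
lemma tri_mem (x y z : G) : ⁅⁅x, y⁆, z⁆ ∈ zpowers ⁅⁅a, b⁆, c⁆ := by
  -- induct on x, then y, then z
  have H1 : ∀ x y z : G, x ∈ ({a, b, c} : Set G) → y ∈ ({a, b, c} : Set G) →
      ⁅⁅x, y⁆, z⁆ ∈ zpowers ⁅⁅a, b⁆, c⁆ := by
    intro x y z hx hy
    induction mem_closure_gens hc z using Subgroup.closure_induction with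
    | mem k hk => exact base27 hC a b c x y k hx hy hk
    | one => rw [commutatorElement_one_right]; exact one_mem _
    | mul k₁ k₂ h₁ h₂ ih₁ ih₂ => rw [tri_mul_right hC]; exact mul_mem ih₁ ih₂
    | inv k hk ih => rw [tri_inv_right hC]; exact inv_mem ih
  have H2 : ∀ x y z : G, x ∈ ({a, b, c} : Set G) →
      ⁅⁅x, y⁆, z⁆ ∈ zpowers ⁅⁅a, b⁆, c⁆ := by
    intro x y z hx
    induction mem_closure_gens hc y using Subgroup.closure_induction with
    | mem k hk => exact H1 x k z hx hk
    | one => rw [commutatorElement_one_right, commutatorElement_one_left]; exact one_mem _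
    | mul k₁ k₂ h₁ h₂ ih₁ ih₂ => rw [tri_mul_mid hC]; exact mul_mem ih₁ ih₂
    | inv k hk ih => rw [tri_inv_mid hC]; exact inv_mem ih
  induction mem_closure_gens hc x using Subgroup.closure_induction with
  | mem k hk => exact H2 k y z hk
  | one => rw [commutatorElement_one_left, commutatorElement_one_left]; exact one_mem _
  | mul k₁ k₂ h₁ h₂ ih₁ ih₂ => rw [tri_mul_left hC]; exact mul_mem ih₁ ih₂
  | inv k hk ih => rw [tri_inv_left hC]; exact inv_mem ih

/-- `γ₃ ⊆ ⟨w⟩` for general elements of the derived subgroup. -/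
lemma stepB : ∀ u ∈ commutator G, ∀ g : G, ⁅u, g⁆ ∈ zpowers ⁅⁅a, b⁆, c⁆ := by
  intro u hu
  rw [commutator_eq_closure] at hu
  induction hu using Subgroup.closure_induction with
  | mem x hx =>
    obtain ⟨x₁, x₂, rfl⟩ := hx
    exact fun g => tri_mem hC hc x₁ x₂ g
  | one => intro g; rw [commutatorElement_one_left]; exact one_mem _
  | mul x y hx hy ihx ihy =>
    intro g
    have hyc : y ∈ commutator G := by rwa [commutator_eq_closure]
    rw [exp_mul_left x y g, conj_eq_of_commute (stepA hC y hyc g x)]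
    exact mul_mem (ihy g) (ihx g)
  | inv x hx ihx =>
    intro g
    have hxc : x ∈ commutator G := by rwa [commutator_eq_closure]
    have h1 : ⁅x⁻¹, g⁆ = x⁻¹ * ⁅x, g⁆⁻¹ * (x⁻¹)⁻¹ := by group
    rw [h1, conj_eq_of_commute ((stepA hC x hxc g x⁻¹).inv_left)]
    exact inv_mem (ihx g)

end Gen
end EGroupAux

namespace EGroupAux
open Subgroup
open Subgroup

variable {G : Type*} [Group G] [Finite G]


lemma dfs_nsmul_apply {ι : Type} {β : ι → Type*} [∀ j, AddCommMonoid (β j)]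
    (n : ℕ) (f : Π₀ j, β j) (i : ι) : (n • f) i = n • (f i) := by
  have h := (DFinsupp.evalAddMonoidHom (β := β) i).map_nsmul n f
  have h1 : DFinsupp.evalAddMonoidHom (β := β) i (n • f) = (n • f) i := rfl
  have h2 : DFinsupp.evalAddMonoidHom (β := β) i f = f i := rfl
  rw [h1, h2] at h
  exact h

/-- Given a character with value coprime to 3 at `p`, and `z` of order dividing `e`
in the derived subgroup, every element commutes with the endomorphism value, whence
`⁅p, z⁆ = 1`. -/
lemma pivot (hE : ∀ (φ : G →* G) (x : G), x * φ x = φ x * x) {p z : G}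
    (hcent : Commute ⁅p, z⁆ z)
    (hcube : ⁅p, z⁆ ^ 3 = 1)
    (hze : z ^ (Monoid.exponent (Abelianization G)) = 1)
    (h3 : 3 ∣ Monoid.exponent (Abelianization G))
    (hp : (Abelianization.of p) ^ (Monoid.exponent (Abelianization G) / 3) ≠ 1) :
    ⁅p, z⁆ = 1 := by
  classical
  set e := Monoid.exponent (Abelianization G) with he
  obtain ⟨ι, fι, pr, hpr, ex, ⟨ψ⟩⟩ :=
    AddCommGroup.equiv_directSum_zmod_of_finite (Additive (Abelianization G))
  set pA : Additive (Abelianization G) := Additive.ofMul (Abelianization.of p) with hpA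
  have hsm : (e / 3) • ψ pA ≠ 0 := by
    intro h0
    apply hp
    have h1 : ψ ((e / 3) • pA) = 0 := by rw [map_nsmul]; exact h0
    have h2 : (e / 3) • pA = 0 := by
      apply ψ.injective
      rw [h1, map_zero]
    have h3' : Additive.ofMul ((Abelianization.of p) ^ (e / 3)) = 0 := by
      rw [ofMul_pow]; exact h2
    exact ofMul_eq_zero.mp h3'
  obtain ⟨i, hi⟩ : ∃ i, ((e / 3) • ψ pA) i ≠ 0 := by
    by_contra hcon
    push_neg at hcon
    exact hsm (DFinsupp.ext hcon)
  set N : ℕ := pr i ^ ex i with hN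
  set v : ZMod N := (ψ pA) i with hv
  have hvne : (e / 3) • v ≠ 0 := by
    rw [hv, ← dfs_nsmul_apply]
    exact hi
  have hNdvd : N ∣ e := by
    set g₀ : Additive (Abelianization G) := ψ.symm (DirectSum.of _ i (1 : ZMod N)) with hg
    have h1 : e • g₀ = 0 := by
      have h2 : (Additive.toMul g₀) ^ e = 1 := Monoid.pow_exponent_eq_one _
      have h3' : Additive.ofMul ((Additive.toMul g₀) ^ e) = 0 := by rw [h2]; rfl
      rw [ofMul_pow] at h3'
      exact h3'
    have h2 : e • (DirectSum.of (fun j => ZMod (pr j ^ ex j)) i (1 : ZMod N)) = 0 := by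
      have := congrArg ψ h1
      rwa [map_nsmul, ψ.apply_symm_apply, map_zero] at this
    have h3' : e • (1 : ZMod N) = 0 := by
      have h5 := congrArg (fun f => f i) h2
      simp only [DFinsupp.zero_apply] at h5
      rw [dfs_nsmul_apply] at h5
      rwa [DirectSum.of_eq_same] at h5
    have h4 : ((e : ℕ) : ZMod N) = 0 := by simpa [nsmul_eq_mul] using h3'
    exact (ZMod.natCast_eq_zero_iff e N).mp h4
  have hcontra : ¬ (N ∣ e / 3) := by
    intro hdvd
    apply hvne
    have : ((e / 3 : ℕ) : ZMod N) = 0 := (ZMod.natCast_eq_zero_iff _ N).mpr hdvd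
    rw [nsmul_eq_mul, this, zero_mul]
  have hpi3 : pr i = 3 := by
    by_contra hne
    apply hcontra
    have hcop : Nat.Coprime N 3 :=
      Nat.Coprime.pow_left _ ((Nat.coprime_primes (hpr i) Nat.prime_three).mpr hne)
    have : N ∣ 3 * (e / 3) := by rw [Nat.mul_div_cancel' h3]; exact hNdvd
    exact hcop.dvd_of_dvd_mul_left this
  have hex0 : ex i ≠ 0 := by
    intro h0
    apply hvne
    have : Subsingleton (ZMod N) := by rw [hN, hpi3, h0, pow_zero]; exact CharP.CharOne.subsingleton
    exact Subsingleton.elim _ _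
  haveI hNz : NeZero N := ⟨by rw [hN, hpi3]; exact pow_ne_zero _ (by norm_num)⟩
  have he0 : e ≠ 0 := Monoid.exponent_ne_zero_of_finite
  -- q := e / N is coprime to 3
  have hq3 : ¬ 3 ∣ (e / N) := by
    intro hdvd
    apply hcontra
    obtain ⟨m, hm⟩ := hdvd
    have he' : e = N * (e / N) := (Nat.mul_div_cancel' hNdvd).symm
    have he'' : e = 3 * (N * m) := by rw [he', hm]; ring
    have : e / 3 = N * m := by rw [he'']; exact Nat.mul_div_cancel_left _ (by norm_num)
    exact ⟨m, this⟩
  have hval3 : ¬ 3 ∣ v.val := by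
    intro hdvd
    apply hvne
    obtain ⟨u, hu⟩ := hdvd
    have h1 : (e / 3) • v = ((e / 3 * v.val : ℕ) : ZMod N) := by
      rw [nsmul_eq_mul, Nat.cast_mul, ZMod.natCast_zmod_val]
    have h2 : N ∣ e / 3 * v.val := by
      have : e / 3 * v.val = e * u := by
        rw [hu, ← mul_assoc, Nat.div_mul_cancel h3]
      rw [this]
      exact Dvd.dvd.mul_right hNdvd u
    rw [h1, (ZMod.natCast_eq_zero_iff _ N).mpr h2]
  set K : ℕ := v.val * (e / N) with hK
  have hK3 : ¬ 3 ∣ K := by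
    intro hdvd
    rcases (Nat.Prime.dvd_mul Nat.prime_three).mp hdvd with h | h
    · exact hval3 h
    · exact hq3 h
  -- construct the endomorphism
  have hf0 : ((N : ℤ) : ZMod e) * ((e / N : ℕ) : ZMod e) = 0 := by
    push_cast
    rw [← Nat.cast_mul, Nat.mul_div_cancel' hNdvd, ZMod.natCast_self]
  let f0 : ℤ →+ ZMod e := AddMonoidHom.mk' (fun k => (k : ZMod e) * ((e / N : ℕ) : ZMod e))
    (by intro x y; push_cast; ring)
  let ι2 : ZMod N →+ ZMod e := ZMod.lift N ⟨f0, hf0⟩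
  let χ : Additive (Abelianization G) →+ ZMod e :=
    ι2.comp ((DFinsupp.evalAddMonoidHom i).comp ψ.toAddMonoidHom)
  let Φ : Abelianization G →* Multiplicative (ZMod e) := AddMonoidHom.toMultiplicativeRight χ
  have hfz : (zmultiplesHom (Additive G) (Additive.ofMul z)) (e : ℤ) = 0 := by
    show (e : ℤ) • (Additive.ofMul z) = 0
    rw [← ofMul_zpow, zpow_natCast, hze]
    rfl
  let ζ : Multiplicative (ZMod e) →* G :=
    AddMonoidHom.toMultiplicativeLeft
      (ZMod.lift e ⟨zmultiplesHom (Additive G) (Additive.ofMul z), hfz⟩)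
  let f : G →* G := ζ.comp (Φ.comp Abelianization.of)
  -- compute f p
  have hχ : χ pA = ((K : ℕ) : ZMod e) := by
    have h1 : χ pA = ι2 v := rfl
    have h2 : v = (((v.val : ℕ) : ℤ) : ZMod N) := by push_cast; rw [ZMod.natCast_zmod_val]
    rw [h1, h2]
    show ZMod.lift N ⟨f0, hf0⟩ _ = _
    rw [ZMod.lift_coe]
    show ((v.val : ℤ) : ZMod e) * ((e / N : ℕ) : ZMod e) = ((K : ℕ) : ZMod e)
    rw [hK, Nat.cast_mul]
    push_cast
    ring
  have hfp : f p = z ^ K := by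
    show ζ (Φ (Abelianization.of p)) = z ^ K
    have h1 : Φ (Abelianization.of p) = Multiplicative.ofAdd ((K : ℕ) : ZMod e) := by
      show Multiplicative.ofAdd (χ (Additive.ofMul (Abelianization.of p))) = _
      rw [← hpA, hχ]
    rw [h1]
    show Additive.toMul (ZMod.lift e ⟨zmultiplesHom (Additive G) (Additive.ofMul z), hfz⟩
      (Multiplicative.toAdd (Multiplicative.ofAdd ((K : ℕ) : ZMod e)))) = z ^ K
    have h2 : (Multiplicative.toAdd (Multiplicative.ofAdd ((K : ℕ) : ZMod e)))
        = (((K : ℤ)) : ZMod e) := by push_cast; rfl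
    rw [h2, ZMod.lift_coe]
    show Additive.toMul ((K : ℤ) • (Additive.ofMul z)) = z ^ K
    rw [← ofMul_zpow, zpow_natCast]
    rfl
  have hco : Commute p (z ^ K) := by
    have := hE f p
    rw [hfp] at this
    exact this
  have hpow : ⁅p, z⁆ ^ K = 1 := by
    rw [← pow_comm_right p z hcent K]
    exact commutatorElement_eq_one_iff_commute.mpr hco
  -- conclude
  have hdvd3 : orderOf ⁅p, z⁆ ∣ 3 := orderOf_dvd_of_pow_eq_one hcube
  have hdvdK : orderOf ⁅p, z⁆ ∣ K := orderOf_dvd_of_pow_eq_one hpow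
  have hcop : Nat.Coprime 3 K := (Nat.Prime.coprime_iff_not_dvd Nat.prime_three).mpr hK3
  have : orderOf ⁅p, z⁆ ∣ 1 := by
    rw [← Nat.coprime_iff_gcd_eq_one.mp hcop]
    exact Nat.dvd_gcd hdvd3 hdvdK
  rw [Nat.dvd_one] at this
  exact orderOf_eq_one_iff.mp this


end EGroupAux
namespace EGroupAux
open Subgroup

variable {G : Type*} [Group G] [Finite G]

omit [Finite G] in
lemma zpowers_cube {w u : G} (h3 : w ^ 3 = 1) (hu : u ∈ zpowers w) : u ^ 3 = 1 := by
  obtain ⟨k, rfl⟩ := hu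
  show ((w ^ k) ^ (3:ℕ)) = 1
  rw [← zpow_natCast (w ^ k) 3, ← zpow_mul, mul_comm, zpow_mul, zpow_natCast, h3, one_zpow]

omit [Finite G] in
lemma cube_zpowers {w u : G} (h3 : w ^ 3 = 1) (hu : u ∈ zpowers w) :
    u = 1 ∨ u = w ∨ u = w⁻¹ := by
  obtain ⟨k, rfl⟩ := hu
  show w ^ k = 1 ∨ w ^ k = w ∨ w ^ k = w⁻¹
  have h3' : w ^ (3:ℤ) = 1 := by
    have h4 := h3
    rw [← zpow_natCast w 3] at h4
    norm_num at h4
    exact_mod_cast h4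
  have hk : w ^ k = w ^ (k % 3) := by
    calc w ^ k = w ^ (3 * (k / 3) + k % 3) := by rw [Int.mul_ediv_add_emod]
      _ = (w ^ (3:ℤ)) ^ (k / 3) * w ^ (k % 3) := by rw [zpow_add, zpow_mul]
      _ = w ^ (k % 3) := by rw [h3', one_zpow, one_mul]
  have hr : k % 3 = 0 ∨ k % 3 = 1 ∨ k % 3 = 2 := by omega
  rcases hr with h | h | h
  · left; rw [hk, h, zpow_zero]
  · right; left; rw [hk, h, zpow_one]
  · right; right
    have h2 : w ^ (2:ℤ) * w = 1 := by
      have h5 : w ^ (2:ℤ) * w ^ (1:ℤ) = w ^ (3:ℤ) := by rw [← zpow_add]; norm_num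
      rw [zpow_one] at h5
      rw [h5, h3']
    rw [hk, h, eq_inv_iff_mul_eq_one]
    exact h2

section Branch
variable (hE : ∀ (φ : G →* G) (x : G), x * φ x = φ x * x)
  (hC : ∀ x g : G, Commute x (g * x * g⁻¹))
  {a b c : G} (hc : Subgroup.closure ({a, b, c} : Set G) = ⊤)

include hE hC hc

lemma branch {x y t : G} (hw : ⁅⁅x, y⁆, t⁆ = ⁅⁅a, b⁆, c⁆)
    (h3 : 3 ∣ Monoid.exponent (Abelianization G))
    (ht : (Abelianization.of t) ^ (Monoid.exponent (Abelianization G) / 3) ≠ 1) :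
    ⁅⁅a, b⁆, c⁆ = 1 := by
  set e := Monoid.exponent (Abelianization G) with he
  set w : G := ⁅⁅a, b⁆, c⁆ with hwdef
  have cube_w : w ^ 3 = 1 := cube hC a b c
  have wcomm : ∀ h : G, Commute w h := fun h => g3commute hC a b c h
  have hWmem : ∀ u ∈ commutator G, ∀ g : G, ⁅u, g⁆ ∈ zpowers w := stepB hC hc
  have pow_exp_mem : ∀ u : G, u ^ e ∈ commutator G := by
    intro u
    have h1 : Abelianization.of (u ^ e) = 1 := by
      rw [map_pow, Monoid.pow_exponent_eq_one]
    exact (QuotientGroup.eq_one_iff _).mp h1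
  -- e-th powers of the three basic commutators
  have hUe : ⁅x, y⁆ ^ e ∈ zpowers w := by
    rw [← pow_comm_left hC x y e]
    exact hWmem _ (pow_exp_mem x) y
  have hVe : ⁅y, t⁆ ^ e ∈ zpowers w := by
    rw [← pow_comm_left hC y t e]
    exact hWmem _ (pow_exp_mem y) t
  have hTe : ⁅t, x⁆ ^ e ∈ zpowers w := by
    rw [← pow_comm_left hC t x e]
    exact hWmem _ (pow_exp_mem t) x
  -- master step: a pivot with harvest w⁻¹ kills w
  have key : ∀ p z : G, z ∈ commutator G → z ^ e = 1 →
      (Abelianization.of p) ^ (e / 3) ≠ 1 → ⁅p, z⁆ = w⁻¹ → w = 1 := by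
    intro p z hz hze hp hval
    have hcent : Commute ⁅p, z⁆ z := by
      rw [hval]; exact (wcomm z).inv_left
    have hcube : ⁅p, z⁆ ^ 3 = 1 := by
      rw [hval, inv_pow, cube_w, inv_one]
    have := pivot hE hcent hcube hze h3 hp
    rw [hval] at this
    exact inv_eq_one.mp this
  have hwU : ⁅⁅x, y⁆, t⁆ = w := hw
  have htU : ⁅t, ⁅x, y⁆⁆ = w⁻¹ := by
    rw [← commutatorElement_inv, hwU]
  have htV : ⁅t, ⁅y, t⁆⁆ = 1 := by
    rw [commutatorElement_eq_one_iff_commute]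
    exact (commutatorElement_eq_one_iff_commute.mp (engel hC y t)).symm
  have htT : ⁅t, ⁅t, x⁆⁆ = 1 := by
    rw [commutatorElement_eq_one_iff_commute]
    exact (commutatorElement_eq_one_iff_commute.mp (engel2 hC t x)).symm
  have hyT : ⁅y, ⁅t, x⁆⁆ = w⁻¹ := by
    rw [← commutatorElement_inv, cyc hC t x y, hwU]
  -- harvest helper: ⁅t, U * v'⁆ = w⁻¹ whenever t commutes with v'
  have harv : ∀ v' : G, ⁅t, v'⁆ = 1 → ⁅t, ⁅x, y⁆ * v'⁆ = w⁻¹ := by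
    intro v' h1
    rw [exp_mul_right, h1, htU]
    group
  -- middle step: companion s with trivial t-harvest and nontrivial e-th power
  have step2 : ∀ s : G, s ∈ commutator G → Commute ⁅x, y⁆ s → ⁅t, s⁆ = 1 →
      s ^ e ∈ zpowers w → ¬ (s ^ e = 1) →
      (⁅x, y⁆ ^ e = w ∨ ⁅x, y⁆ ^ e = w⁻¹) → w = 1 := by
    intro s hs hUs hts hsmem hsne hU2
    have hts' : ⁅t, s⁻¹⁆ = 1 := by
      rw [commutatorElement_eq_one_iff_commute] at hts ⊢
      exact hts.inv_right
    rcases cube_zpowers cube_w hsmem with h2 | h2 | h2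
    · exact absurd h2 hsne
    · rcases hU2 with h1 | h1
      · -- U^e = w, s^e = w : z = U * s⁻¹
        refine key t (⁅x, y⁆ * s⁻¹) (mul_mem (mem_commutator x y) (inv_mem hs)) ?_ ht
          (harv _ hts')
        rw [hUs.inv_right.mul_pow, inv_pow, h1, h2, mul_inv_cancel]
      · -- U^e = w⁻¹, s^e = w : z = U * s
        refine key t (⁅x, y⁆ * s) (mul_mem (mem_commutator x y) hs) ?_ ht (harv _ hts)
        rw [hUs.mul_pow, h1, h2, inv_mul_cancel]
    · rcases hU2 with h1 | h1
      · -- U^e = w, s^e = w⁻¹ : z = U * s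
        refine key t (⁅x, y⁆ * s) (mul_mem (mem_commutator x y) hs) ?_ ht (harv _ hts)
        rw [hUs.mul_pow, h1, h2, mul_inv_cancel]
      · -- U^e = w⁻¹, s^e = w⁻¹ : z = U * s⁻¹
        refine key t (⁅x, y⁆ * s⁻¹) (mul_mem (mem_commutator x y) (inv_mem hs)) ?_ ht
          (harv _ hts')
        rw [hUs.inv_right.mul_pow, inv_pow, h1, h2, inv_inv, inv_mul_cancel]
  -- case analysis on U^e
  rcases cube_zpowers cube_w hUe with h1 | h1 | h1
  · -- U^e = 1 : pivot t with z = U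
    exact key t ⁅x, y⁆ (mem_commutator x y) h1 ht htU
  all_goals (
    have hU2 : ⁅x, y⁆ ^ e = w ∨ ⁅x, y⁆ ^ e = w⁻¹ := by
      first | exact Or.inl h1 | exact Or.inr h1
    by_cases hV1 : ⁅y, t⁆ ^ e = 1
    case neg =>
      exact step2 ⁅y, t⁆ (mem_commutator y t)
        (commutatorElement_eq_one_iff_commute.mp (gpab hC x y y t)) htV hVe hV1 hU2
    case pos =>
    by_cases hT1 : ⁅t, x⁆ ^ e = 1
    case neg =>
      exact step2 ⁅t, x⁆ (mem_commutator t x)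
        (commutatorElement_eq_one_iff_commute.mp (gpab hC x y t x)) htT hTe hT1 hU2
    case pos =>
    -- bad case : pivot y or t*y with z = ⁅t, x⁆
    by_cases hy : (Abelianization.of y) ^ (e / 3) = 1
    case pos =>
      refine key (t * y) ⁅t, x⁆ (mem_commutator t x) hT1 ?_ ?_
      · rw [map_mul, mul_pow, hy, mul_one]
        exact ht
      · rw [exp_mul_left, hyT, htT, mul_one, conj_eq_of_commute ((wcomm t).inv_left)]
    case neg =>
      exact key y ⁅t, x⁆ (mem_commutator t x) hT1 hy hyT)

end Branch
end EGroupAux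
namespace EGroupAux
open Subgroup

variable {G : Type*} [Group G] [Finite G]

omit [Finite G] in
lemma of_surjective : Function.Surjective (Abelianization.of : G →* Abelianization G) :=
  fun x => Quotient.inductionOn' x (fun g => ⟨g, rfl⟩)

end EGroupAux

/-- Every finite `E`-group that can be generated by 3 elements is nilpotent of
class at most 2, i.e. its derived subgroup is contained in its center. -/
theorem finite_three_generated_EGroup_class_le_two
    {G : Type*} [Group G] [Finite G] (hE : IsEGroup G)
    (hgen : ∃ a b c : G, Subgroup.closure {a, b, c} = ⊤) :
    commutator G ≤ Subgroup.center G := by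
  open EGroupAux Subgroup in
  obtain ⟨a, b, c, hc⟩ := hgen
  have hC : ∀ x g : G, Commute x (g * x * g⁻¹) := by
    intro x g
    exact hE (MulAut.conj g).toMonoidHom x
  set e := Monoid.exponent (Abelianization G) with he
  have he0 : e ≠ 0 := Monoid.exponent_ne_zero_of_finite
  have cube_w : ⁅⁅a, b⁆, c⁆ ^ 3 = 1 := cube hC a b c
  have hw1 : ⁅⁅a, b⁆, c⁆ = 1 := by
    by_cases h3 : 3 ∣ e
    case neg =>
      have hae : a ^ e ∈ commutator G := by
        have h1 : Abelianization.of (a ^ e) = 1 := by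
          rw [map_pow, Monoid.pow_exponent_eq_one]
        exact (QuotientGroup.eq_one_iff _).mp h1
      have hwe : ⁅⁅a, b⁆, c⁆ ^ e = 1 := by
        rw [← pow_comm_left hC ⁅a, b⁆ c e, ← pow_comm_left hC a b e]
        exact commutatorElement_eq_one_iff_commute.mpr (stepA hC _ hae b c)
      have hd3 : orderOf ⁅⁅a, b⁆, c⁆ ∣ 3 := orderOf_dvd_of_pow_eq_one cube_w
      have hde : orderOf ⁅⁅a, b⁆, c⁆ ∣ e := orderOf_dvd_of_pow_eq_one hwe
      have hcop : Nat.Coprime 3 e := (Nat.Prime.coprime_iff_not_dvd Nat.prime_three).mpr h3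
      have hd1 : orderOf ⁅⁅a, b⁆, c⁆ ∣ 1 := by
        rw [← Nat.coprime_iff_gcd_eq_one.mp hcop]
        exact Nat.dvd_gcd hd3 hde
      rw [Nat.dvd_one] at hd1
      exact orderOf_eq_one_iff.mp hd1
    case pos =>
      have hgenfail : ¬ ((Abelianization.of a) ^ (e / 3) = 1 ∧
          (Abelianization.of b) ^ (e / 3) = 1 ∧ (Abelianization.of c) ^ (e / 3) = 1) := by
        rintro ⟨hpa, hpb, hpc⟩
        have hall : ∀ u : Abelianization G, u ^ (e / 3) = 1 := by
          intro u
        -- u lies in the closure of the images of the generators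
          have hu : u ∈ Subgroup.closure
              ({Abelianization.of a, Abelianization.of b, Abelianization.of c} :
                Set (Abelianization G)) := by
            have himg : Subgroup.closure
                ((Abelianization.of (G := G)) '' ({a, b, c} : Set G)) = ⊤ := by
              rw [← MonoidHom.map_closure, hc, Subgroup.map_top_of_surjective _ of_surjective]
            rw [Set.image_insert_eq, Set.image_insert_eq, Set.image_singleton] at himg
            rw [himg]
            exact Subgroup.mem_top u
          induction hu using Subgroup.closure_induction with
          | mem v hv =>
            simp only [Set.mem_insert_iff, Set.mem_singleton_iff] at hv
            rcases hv with rfl | rfl | rfl <;> assumption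
          | one => rw [one_pow]
          | mul v₁ v₂ hv₁ hv₂ ih₁ ih₂ => rw [mul_pow, ih₁, ih₂, one_mul]
          | inv v hv ih => rw [inv_pow, ih, inv_one]
        have hdvd : e ∣ e / 3 := Monoid.exponent_dvd_of_forall_pow_eq_one hall
        have h3e : 3 ≤ e := Nat.le_of_dvd (Nat.pos_of_ne_zero he0) h3
        have hlt : e / 3 < e := Nat.div_lt_self (Nat.pos_of_ne_zero he0) (by norm_num)
        have hpos : 0 < e / 3 := Nat.div_pos h3e (by norm_num)
        exact absurd (Nat.le_of_dvd hpos hdvd) (by omega)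
      by_cases h1 : (Abelianization.of c) ^ (e / 3) = 1
      case neg => exact branch hE hC hc rfl h3 h1
      case pos =>
        by_cases h2 : (Abelianization.of b) ^ (e / 3) = 1
        case neg => exact branch hE hC hc (cyc hC c a b) h3 h2
        case pos =>
          have h3a : (Abelianization.of a) ^ (e / 3) ≠ 1 := by
            intro ha
            exact hgenfail ⟨ha, h2, h1⟩
          exact branch hE hC hc ((cyc hC a b c).symm) h3 h3a
  -- conclude: all commutators are central
  intro u hu
  rw [Subgroup.mem_center_iff]
  intro g
  have hmem := stepB hC hc u hu g
  rw [hw1] at hmem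
  have hone : ⁅u, g⁆ = 1 := by
    obtain ⟨k, hk⟩ := hmem
    rw [← hk]
    exact one_zpow k
  exact ((commutatorElement_eq_one_iff_commute.mp hone).symm).eq
end

section
/- Every group that can be generated by 2 elements and is an E-group is abelian. -/
open scoped commutatorElement

/-! Discrete Heisenberg-like bookkeeping group. -/

@[ext]
structure Hei where
  i : ℤ
  j : ℤ
  k : ℤ

namespace Hei

instance : Mul Hei := ⟨fun p q => ⟨p.i + q.i, p.j + q.j, p.k + q.k - p.j * q.i⟩⟩
instance : One Hei := ⟨⟨0, 0, 0⟩⟩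
instance : Inv Hei := ⟨fun p => ⟨-p.i, -p.j, -p.k - p.j * p.i⟩⟩

@[simp] lemma mul_def (p q : Hei) :
    p * q = ⟨p.i + q.i, p.j + q.j, p.k + q.k - p.j * q.i⟩ := rfl
@[simp] lemma one_def : (1 : Hei) = ⟨0, 0, 0⟩ := rfl
@[simp] lemma inv_def (p : Hei) : p⁻¹ = ⟨-p.i, -p.j, -p.k - p.j * p.i⟩ := rfl

instance : Group Hei where
  mul_assoc p q r := by ext <;> simp <;> ring
  one_mul p := by ext <;> simp
  mul_one p := by ext <;> simp
  inv_mul_cancel p := by ext <;> simp <;> ring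

/-- `T n = n (n-1) / 2`. -/
def T (n : ℤ) : ℤ := n * (n - 1) / 2

lemma two_T (n : ℤ) : 2 * T n = n * (n - 1) := by
  have h : Even ((n - 1) * n) := Int.even_mul_succ_self (n - 1) |>.imp ?_
  · obtain ⟨m, hm⟩ := h
    have hm' : n * (n - 1) = 2 * m := by linarith [hm]
    simp [T, hm', Int.mul_ediv_cancel_left m (by norm_num : (2:ℤ) ≠ 0)]
  · intro x hx; simpa using hx

lemma T_succ (n : ℤ) : T (n + 1) = T n + n := by
  have h1 := two_T n
  have h2 := two_T (n + 1)
  nlinarith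

lemma T_pred (n : ℤ) : T (n - 1) = T n - (n - 1) := by
  have h1 := two_T n
  have h2 := two_T (n - 1)
  nlinarith

@[simp] lemma T_zero : T 0 = 0 := by simp [T]

lemma zpow_mk (i j k n : ℤ) :
    (⟨i, j, k⟩ : Hei) ^ n = ⟨n * i, n * j, n * k - i * j * T n⟩ := by
  induction n using Int.induction_on with
  | zero => simp
  | succ n ih =>
      rw [zpow_add_one, ih]
      ext <;> simp [T_succ] <;> push_cast <;> ring
  | pred n ih =>
      rw [zpow_sub_one, ih]
      ext <;> simp [T_pred] <;> push_cast <;> ring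

lemma commutator_mk (p q : Hei) :
    ⁅p, q⁆ = (⟨0, 0, p.i * q.j - p.j * q.i⟩ : Hei) := by
  obtain ⟨i, j, k⟩ := p; obtain ⟨i', j', k'⟩ := q
  show _ * _ * _ * _ = _
  ext <;> simp <;> ring

end Hei
section PhiSec

variable {G : Type*} [Group G] {a b c : G}

variable (a b c) in
lemma ab_eq_comm_ba : a * b = ⁅a, b⁆ * (b * a) := by group

variable (a b c) in
lemma ba_eq (h1 : Commute c a) (h2 : Commute c b) (hc : c = ⁅a, b⁆) :
    b * a = a * b * c⁻¹ := by
  have h := ab_eq_comm_ba a b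
  rw [← hc] at h
  rw [h, (h2.mul_right h1).eq]
  group

variable (hba : b * a = a * b * c⁻¹) (h1 : Commute c a) (h2 : Commute c b)

include hba h1 in
lemma b_apow (i : ℤ) : b * a ^ i = a ^ i * b * c ^ (-i) := by
  have hca : ∀ m : ℤ, c ^ m * a = a * c ^ m := fun m => (h1.zpow_left m).eq
  have hca' : ∀ m : ℤ, c ^ m * a⁻¹ = a⁻¹ * c ^ m :=
    fun m => ((h1.zpow_left m).inv_right).eq
  have hx : a⁻¹ * c = c * a⁻¹ := (h1.inv_right).eq.symm
  have hba' : b * a⁻¹ = a⁻¹ * b * c := by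
    refine Eq.symm ?_
    calc a⁻¹ * b * c = a⁻¹ * (b * a) * (a⁻¹ * c) := by group
      _ = a⁻¹ * (a * b * c⁻¹) * (a⁻¹ * c) := by rw [hba]
      _ = b * c⁻¹ * (a⁻¹ * c) := by group
      _ = b * c⁻¹ * (c * a⁻¹) := by rw [hx]
      _ = b * a⁻¹ := by group
  induction i using Int.induction_on with
  | zero => simp
  | succ n ih =>
      calc b * a ^ ((n:ℤ) + 1) = (b * a ^ (n:ℤ)) * a := by rw [zpow_add_one]; group
        _ = (a ^ (n:ℤ) * b * c ^ (-(n:ℤ))) * a := by rw [ih]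
        _ = a ^ (n:ℤ) * b * (c ^ (-(n:ℤ)) * a) := by group
        _ = a ^ (n:ℤ) * b * (a * c ^ (-(n:ℤ))) := by rw [hca]
        _ = a ^ (n:ℤ) * (b * a) * c ^ (-(n:ℤ)) := by group
        _ = a ^ (n:ℤ) * (a * b * c⁻¹) * c ^ (-(n:ℤ)) := by rw [hba]
        _ = a ^ ((n:ℤ) + 1) * b * c ^ (-((n:ℤ) + 1)) := by
              rw [zpow_add_one a (n:ℤ),
                show (-((n:ℤ) + 1)) = (-1) + (-(n:ℤ)) by ring, zpow_add, zpow_neg_one]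
              group
  | pred n ih =>
      calc b * a ^ (-(n:ℤ) - 1) = (b * a ^ (-(n:ℤ))) * a⁻¹ := by
              rw [zpow_sub_one]; group
        _ = (a ^ (-(n:ℤ)) * b * c ^ (-(-(n:ℤ)))) * a⁻¹ := by rw [ih]
        _ = a ^ (-(n:ℤ)) * b * (c ^ (-(-(n:ℤ))) * a⁻¹) := by group
        _ = a ^ (-(n:ℤ)) * b * (a⁻¹ * c ^ (-(-(n:ℤ)))) := by rw [hca']
        _ = a ^ (-(n:ℤ)) * (b * a⁻¹) * c ^ (-(-(n:ℤ))) := by group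
        _ = a ^ (-(n:ℤ)) * (a⁻¹ * b * c) * c ^ (-(-(n:ℤ))) := by rw [hba']
        _ = a ^ (-(n:ℤ) - 1) * b * c ^ (-(-(n:ℤ) - 1)) := by
              rw [zpow_sub_one a (-(n:ℤ)),
                show (-(-(n:ℤ) - 1)) = 1 + (-(-(n:ℤ))) by ring, zpow_add, zpow_one]
              group

include hba h1 h2 in
lemma bpow_apow (j i : ℤ) : b ^ j * a ^ i = a ^ i * b ^ j * c ^ (-(j * i)) := by
  have hcza : ∀ m n : ℤ, c ^ m * a ^ n = a ^ n * c ^ m :=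
    fun m n => ((h1.zpow_left m).zpow_right n).eq
  have hczb : ∀ m n : ℤ, c ^ m * b ^ n = b ^ n * c ^ m :=
    fun m n => ((h2.zpow_left m).zpow_right n).eq
  have hczb1 : ∀ m : ℤ, c ^ m * b = b * c ^ m := fun m => (h2.zpow_left m).eq
  have hczb1' : ∀ m : ℤ, c ^ m * b⁻¹ = b⁻¹ * c ^ m :=
    fun m => ((h2.zpow_left m).inv_right).eq
  have hb1 := b_apow hba h1
  have hbinv : b⁻¹ * a ^ i = a ^ i * b⁻¹ * c ^ i := by
    refine Eq.symm ?_
    calc a ^ i * b⁻¹ * c ^ i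
        = b⁻¹ * (b * a ^ i) * b⁻¹ * c ^ i := by group
      _ = b⁻¹ * (a ^ i * b * c ^ (-i)) * b⁻¹ * c ^ i := by rw [hb1]
      _ = b⁻¹ * a ^ i * b * (c ^ (-i) * b⁻¹) * c ^ i := by group
      _ = b⁻¹ * a ^ i * b * (b⁻¹ * c ^ (-i)) * c ^ i := by rw [hczb1']
      _ = b⁻¹ * a ^ i := by group
  induction j using Int.induction_on with
  | zero => simp
  | succ n ih =>
      calc b ^ ((n:ℤ) + 1) * a ^ i = b ^ (n:ℤ) * (b * a ^ i) := by
              rw [zpow_add_one]; group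
        _ = b ^ (n:ℤ) * (a ^ i * b * c ^ (-i)) := by rw [hb1]
        _ = (b ^ (n:ℤ) * a ^ i) * b * c ^ (-i) := by group
        _ = (a ^ i * b ^ (n:ℤ) * c ^ (-((n:ℤ) * i))) * b * c ^ (-i) := by rw [ih]
        _ = a ^ i * b ^ (n:ℤ) * (c ^ (-((n:ℤ) * i)) * b) * c ^ (-i) := by group
        _ = a ^ i * b ^ (n:ℤ) * (b * c ^ (-((n:ℤ) * i))) * c ^ (-i) := by rw [hczb1]
        _ = a ^ i * b ^ ((n:ℤ) + 1) * c ^ (-(((n:ℤ) + 1) * i)) := by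
              rw [zpow_add_one b (n:ℤ),
                show (-(((n:ℤ) + 1) * i)) = (-((n:ℤ) * i)) + (-i) by ring, zpow_add]
              group
  | pred n ih =>
      calc b ^ (-(n:ℤ) - 1) * a ^ i = b ^ (-(n:ℤ)) * (b⁻¹ * a ^ i) := by
              rw [zpow_sub_one]; group
        _ = b ^ (-(n:ℤ)) * (a ^ i * b⁻¹ * c ^ i) := by rw [hbinv]
        _ = (b ^ (-(n:ℤ)) * a ^ i) * b⁻¹ * c ^ i := by group
        _ = (a ^ i * b ^ (-(n:ℤ)) * c ^ (-(-(n:ℤ) * i))) * b⁻¹ * c ^ i := by rw [ih]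
        _ = a ^ i * b ^ (-(n:ℤ)) * (c ^ (-(-(n:ℤ) * i)) * b⁻¹) * c ^ i := by group
        _ = a ^ i * b ^ (-(n:ℤ)) * (b⁻¹ * c ^ (-(-(n:ℤ) * i))) * c ^ i := by rw [hczb1']
        _ = a ^ i * b ^ (-(n:ℤ) - 1) * c ^ (-((-(n:ℤ) - 1) * i)) := by
              rw [zpow_sub_one b (-(n:ℤ)),
                show (-((-(n:ℤ) - 1) * i)) = (-(-(n:ℤ) * i)) + i by ring, zpow_add]
              group


include hba h1 h2 in
lemma phi_aux (p q : Hei) :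
    (a ^ p.i * b ^ p.j * c ^ p.k) * (a ^ q.i * b ^ q.j * c ^ q.k) =
      a ^ (p.i + q.i) * b ^ (p.j + q.j) * c ^ (p.k + q.k - p.j * q.i) := by
  have hcza : ∀ m n : ℤ, c ^ m * a ^ n = a ^ n * c ^ m :=
    fun m n => ((h1.zpow_left m).zpow_right n).eq
  have hczb : ∀ m n : ℤ, c ^ m * b ^ n = b ^ n * c ^ m :=
    fun m n => ((h2.zpow_left m).zpow_right n).eq
  obtain ⟨i, j, k⟩ := p; obtain ⟨i', j', k'⟩ := q
  simp only
  calc (a ^ i * b ^ j * c ^ k) * (a ^ i' * b ^ j' * c ^ k')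
      = a ^ i * b ^ j * (c ^ k * a ^ i') * b ^ j' * c ^ k' := by group
    _ = a ^ i * b ^ j * (a ^ i' * c ^ k) * b ^ j' * c ^ k' := by rw [hcza]
    _ = a ^ i * (b ^ j * a ^ i') * (c ^ k * b ^ j') * c ^ k' := by group
    _ = a ^ i * (b ^ j * a ^ i') * (b ^ j' * c ^ k) * c ^ k' := by rw [hczb]
    _ = a ^ i * (a ^ i' * b ^ j * c ^ (-(j * i'))) * (b ^ j' * c ^ k) * c ^ k' := by
          rw [bpow_apow hba h1 h2]
    _ = (a ^ i * a ^ i') * b ^ j * (c ^ (-(j * i')) * b ^ j') * (c ^ k * c ^ k') := by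
          group
    _ = (a ^ i * a ^ i') * b ^ j * (b ^ j' * c ^ (-(j * i'))) * (c ^ k * c ^ k') := by
          rw [hczb]
    _ = (a ^ i * a ^ i') * (b ^ j * b ^ j') * (c ^ (-(j * i')) * (c ^ k * c ^ k')) := by
          group
    _ = a ^ (i + i') * b ^ (j + j') * c ^ (k + k' - j * i') := by
          rw [← zpow_add a, ← zpow_add b, ← zpow_add c, ← zpow_add c,
            show -(j * i') + (k + k') = k + k' - j * i' by ring]

variable (a b c) in
/-- The bookkeeping homomorphism `⟨i,j,k⟩ ↦ aⁱ bʲ cᵏ`. -/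
def Phi (hba : b * a = a * b * c⁻¹) (h1 : Commute c a) (h2 : Commute c b) :
    Hei →* G where
  toFun p := a ^ p.i * b ^ p.j * c ^ p.k
  map_one' := by simp
  map_mul' p q := by
    simp only [Hei.mul_def]
    exact (phi_aux hba h1 h2 p q).symm

include hba h1 h2

lemma Phi_mk (i j k : ℤ) : Phi a b c hba h1 h2 ⟨i, j, k⟩ = a ^ i * b ^ j * c ^ k := rfl

lemma Phi_a : Phi a b c hba h1 h2 ⟨1, 0, 0⟩ = a := by
  rw [Phi_mk]; simp

lemma Phi_b : Phi a b c hba h1 h2 ⟨0, 1, 0⟩ = b := by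
  rw [Phi_mk]; simp

lemma Phi_c (k : ℤ) : Phi a b c hba h1 h2 ⟨0, 0, k⟩ = c ^ k := by
  rw [Phi_mk]; simp

lemma Phi_commutator (p q : Hei) :
    ⁅Phi a b c hba h1 h2 p, Phi a b c hba h1 h2 q⁆ = c ^ (p.i * q.j - p.j * q.i) := by
  rw [← map_commutatorElement, Hei.commutator_mk, Phi_c]

lemma Phi_apow (s : ℤ) : a ^ s = Phi a b c hba h1 h2 ⟨s, 0, 0⟩ := by
  rw [Phi_mk]; simp

lemma Phi_bpow (s : ℤ) : b ^ s = Phi a b c hba h1 h2 ⟨0, s, 0⟩ := by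
  rw [Phi_mk]; simp

lemma Phi_ab : a * b = Phi a b c hba h1 h2 ⟨1, 1, 0⟩ := by
  rw [Phi_mk]; simp

lemma Phi_cancel (x1 x2 k kk : ℤ) (h : Phi a b c hba h1 h2 ⟨x1, x2, k⟩ = 1) :
    Phi a b c hba h1 h2 ⟨x1, x2, kk⟩ = c ^ (kk - k) := by
  calc Phi a b c hba h1 h2 ⟨x1, x2, kk⟩
      = Phi a b c hba h1 h2 (⟨0, 0, kk - k⟩ * ⟨x1, x2, k⟩) := by
        congr 1
        ext <;> simp
    _ = c ^ (kk - k) * 1 := by rw [map_mul, h, Phi_c]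
    _ = c ^ (kk - k) := mul_one _

end PhiSec

section EGroup

variable {G : Type*} [Group G]

lemma comm_commutator_right (hE : IsEGroup G) (a b : G) : Commute ⁅a, b⁆ b := by
  have h := hE (MulAut.conj a).toMonoidHom b
  simp only [MulEquiv.coe_toMonoidHom, MulAut.conj_apply] at h
  have h' : a * b * a⁻¹ = b * (a * b * a⁻¹) * b⁻¹ := by rw [h]; group
  show ⁅a, b⁆ * b = b * ⁅a, b⁆
  calc ⁅a, b⁆ * b = a * b * a⁻¹ := by group
    _ = b * (a * b * a⁻¹) * b⁻¹ := h'
    _ = b * ⁅a, b⁆ := by group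

lemma comm_commutator_left (hE : IsEGroup G) (a b : G) : Commute ⁅a, b⁆ a := by
  have h := hE (MulAut.conj b).toMonoidHom a
  simp only [MulEquiv.coe_toMonoidHom, MulAut.conj_apply] at h
  have hc : Commute a (b * a * b⁻¹) := h
  have hc3 : Commute a (b * a⁻¹ * b⁻¹) := by
    rw [show b * a⁻¹ * b⁻¹ = (b * a * b⁻¹)⁻¹ by group]
    exact hc.inv_right
  show ⁅a, b⁆ * a = a * ⁅a, b⁆
  calc ⁅a, b⁆ * a = a * (b * a⁻¹ * b⁻¹ * a) := by group
    _ = a * (a * (b * a⁻¹ * b⁻¹)) := by rw [← hc3.eq]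
    _ = a * ⁅a, b⁆ := by group

lemma commutator_central {a b : G} (hgen : Subgroup.closure {a, b} = ⊤)
    (h1 : Commute ⁅a, b⁆ a) (h2 : Commute ⁅a, b⁆ b) (g : G) : Commute ⁅a, b⁆ g := by
  have hg : g ∈ Subgroup.closure {a, b} := hgen ▸ Subgroup.mem_top g
  induction hg using Subgroup.closure_induction with
  | mem x hx =>
      rcases hx with hx | hx
      · rw [hx]; exact h1
      · rw [Set.mem_singleton_iff] at hx; rw [hx]; exact h2
  | one => exact Commute.one_right _
  | mul x y hx hy ihx ihy => exact ihx.mul_right ihy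
  | inv x hx ihx => exact ihx.inv_right

end EGroup

section Surj

variable {G : Type*} [Group G] {a b c : G}
variable (hba : b * a = a * b * c⁻¹) (h1 : Commute c a) (h2 : Commute c b)

include hba h1 h2 in
lemma Phi_surjective (hgen : Subgroup.closure {a, b} = ⊤) :
    Function.Surjective (Phi a b c hba h1 h2) := by
  rw [← MonoidHom.range_eq_top]
  rw [eq_top_iff, ← hgen]
  rw [Subgroup.closure_le]
  rintro x (hx | hx)
  · exact ⟨⟨1, 0, 0⟩, by rw [Phi_a]; exact hx.symm ▸ rfl⟩
  · rw [Set.mem_singleton_iff] at hx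
    exact ⟨⟨0, 1, 0⟩, by rw [Phi_b]; exact hx ▸ rfl⟩

end Surj

section Endo

variable {G : Type*} [Group G] {a b c : G}
variable (hba : b * a = a * b * c⁻¹) (h1 : Commute c a) (h2 : Commute c b)

include hba h1 h2 in
/-- If `u, v` satisfy the defining relations of `G`, then `a ↦ u, b ↦ v` extends to an
endomorphism of `G`. -/
lemma exists_endo (hgen : Subgroup.closure {a, b} = ⊤)
    (D0 D1 al be : ℤ)
    (hchar : ∀ i j : ℤ, (∃ k : ℤ, a ^ i * b ^ j * c ^ k = 1) → (D0 ∣ i ∧ D1 ∣ j))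
    (hal : a ^ D0 = c ^ al) (hbe : b ^ D1 = c ^ be)
    (u v : G)
    (hc1 : Commute ⁅u, v⁆ u) (hc2 : Commute ⁅u, v⁆ v)
    (hr1 : u ^ D0 = ⁅u, v⁆ ^ al) (hr2 : v ^ D1 = ⁅u, v⁆ ^ be)
    (hr3 : ∀ k : ℤ, c ^ k = 1 → ⁅u, v⁆ ^ k = 1) :
    ∃ φ : G →* G, φ a = u ∧ φ b = v := by
  set d := ⁅u, v⁆ with hd
  have hbav : v * u = u * v * d⁻¹ := ba_eq u v d hc1 hc2 rfl
  set Φ := Phi a b c hba h1 h2 with hΦ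
  set Φ' := Phi u v d hbav hc1 hc2 with hΦ'
  have key : ∀ p : Hei, Φ p = 1 → Φ' p = 1 := by
    rintro ⟨i, j, k⟩ hp
    rw [hΦ, Phi_mk] at hp
    obtain ⟨⟨i₁, hi⟩, ⟨j₂, hj⟩⟩ := hchar i j ⟨k, hp⟩
    have hai : a ^ i = c ^ (al * i₁) := by
      rw [hi, zpow_mul, hal, ← zpow_mul]
    have hbj : b ^ j = c ^ (be * j₂) := by
      rw [hj, zpow_mul, hbe, ← zpow_mul]
    have hck : c ^ (al * i₁ + be * j₂ + k) = 1 := by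
      rw [zpow_add, zpow_add, ← hai, ← hbj, hp]
    have hui : u ^ i = d ^ (al * i₁) := by
      rw [hi, zpow_mul, hr1, ← zpow_mul]
    have hvj : v ^ j = d ^ (be * j₂) := by
      rw [hj, zpow_mul, hr2, ← zpow_mul]
    rw [hΦ', Phi_mk, hui, hvj, ← zpow_add, ← zpow_add]
    exact hr3 _ hck
  have key2 : ∀ p q : Hei, Φ p = Φ q → Φ' p = Φ' q := by
    intro p q h
    have h0 : Φ (p * q⁻¹) = 1 := by
      rw [map_mul, map_inv, h, mul_inv_cancel]
    have := key _ h0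
    rwa [map_mul, map_inv, mul_inv_eq_one] at this
  have hsurj : Function.Surjective Φ := Phi_surjective hba h1 h2 hgen
  set s : G → Hei := Function.surjInv hsurj with hs
  have hsec : ∀ x, Φ (s x) = x := Function.surjInv_eq hsurj
  refine ⟨{ toFun := fun x => Φ' (s x), map_one' := ?_, map_mul' := ?_ }, ?_, ?_⟩
  · show Φ' (s 1) = 1
    have : Φ (s 1) = Φ 1 := by rw [hsec, map_one]
    rw [key2 _ _ this, map_one]
  · intro x y
    show Φ' (s (x * y)) = Φ' (s x) * Φ' (s y)
    have : Φ (s (x * y)) = Φ (s x * s y) := by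
      rw [hsec, map_mul, hsec, hsec]
    rw [key2 _ _ this, map_mul]
  · show Φ' (s a) = u
    have : Φ (s a) = Φ ⟨1, 0, 0⟩ := by rw [hsec, Phi_a]
    rw [key2 _ _ this, hΦ', Phi_a]
  · show Φ' (s b) = v
    have : Φ (s b) = Φ ⟨0, 1, 0⟩ := by rw [hsec, Phi_b]
    rw [key2 _ _ this, hΦ', Phi_b]

end Endo
def combo (i j : ℤ) (W0 W1 : ℤ × ℤ) : ℤ × ℤ :=
  (i * W0.1 + j * W1.1, i * W0.2 + j * W1.2)

lemma combo_eq_smul (i j : ℤ) (W0 W1 : ℤ × ℤ) :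
    combo i j W0 W1 = i • W0 + j • W1 := by
  ext <;> simp [combo] <;> ring

lemma submodule_struct_raw (N : Submodule ℤ (ℤ × ℤ)) :
    ∃ (W0 W1 : ℤ × ℤ) (D0 D1 : ℤ),
      (∀ x : ℤ × ℤ, ∃ i j : ℤ, x = combo i j W0 W1) ∧
      (∀ i j : ℤ, (combo i j W0 W1 ∈ N ↔ D0 ∣ i ∧ D1 ∣ j)) := by
  classical
  obtain ⟨n, snf⟩ := N.smithNormalForm (Module.Basis.finTwoProd ℤ)
  set bM := snf.bM with hbM
  set bN := snf.bN with hbN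
  set f := snf.f with hf
  set A := snf.a with hA
  set D : Fin 2 → ℤ := fun t => if h : ∃ i, f i = t then A h.choose else 0 with hD
  have hDf : ∀ i : Fin n, D (f i) = A i := by
    intro i
    have h : ∃ i', f i' = f i := ⟨i, rfl⟩
    have : h.choose = i := f.injective h.choose_spec
    simp only [hD, dif_pos h, this]
  have hDnr : ∀ t : Fin 2, t ∉ Set.range f → D t = 0 := by
    intro t ht
    have h : ¬ ∃ i, f i = t := by simpa [Set.range] using ht
    simp only [hD, dif_neg h]
  have claimA : ∀ (x : ℤ × ℤ), x ∈ N → ∀ t, D t ∣ bM.repr x t := by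
    intro x hx t
    by_cases h : ∃ i, f i = t
    · obtain ⟨i, hi⟩ := h
      have h1 := snf.repr_apply_embedding_eq_repr_smul (m := ⟨x, hx⟩) (i := i)
      rw [← hi, hDf]
      rw [show snf.bM = bM from rfl] at h1
      rw [show ((⟨x, hx⟩ : N) : ℤ × ℤ) = x from rfl] at h1
      rw [h1]
      rw [map_smul]
      exact ⟨bN.repr ⟨x, hx⟩ i, by simp [hA, hbN, mul_comm]⟩
    · have ht : t ∉ Set.range f := by simpa [Set.range] using h
      rw [snf.repr_eq_zero_of_notMem_range ⟨x, hx⟩ ht]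
      exact dvd_zero _
  have claimB : ∀ (x : ℤ × ℤ), (∀ t, D t ∣ bM.repr x t) → x ∈ N := by
    intro x hx
    refine bN.mem_submodule_iff'.mpr ⟨fun i => bM.repr x (f i) / A i, ?_⟩
    have hterm : ∀ i : Fin n,
        (bM.repr x (f i) / A i) • ((bN i : ℤ × ℤ)) = bM.repr x (f i) • bM (f i) := by
      intro i
      rw [snf.snf i]
      rw [smul_smul]
      congr 1
      have := hx (f i)
      rw [hDf] at this
      exact Int.ediv_mul_cancel this
    calc x = ∑ t : Fin 2, bM.repr x t • bM t := (bM.sum_repr x).symm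
      _ = ∑ t ∈ (Finset.univ.map f), bM.repr x t • bM t := by
          refine (Finset.sum_subset (Finset.subset_univ _) ?_).symm
          intro t _ ht
          have htr : t ∉ Set.range f := by
            simp only [Finset.mem_map, Finset.mem_univ, true_and] at ht
            rintro ⟨i, rfl⟩; exact ht ⟨i, rfl⟩
          have : bM.repr x t = 0 := by
            have := hx t
            rw [hDnr t htr] at this
            exact zero_dvd_iff.mp this
          rw [this, zero_smul]
      _ = ∑ i : Fin n, bM.repr x (f i) • bM (f i) := by
          rw [Finset.sum_map]
      _ = ∑ i : Fin n, (bM.repr x (f i) / A i) • ((bN i : ℤ × ℤ)) := by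
          refine Finset.sum_congr rfl fun i _ => (hterm i).symm
  refine ⟨bM 0, bM 1, D 0, D 1, ?_, ?_⟩
  · intro x
    refine ⟨bM.repr x 0, bM.repr x 1, ?_⟩
    rw [combo_eq_smul]
    have := (bM.sum_repr x).symm
    rwa [Fin.sum_univ_two] at this
  · intro i j
    have hrepr : bM.repr (combo i j (bM 0) (bM 1)) =
        i • Finsupp.single 0 1 + j • Finsupp.single 1 1 := by
      rw [combo_eq_smul, map_add, map_smul, map_smul, bM.repr_self, bM.repr_self]
    constructor
    · intro hmem
      have h0 := claimA _ hmem 0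
      have h1 := claimA _ hmem 1
      rw [hrepr] at h0 h1
      simp [Finsupp.single_apply] at h0 h1
      exact ⟨h0, h1⟩
    · rintro ⟨hi, hj⟩
      refine claimB _ ?_
      intro t
      rw [hrepr]
      fin_cases t <;> simp [Finsupp.single_apply] <;> assumption

lemma submodule_struct (N : Submodule ℤ (ℤ × ℤ)) :
    ∃ (W0 W1 : ℤ × ℤ) (D0 D1 : ℤ), D0 ∣ D1 ∧
      (∀ x : ℤ × ℤ, ∃ i j : ℤ, x = combo i j W0 W1) ∧
      (∀ i j : ℤ, (combo i j W0 W1 ∈ N ↔ D0 ∣ i ∧ D1 ∣ j)) := by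
  obtain ⟨W0, W1, D0, D1, hspan, hchar⟩ := submodule_struct_raw N
  by_cases hz : D0 = 0 ∧ D1 = 0
  · exact ⟨W0, W1, D0, D1, by rw [hz.1, hz.2], hspan, hchar⟩
  · set DG : ℤ := (Int.gcd D0 D1 : ℤ) with hDGdef
    have hDG0 : DG ≠ 0 := by
      simp only [hDGdef]
      norm_cast
      rw [Int.gcd_eq_zero_iff]
      exact hz
    have hd0 : DG ∣ D0 := Int.gcd_dvd_left _ _
    have hd1 : DG ∣ D1 := Int.gcd_dvd_right _ _
    set e1 : ℤ := D0 / DG with he1def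
    set e2 : ℤ := D1 / DG with he2def
    have he1 : D0 = DG * e1 := (Int.mul_ediv_cancel' hd0).symm
    have he2 : D1 = DG * e2 := (Int.mul_ediv_cancel' hd1).symm
    set u : ℤ := Int.gcdA D0 D1 with hu
    set v : ℤ := Int.gcdB D0 D1 with hv
    have hbez : DG = D0 * u + D1 * v := Int.gcd_eq_gcd_ab D0 D1
    have hkey : u * e1 + v * e2 = 1 := by
      have h : DG * (u * e1 + v * e2) = DG * 1 := by
        calc DG * (u * e1 + v * e2) = (DG * e1) * u + (DG * e2) * v := by ring
          _ = D0 * u + D1 * v := by rw [← he1, ← he2]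
          _ = DG * 1 := by rw [← hbez]; ring
      exact mul_left_cancel₀ hDG0 h
    refine ⟨combo (u * e1) (v * e2) W0 W1, combo (-1) 1 W0 W1, DG, e1 * D1,
      Dvd.dvd.mul_left hd1 e1, ?_, ?_⟩
    · intro x
      obtain ⟨I, J, hx⟩ := hspan x
      refine ⟨I + J, -(v * e2) * I + (u * e1) * J, ?_⟩
      rw [hx]
      have hc1 : (I + J) * (u * e1) + (-(v * e2) * I + (u * e1) * J) * (-1) = I := by
        linear_combination I * hkey
      have hc2 : (I + J) * (v * e2) + (-(v * e2) * I + (u * e1) * J) * 1 = J := by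
        linear_combination J * hkey
      simp only [combo]
      apply Prod.ext <;> dsimp
      · linear_combination (-(W0.1)) * hc1 - W1.1 * hc2
      · linear_combination (-(W0.2)) * hc1 - W1.2 * hc2
    · intro i j
      have hcombo : combo i j (combo (u * e1) (v * e2) W0 W1) (combo (-1) 1 W0 W1) =
          combo (i * (u * e1) - j) (i * (v * e2) + j) W0 W1 := by
        simp only [combo]
        ext <;> dsimp <;> ring
      rw [hcombo, hchar]
      have hi' : i = (i * (u * e1) - j) + (i * (v * e2) + j) := by
        linear_combination i * hkey.symm
      have hj' : j = -(v * e2) * (i * (u * e1) - j) + (u * e1) * (i * (v * e2) + j) := by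
        linear_combination j * hkey.symm
      constructor
      · rintro ⟨hI, hJ⟩
        constructor
        · rw [hi']
          exact dvd_add (dvd_trans hd0 hI) (dvd_trans hd1 hJ)
        · obtain ⟨I', hI'⟩ := hI
          obtain ⟨J', hJ'⟩ := hJ
          refine ⟨-v * I' + u * J', ?_⟩
          rw [hj', hI', hJ']
          calc -(v * e2) * (D0 * I') + (u * e1) * (D1 * J')
              = -(v * I') * (e2 * D0) + (u * J') * (e1 * D1) := by ring
            _ = -(v * I') * (e1 * D1) + (u * J') * (e1 * D1) := by
                rw [show e2 * D0 = e1 * D1 by rw [he1, he2]; ring]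
            _ = e1 * D1 * (-v * I' + u * J') := by ring
      · rintro ⟨⟨i', hi''⟩, ⟨j', hj''⟩⟩
        constructor
        · refine ⟨u * i' - e2 * j', ?_⟩
          rw [hi'', hj'', he1, he2]
          ring
        · refine ⟨v * i' + e1 * j', ?_⟩
          rw [hi'', hj'', he2]
          ring

section Core

theorem commutator_eq_one {G : Type*} [Group G] (hE : IsEGroup G) (a b : G)
    (hgen : Subgroup.closure {a, b} = ⊤) : ⁅a, b⁆ = 1 := by
  have h1 : Commute ⁅a, b⁆ a := comm_commutator_left hE a b
  have h2 : Commute ⁅a, b⁆ b := comm_commutator_right hE a b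
  set c := ⁅a, b⁆ with hc
  have hba : b * a = a * b * c⁻¹ := ba_eq a b c h1 h2 hc
  have hcent : ∀ g : G, Commute c g := fun g => commutator_central hgen h1 h2 g
  set Φ := Phi a b c hba h1 h2 with hPhi
  set N : Submodule ℤ (ℤ × ℤ) :=
    { carrier := {x : ℤ × ℤ | ∃ k : ℤ, Φ ⟨x.1, x.2, k⟩ = 1}
      add_mem' := by
        rintro x y ⟨k, hk⟩ ⟨k', hk'⟩
        refine ⟨k + k' - x.2 * y.1, ?_⟩
        have h := map_mul Φ ⟨x.1, x.2, k⟩ ⟨y.1, y.2, k'⟩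
        rw [hk, hk', mul_one] at h
        rw [Hei.mul_def] at h
        exact h
      zero_mem' := ⟨0, by
        rw [show (⟨(0 : ℤ × ℤ).1, (0 : ℤ × ℤ).2, (0:ℤ)⟩ : Hei) = 1 from rfl, map_one]⟩
      smul_mem' := by
        rintro n x ⟨k, hk⟩
        refine ⟨n * k - x.1 * x.2 * Hei.T n, ?_⟩
        have h := map_zpow Φ (⟨x.1, x.2, k⟩ : Hei) n
        rw [hk, one_zpow, Hei.zpow_mk] at h
        have hx1 : (n • x).1 = n * x.1 := rfl
        have hx2 : (n • x).2 = n * x.2 := rfl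
        rw [hx1, hx2]
        exact h } with hN
  obtain ⟨W0, W1, D0, D1, hdvd, hspan, hchar⟩ := submodule_struct N
  set A2 := Φ ⟨W0.1, W0.2, 0⟩ with hA2
  set B2 := Φ ⟨W1.1, W1.2, 0⟩ with hB2
  set dt := W0.1 * W1.2 - W0.2 * W1.1 with hdt
  have hC2c : ⁅A2, B2⁆ = c ^ dt := Phi_commutator hba h1 h2 _ _
  set C2 := ⁅A2, B2⁆ with hC2def
  -- determinant is a unit
  obtain ⟨x0, y0, hxy0⟩ := hspan (1, 0)
  obtain ⟨z0, w0, hzw0⟩ := hspan (0, 1)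
  have E1 : (1:ℤ) = x0 * W0.1 + y0 * W1.1 := congrArg Prod.fst hxy0
  have E2 : (0:ℤ) = x0 * W0.2 + y0 * W1.2 := congrArg Prod.snd hxy0
  have E3 : (0:ℤ) = z0 * W0.1 + w0 * W1.1 := congrArg Prod.fst hzw0
  have E4 : (1:ℤ) = z0 * W0.2 + w0 * W1.2 := congrArg Prod.snd hzw0
  have hdetu : (x0 * w0 - y0 * z0) * dt = 1 := by
    have hh : (x0 * w0 - y0 * z0) * dt =
        (x0 * W0.1 + y0 * W1.1) * (z0 * W0.2 + w0 * W1.2) -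
          (x0 * W0.2 + y0 * W1.2) * (z0 * W0.1 + w0 * W1.1) := by
      rw [hdt]; ring
    rw [hh, ← E1, ← E2, ← E3, ← E4]; ring
  have hdt1 : dt = 1 ∨ dt = -1 :=
    Int.isUnit_iff.mp (IsUnit.of_mul_eq_one (a := dt) _ (by rw [mul_comm]; exact hdetu))
  have hdtsq : dt * dt = 1 := by rcases hdt1 with h | h <;> rw [h] <;> norm_num
  have hcC2 : c = C2 ^ dt := by
    rw [hC2c, ← zpow_mul, hdtsq, zpow_one]
  suffices hgoal : C2 = 1 by rw [hcC2, hgoal, one_zpow]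
  have hcent2 : ∀ g : G, Commute C2 g := fun g => by
    rw [hC2c]; exact (hcent g).zpow_left dt
  have hba2 : B2 * A2 = A2 * B2 * C2⁻¹ := ba_eq A2 B2 C2 (hcent2 A2) (hcent2 B2) hC2def
  set Φ₂ := Phi A2 B2 C2 hba2 (hcent2 A2) (hcent2 B2) with hPhi2
  have hmk2 : ∀ i j k : ℤ, Φ₂ ⟨i, j, k⟩ = A2 ^ i * B2 ^ j * C2 ^ k :=
    fun i j k => Phi_mk hba2 (hcent2 A2) (hcent2 B2) i j k
  have PhiC2 : ∀ p q : Hei, ⁅Φ₂ p, Φ₂ q⁆ = C2 ^ (p.i * q.j - p.j * q.i) :=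
    fun p q => Phi_commutator hba2 (hcent2 A2) (hcent2 B2) p q
  have hA2eq : A2 = Φ₂ ⟨1, 0, 0⟩ := (Phi_a hba2 (hcent2 A2) (hcent2 B2)).symm
  have hB2eq : B2 = Φ₂ ⟨0, 1, 0⟩ := (Phi_b hba2 (hcent2 A2) (hcent2 B2)).symm
  have hA2pow : ∀ s : ℤ, A2 ^ s = Φ₂ ⟨s, 0, 0⟩ :=
    fun s => Phi_apow hba2 (hcent2 A2) (hcent2 B2) s
  have hB2pow : ∀ s : ℤ, B2 ^ s = Φ₂ ⟨0, s, 0⟩ :=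
    fun s => Phi_bpow hba2 (hcent2 A2) (hcent2 B2) s
  have hABeq : A2 * B2 = Φ₂ ⟨1, 1, 0⟩ := Phi_ab hba2 (hcent2 A2) (hcent2 B2)
  have hmix : ∀ i j k : ℤ, A2 ^ i * B2 ^ j * C2 ^ k =
      Φ ((⟨W0.1, W0.2, 0⟩ : Hei) ^ i * (⟨W1.1, W1.2, 0⟩ : Hei) ^ j * ⟨0, 0, dt * k⟩) := by
    intro i j k
    have hck : Φ (⟨0, 0, dt * k⟩ : Hei) = C2 ^ k := by
      have h := Phi_c (a := a) (b := b) (c := c) hba h1 h2 (dt * k)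
      rw [h, zpow_mul, ← hC2c]
    rw [map_mul, map_mul, map_zpow, map_zpow, hck, ← hA2, ← hB2]
  have hmix2 : ∀ i j k : ℤ, ∃ kk : ℤ, A2 ^ i * B2 ^ j * C2 ^ k =
      Φ ⟨(combo i j W0 W1).1, (combo i j W0 W1).2, kk⟩ := by
    intro i j k
    refine ⟨((⟨W0.1, W0.2, 0⟩ : Hei) ^ i * (⟨W1.1, W1.2, 0⟩ : Hei) ^ j * ⟨0, 0, dt * k⟩).k, ?_⟩
    rw [hmix i j k]
    congr 1
    refine Hei.ext ?_ ?_ rfl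
    · simp [Hei.zpow_mk, Hei.mul_def, combo]
    · simp [Hei.zpow_mk, Hei.mul_def, combo]
  have hcharf : ∀ i j : ℤ, (∃ k : ℤ, A2 ^ i * B2 ^ j * C2 ^ k = 1) → D0 ∣ i ∧ D1 ∣ j := by
    rintro i j ⟨k, hk⟩
    obtain ⟨kk, hkk⟩ := hmix2 i j k
    exact (hchar i j).mp ⟨kk, by rw [← hkk]; exact hk⟩
  have hrev : ∀ i j : ℤ, D0 ∣ i → D1 ∣ j → ∃ k : ℤ, A2 ^ i * B2 ^ j * C2 ^ k = 1 := by
    intro i j hi hj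
    obtain ⟨k₀, h₀⟩ := (hchar i j).mpr ⟨hi, hj⟩
    obtain ⟨kk, hkk⟩ := hmix2 i j 0
    have h₁ : Φ ⟨(combo i j W0 W1).1, (combo i j W0 W1).2, kk⟩ = c ^ (kk - k₀) :=
      Phi_cancel hba h1 h2 _ _ k₀ kk h₀
    have hAB : A2 ^ i * B2 ^ j = c ^ (kk - k₀) := by
      have := hkk.trans h₁
      rwa [zpow_zero, mul_one] at this
    refine ⟨-(dt * (kk - k₀)), ?_⟩
    rw [hAB, hcC2, ← zpow_mul, ← zpow_add]
    norm_num
  obtain ⟨al, hal⟩ : ∃ t : ℤ, A2 ^ D0 = C2 ^ t := by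
    obtain ⟨k, hk⟩ := hrev D0 0 dvd_rfl (dvd_zero _)
    rw [zpow_zero, mul_one] at hk
    exact ⟨-k, by rw [zpow_neg]; exact eq_inv_of_mul_eq_one_left hk⟩
  obtain ⟨be, hbe⟩ : ∃ t : ℤ, B2 ^ D1 = C2 ^ t := by
    obtain ⟨k, hk⟩ := hrev 0 D1 (dvd_zero _) dvd_rfl
    rw [zpow_zero, one_mul] at hk
    exact ⟨-k, by rw [zpow_neg]; exact eq_inv_of_mul_eq_one_left hk⟩
  -- new generators generate
  have hsub : Subgroup.closure {a, b} ≤ Subgroup.closure {A2, B2} := by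
    have hA2m : A2 ∈ Subgroup.closure {A2, B2} :=
      Subgroup.subset_closure (Set.mem_insert _ _)
    have hB2m : B2 ∈ Subgroup.closure {A2, B2} :=
      Subgroup.subset_closure (Set.mem_insert_of_mem _ rfl)
    have hC2m : C2 ∈ Subgroup.closure {A2, B2} := by
      rw [hC2def, commutatorElement_def]
      exact mul_mem (mul_mem (mul_mem hA2m hB2m) (inv_mem hA2m)) (inv_mem hB2m)
    have hcm : c ∈ Subgroup.closure {A2, B2} := by
      rw [hcC2]; exact zpow_mem hC2m dt
    rw [Subgroup.closure_le]
    rintro x (rfl | hx)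
    · obtain ⟨kk, hkk⟩ := hmix2 x0 y0 0
      rw [← hxy0] at hkk
      have ha' : Φ ⟨((1:ℤ), (0:ℤ)).1, ((1:ℤ), (0:ℤ)).2, kk⟩ = x * c ^ kk := by
        have h := Phi_mk (a := x) (b := b) (c := c) hba h1 h2 1 0 kk
        rw [h]; simp
      have hxx : x = A2 ^ x0 * B2 ^ y0 * C2 ^ (0:ℤ) * (c ^ kk)⁻¹ := by
        rw [hkk, ha']; group
      rw [hxx]
      exact mul_mem (mul_mem (mul_mem (zpow_mem hA2m x0) (zpow_mem hB2m y0))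
        (zpow_mem hC2m 0)) (inv_mem (zpow_mem hcm kk))
    · rw [Set.mem_singleton_iff] at hx
      subst hx
      obtain ⟨kk, hkk⟩ := hmix2 z0 w0 0
      rw [← hzw0] at hkk
      have hb' : Φ ⟨((0:ℤ), (1:ℤ)).1, ((0:ℤ), (1:ℤ)).2, kk⟩ = x * c ^ kk := by
        have h := Phi_mk (a := a) (b := x) (c := c) hba h1 h2 0 1 kk
        rw [h]; simp
      have hxx : x = A2 ^ z0 * B2 ^ w0 * C2 ^ (0:ℤ) * (c ^ kk)⁻¹ := by
        rw [hkk, hb']; group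
      rw [hxx]
      exact mul_mem (mul_mem (mul_mem (zpow_mem hA2m z0) (zpow_mem hB2m w0))
        (zpow_mem hC2m 0)) (inv_mem (zpow_mem hcm kk))
  have hgen2 : Subgroup.closure {A2, B2} = ⊤ :=
    eq_top_iff.mpr (le_trans (le_of_eq hgen.symm) hsub)
  have hEviol : ∀ u v : G, (∃ φ : G →* G, φ A2 = u ∧ φ B2 = v) →
      ⁅A2, u⁆ = 1 ∧ ⁅B2, v⁆ = 1 := by
    rintro u v ⟨φ, hu, hv⟩
    constructor
    · exact commutatorElement_eq_one_iff_commute.mpr (by rw [← hu]; exact hE φ A2)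
    · exact commutatorElement_eq_one_iff_commute.mpr (by rw [← hv]; exact hE φ B2)
  by_contra hne
  set m := orderOf C2 with hm
  have hm1 : m ≠ 1 := fun h => hne (orderOf_eq_one_iff.mp h)
  have hmdvd : ∀ k : ℤ, C2 ^ k = 1 ↔ ((m:ℤ) ∣ k) := fun k =>
    orderOf_dvd_iff_zpow_eq_one.symm
  by_cases hD1 : D1 = 0
  · -- Case P1 : endomorphism a ↦ 1, b ↦ A2
    obtain ⟨φ, hφ1, hφ2⟩ := exists_endo hba2 (hcent2 A2) (hcent2 B2) hgen2 D0 D1 al be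
      hcharf hal hbe 1 A2
      (by rw [commutatorElement_one_left])
      (by rw [commutatorElement_one_left]; exact Commute.one_left _)
      (by rw [commutatorElement_one_left, one_zpow, one_zpow])
      (by rw [hD1, zpow_zero, commutatorElement_one_left, one_zpow])
      (fun k _ => by rw [commutatorElement_one_left, one_zpow])
    have hviol := (hEviol 1 A2 ⟨φ, hφ1, hφ2⟩).2
    have h := PhiC2 ⟨0, 1, 0⟩ ⟨1, 0, 0⟩
    rw [← hB2eq, ← hA2eq] at h
    have h8 : C2 ^ ((0:ℤ) * 0 - 1 * 1) = 1 := h.symm.trans hviol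
    rw [show ((0:ℤ) * 0 - 1 * 1) = -1 by norm_num, zpow_neg, zpow_one, inv_eq_one] at h8
    exact hne h8
  by_cases hD0 : D0 = 0
  · -- Case P2 : endomorphism a ↦ B2, b ↦ 1
    obtain ⟨φ, hφ1, hφ2⟩ := exists_endo hba2 (hcent2 A2) (hcent2 B2) hgen2 D0 D1 al be
      hcharf hal hbe B2 1
      (by rw [commutatorElement_one_right]; exact Commute.one_left _)
      (by rw [commutatorElement_one_right])
      (by rw [hD0, zpow_zero, commutatorElement_one_right, one_zpow])
      (by rw [one_zpow, commutatorElement_one_right, one_zpow])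
      (fun k _ => by rw [commutatorElement_one_right, one_zpow])
    have hviol := (hEviol B2 1 ⟨φ, hφ1, hφ2⟩).1
    exact hne (hC2def.trans hviol)
  -- Case P3 : D0 ≠ 0 and D1 ≠ 0
  set e := D1 / D0 with he_def
  have he : D1 = D0 * e := (Int.mul_ediv_cancel' hdvd).symm
  have hCD0 : C2 ^ D0 = 1 := by
    have h := PhiC2 ⟨D0, 0, 0⟩ ⟨0, 1, 0⟩
    rw [← hA2pow D0, ← hB2eq, hal] at h
    have hcomm : ⁅C2 ^ al, B2⁆ = 1 :=
      commutatorElement_eq_one_iff_commute.mpr ((hcent2 B2).zpow_left al)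
    rw [hcomm] at h
    have h9 := h.symm
    rwa [show D0 * 1 - 0 * 0 = D0 by ring] at h9
  have hmD0 : ((m:ℤ)) ∣ D0 := (hmdvd D0).mp hCD0
  have hm0 : m ≠ 0 := by
    rintro h0
    rw [h0] at hmD0
    exact hD0 (by exact_mod_cast zero_dvd_iff.mp hmD0)
  have hm2 : (2:ℤ) ≤ (m:ℤ) := by exact_mod_cast (by omega : 2 ≤ m)
  set g2 := Int.gcd ((m:ℤ)) (al * e) with hg2def
  have hg2m : ((g2:ℕ):ℤ) ∣ ((m:ℤ)) := Int.gcd_dvd_left _ _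
  have hg2a : ((g2:ℕ):ℤ) ∣ al * e := Int.gcd_dvd_right _ _
  by_cases hg2 : g2 = 1
  case neg =>
    have hg20 : g2 ≠ 0 := by
      rintro h0
      rw [h0] at hg2m
      have : ((m:ℤ)) = 0 := by exact_mod_cast zero_dvd_iff.mp (by exact_mod_cast hg2m)
      exact hm0 (by exact_mod_cast this)
    have hg22 : (2:ℤ) ≤ (g2:ℤ) := by exact_mod_cast (by omega : 2 ≤ g2)
    set s := ((m:ℤ)) / ((g2:ℕ):ℤ) with hs_def
    have hs : ((m:ℤ)) = (g2:ℤ) * s := (Int.mul_ediv_cancel' hg2m).symm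
    have hspos : 0 < s := by nlinarith
    have hslt : s < ((m:ℤ)) := by nlinarith
    obtain ⟨φ, hφ1, hφ2⟩ := exists_endo hba2 (hcent2 A2) (hcent2 B2) hgen2 D0 D1 al be
      hcharf hal hbe 1 (A2 ^ s)
      (by rw [commutatorElement_one_left])
      (by rw [commutatorElement_one_left]; exact Commute.one_left _)
      (by rw [commutatorElement_one_left, one_zpow, one_zpow])
      (by
        rw [commutatorElement_one_left, one_zpow, ← zpow_mul,
          show s * D1 = D0 * (s * e) by rw [he]; ring, zpow_mul, hal, ← zpow_mul]
        refine (hmdvd _).mpr ?_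
        obtain ⟨w, hw⟩ := hg2a
        exact ⟨w, by linear_combination s * hw - w * hs⟩)
      (fun k _ => by rw [commutatorElement_one_left, one_zpow])
    have hviol := (hEviol 1 (A2 ^ s) ⟨φ, hφ1, hφ2⟩).2
    have h := PhiC2 ⟨0, 1, 0⟩ ⟨s, 0, 0⟩
    rw [← hB2eq, ← hA2pow s] at h
    have h6 : C2 ^ ((0:ℤ) * 0 - 1 * s) = 1 := h.symm.trans hviol
    rw [show ((0:ℤ) * 0 - 1 * s) = -s by ring] at h6
    have h7 : ((m:ℤ)) ∣ s := dvd_neg.mp ((hmdvd (-s)).mp h6)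
    have := Int.le_of_dvd hspos h7
    linarith
  case pos =>
    have hcop2 : IsCoprime ((m:ℤ)) (al * e) := Int.isCoprime_iff_gcd_eq_one.mpr hg2
    by_cases hbe0 : ((m:ℤ)) ∣ be
    · -- SubB : endomorphism a ↦ B2^e, b ↦ 1
      obtain ⟨φ, hφ1, hφ2⟩ := exists_endo hba2 (hcent2 A2) (hcent2 B2) hgen2 D0 D1 al be
        hcharf hal hbe (B2 ^ e) 1
        (by rw [commutatorElement_one_right]; exact Commute.one_left _)
        (by rw [commutatorElement_one_right])
        (by
          rw [commutatorElement_one_right, one_zpow, ← zpow_mul,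
            show e * D0 = D1 by rw [he]; ring, hbe]
          exact (hmdvd be).mpr hbe0)
        (by rw [one_zpow, commutatorElement_one_right, one_zpow])
        (fun k _ => by rw [commutatorElement_one_right, one_zpow])
      have hviol := (hEviol (B2 ^ e) 1 ⟨φ, hφ1, hφ2⟩).1
      have h := PhiC2 ⟨1, 0, 0⟩ ⟨0, e, 0⟩
      rw [← hA2eq, ← hB2pow e] at h
      have h6 : C2 ^ ((1:ℤ) * e - 0 * 0) = 1 := h.symm.trans hviol
      rw [show ((1:ℤ) * e - 0 * 0) = e by ring] at h6
      have h7 : ((m:ℤ)) ∣ e := (hmdvd e).mp h6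
      have h8 : ((m:ℤ)) ∣ al * e := Dvd.dvd.mul_left h7 al
      have h9 : IsUnit ((m:ℤ)) := hcop2.isUnit_of_dvd' dvd_rfl h8
      rcases Int.isUnit_iff.mp h9 with h | h <;> linarith
    · by_cases hg1 : Int.gcd ((m:ℤ)) be = 1
      · -- SubA : endomorphism a ↦ A2^p, b ↦ A2*B2
        obtain ⟨u0, v0, huv0⟩ := Int.isCoprime_iff_gcd_eq_one.mpr hg1
        set X := al * e + be - Hei.T D1 with hX
        set p := v0 * X with hp
        have huvc : ⁅A2 ^ p, A2 * B2⁆ = C2 ^ p := by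
          have h := PhiC2 ⟨p, 0, 0⟩ ⟨1, 1, 0⟩
          rw [← hA2pow p, ← hABeq] at h
          rw [h, show p * 1 - 0 * 1 = p by ring]
        obtain ⟨φ, hφ1, hφ2⟩ := exists_endo hba2 (hcent2 A2) (hcent2 B2) hgen2 D0 D1 al be
          hcharf hal hbe (A2 ^ p) (A2 * B2)
          (by rw [huvc]; exact (hcent2 _).zpow_left p)
          (by rw [huvc]; exact (hcent2 _).zpow_left p)
          (by
            rw [huvc, ← zpow_mul, ← zpow_mul,
              show p * D0 = D0 * p from mul_comm p D0, zpow_mul, hal, ← zpow_mul,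
              mul_comm al p])
          (by
            have h3 : ((⟨1, 1, 0⟩ : Hei)) ^ D1 = ⟨D1, D1, -(Hei.T D1)⟩ := by
              rw [Hei.zpow_mk]
              refine Hei.ext ?_ ?_ ?_ <;> simp
            calc (A2 * B2) ^ D1 = Φ₂ ((⟨1, 1, 0⟩ : Hei) ^ D1) := by rw [hABeq, map_zpow]
              _ = A2 ^ D1 * B2 ^ D1 * C2 ^ (-(Hei.T D1)) := by rw [h3, hmk2]
              _ = C2 ^ (al * e) * C2 ^ be * C2 ^ (-(Hei.T D1)) := by
                  rw [hbe, he, zpow_mul, hal, ← zpow_mul]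
              _ = C2 ^ X := by
                  rw [← zpow_add, ← zpow_add, show al * e + be + -(Hei.T D1) = X from by
                    rw [hX]; try ring]
              _ = C2 ^ (p * be) * C2 ^ (X - p * be) := by
                  rw [← zpow_add]
                  congr 1
                  ring
              _ = C2 ^ (p * be) := by
                  rw [(hmdvd (X - p * be)).mpr ⟨X * u0, by rw [hp, hX]; linear_combination (-(al * e + be - Hei.T D1)) * huv0⟩, mul_one]
              _ = ⁅A2 ^ p, A2 * B2⁆ ^ be := by
                  rw [huvc, ← zpow_mul])
          (fun k hk => by
            rw [huvc, ← zpow_mul, mul_comm, zpow_mul, hk, one_zpow])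
        have hviol := (hEviol (A2 ^ p) (A2 * B2) ⟨φ, hφ1, hφ2⟩).2
        have h := PhiC2 ⟨0, 1, 0⟩ ⟨1, 1, 0⟩
        rw [← hB2eq, ← hABeq] at h
        have h8 : C2 ^ ((0:ℤ) * 1 - 1 * 1) = 1 := h.symm.trans hviol
        rw [show ((0:ℤ) * 1 - 1 * 1) = -1 by norm_num, zpow_neg, zpow_one, inv_eq_one] at h8
        exact hne h8
      · -- SubC : endomorphism a ↦ B2^(e*t), b ↦ 1
        set g1 := Int.gcd ((m:ℤ)) be with hg1def
        have hg1m : ((g1:ℕ):ℤ) ∣ ((m:ℤ)) := Int.gcd_dvd_left _ _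
        have hg1b : ((g1:ℕ):ℤ) ∣ be := Int.gcd_dvd_right _ _
        have hg10 : g1 ≠ 0 := by
          rintro h0
          rw [h0] at hg1m
          have : ((m:ℤ)) = 0 := by exact_mod_cast zero_dvd_iff.mp (by exact_mod_cast hg1m)
          exact hm0 (by exact_mod_cast this)
        have hg12 : (2:ℤ) ≤ (g1:ℤ) := by exact_mod_cast (by omega : 2 ≤ g1)
        set t := ((m:ℤ)) / ((g1:ℕ):ℤ) with ht_def
        have ht : ((m:ℤ)) = (g1:ℤ) * t := (Int.mul_ediv_cancel' hg1m).symm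
        have htpos : 0 < t := by nlinarith
        have htlt : t < ((m:ℤ)) := by nlinarith
        obtain ⟨φ, hφ1, hφ2⟩ := exists_endo hba2 (hcent2 A2) (hcent2 B2) hgen2 D0 D1 al be
          hcharf hal hbe (B2 ^ (e * t)) 1
          (by rw [commutatorElement_one_right]; exact Commute.one_left _)
          (by rw [commutatorElement_one_right])
          (by
            rw [commutatorElement_one_right, one_zpow, ← zpow_mul,
              show (e * t) * D0 = D1 * t by rw [he]; ring, zpow_mul, hbe, ← zpow_mul]
            refine (hmdvd _).mpr ?_
            obtain ⟨w, hw⟩ := hg1b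
            exact ⟨w, by linear_combination t * hw - w * ht⟩)
          (by rw [one_zpow, commutatorElement_one_right, one_zpow])
          (fun k _ => by rw [commutatorElement_one_right, one_zpow])
        have hviol := (hEviol (B2 ^ (e * t)) 1 ⟨φ, hφ1, hφ2⟩).1
        have h := PhiC2 ⟨1, 0, 0⟩ ⟨0, e * t, 0⟩
        rw [← hA2eq, ← hB2pow (e * t)] at h
        have h6 : C2 ^ ((1:ℤ) * (e * t) - 0 * 0) = 1 := h.symm.trans hviol
        rw [show ((1:ℤ) * (e * t) - 0 * 0) = e * t by ring] at h6
        have h7 : ((m:ℤ)) ∣ e * t := (hmdvd _).mp h6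
        have hcope : IsCoprime ((m:ℤ)) e := IsCoprime.of_mul_right_right hcop2
        have h8 : ((m:ℤ)) ∣ t := hcope.dvd_of_dvd_mul_left h7
        have := Int.le_of_dvd htpos h8
        linarith

end Core

/-- Every group that can be generated by 2 elements and is an `E`-group is
abelian. -/
theorem two_generated_EGroup_comm
    {G : Type*} [Group G] (hgen : ∃ a b : G, Subgroup.closure {a, b} = ⊤)
    (hE : IsEGroup G) : ∀ x y : G, x * y = y * x := by
  obtain ⟨a, b, hab⟩ := hgen
  have hc : ⁅a, b⁆ = 1 := commutator_eq_one hE a b hab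
  have hcomm : Commute a b := commutatorElement_eq_one_iff_commute.mp hc
  have key : ∀ y : G, Commute a y ∧ Commute b y := by
    intro y
    have hy : y ∈ Subgroup.closure {a, b} := hab ▸ Subgroup.mem_top y
    induction hy using Subgroup.closure_induction with
    | mem z hz =>
        rcases hz with rfl | hz
        · exact ⟨Commute.refl _, hcomm.symm⟩
        · rw [Set.mem_singleton_iff] at hz
          subst hz
          exact ⟨hcomm, Commute.refl _⟩
    | one => exact ⟨Commute.one_right _, Commute.one_right _⟩
    | mul z w hz hw ihz ihw => exact ⟨ihz.1.mul_right ihw.1, ihz.2.mul_right ihw.2⟩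
    | inv z hz ihz => exact ⟨ihz.1.inv_right, ihz.2.inv_right⟩
  intro x y
  have hx : x ∈ Subgroup.closure {a, b} := hab ▸ Subgroup.mem_top x
  have hxy : Commute x y := by
    induction hx using Subgroup.closure_induction with
    | mem z hz =>
        rcases hz with rfl | hz
        · exact (key y).1
        · rw [Set.mem_singleton_iff] at hz
          subst hz
          exact (key y).2
    | one => exact Commute.one_left _
    | mul z w hz hw ihz ihw => exact ihz.mul_left ihw
    | inv z hz ihz => exact ihz.inv_left
  exact hxy
end

section
/- Every infinite group that can be generated by 3 elements and is an E-group is abelian. -/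
open Subgroup
open scoped commutatorElement

section Aux

variable {G : Type*} [Group G]


lemma IsEGroup.conj_commute (hE : IsEGroup G) (x g : G) : Commute x (g * x * g⁻¹) := by
  have := hE (MulAut.conj g).toMonoidHom x
  simpa [Commute, SemiconjBy] using this

lemma IsEGroup.conj_conj_commute (hE : IsEGroup G) (a g h : G) :
    Commute (g * a * g⁻¹) (h * a * h⁻¹) := by
  have := hE.conj_commute (g * a * g⁻¹) (h * g⁻¹)
  have e : h * g⁻¹ * (g * a * g⁻¹) * (h * g⁻¹)⁻¹ = h * a * h⁻¹ := by group
  rwa [e] at this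

lemma IsEGroup.normalClosure_isCommutative (hE : IsEGroup G) (a : G) :
    IsMulCommutative (Subgroup.normalClosure {a}) := by
  have hpair : ∀ u ∈ Group.conjugatesOfSet ({a} : Set G),
      ∀ v ∈ Group.conjugatesOfSet ({a} : Set G), Commute u v := by
    rintro u hu v hv
    rw [Group.mem_conjugatesOfSet_iff] at hu hv
    obtain ⟨x, hx, hxu⟩ := hu
    obtain ⟨y, hy, hyv⟩ := hv
    rw [Set.mem_singleton_iff] at hx hy
    subst hx; subst hy
    obtain ⟨g, rfl⟩ := isConj_iff.mp hxu
    obtain ⟨h, rfl⟩ := isConj_iff.mp hyv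
    exact hE.conj_conj_commute _ g h
  constructor
  constructor
  rintro ⟨x, hx⟩ ⟨y, hy⟩
  ext
  show x * y = y * x
  unfold Subgroup.normalClosure at hx hy
  induction hx, hy using Subgroup.closure_induction₂ with
  | mem u v hu hv => exact hpair u hu v hv
  | one_left => simp
  | one_right => simp
  | mul_left u v w hu hv hw h1 h2 => rw [mul_assoc, h2, ← mul_assoc, h1, mul_assoc]
  | mul_right u v w hu hv hw h1 h2 => rw [← mul_assoc, h1, mul_assoc, h2, ← mul_assoc]
  | inv_left u v hu hv h => exact (Commute.inv_left h : _)
  | inv_right u v hu hv h => exact (Commute.inv_right h : _)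

lemma IsEGroup.commutator_normalClosure_eq_bot (hE : IsEGroup G) (a : G) :
    ⁅Subgroup.normalClosure {a}, Subgroup.normalClosure {a}⁆ = ⊥ := by
  rw [Subgroup.commutator_eq_bot_iff_le_centralizer]
  have := hE.normalClosure_isCommutative a
  exact Subgroup.le_centralizer _

open Subgroup

/-- Fitting-type lemma: a group generated by two abelian normal subgroups is
nilpotent of class ≤ 2. -/
lemma nilpClassTwo_of_two_abelian_normal {H : Type*} [Group H] (B C : Subgroup H)
    [B.Normal] [C.Normal] (hB : ⁅B, B⁆ = ⊥) (hC : ⁅C, C⁆ = ⊥)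
    (hBC : B ⊔ C = ⊤) : ⁅(⁅(⊤ : Subgroup H), (⊤ : Subgroup H)⁆ : Subgroup H), (⊤ : Subgroup H)⁆ = ⊥ := by
  set D : Subgroup H := ⁅B, C⁆ with hD
  have hDB : D ≤ B := commutator_le_left B C
  have hDC : D ≤ C := commutator_le_right B C
  -- D is central
  have hDcent : ⁅D, (⊤ : Subgroup H)⁆ = ⊥ := by
    rw [commutator_eq_bot_iff_le_centralizer]
    rw [← le_centralizer_iff]
    rw [← hBC]
    apply sup_le
    · rw [← commutator_eq_bot_iff_le_centralizer]
      exact le_bot_iff.mp ((commutator_mono le_rfl hDB).trans_eq hB)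
    · rw [← commutator_eq_bot_iff_le_centralizer]
      exact le_bot_iff.mp ((commutator_mono le_rfl hDC).trans_eq hC)
  -- pass to the quotient H ⧸ D
  have : D.Normal := inferInstance
  let π : H →* H ⧸ D := QuotientGroup.mk' D
  have hπsurj : Function.Surjective π := QuotientGroup.mk'_surjective D
  have hmaptop : Subgroup.map π ⊤ = ⊤ := Subgroup.map_top_of_surjective π hπsurj
  have hsupbar : Subgroup.map π B ⊔ Subgroup.map π C = ⊤ := by
    rw [← Subgroup.map_sup, hBC, hmaptop]
  have hBbar : Subgroup.map π B ≤ centralizer (Subgroup.map π B) := by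
    rw [← commutator_eq_bot_iff_le_centralizer, ← Subgroup.map_commutator, hB]
    exact Subgroup.map_bot π
  have hCbar : Subgroup.map π C ≤ centralizer (Subgroup.map π C) := by
    rw [← commutator_eq_bot_iff_le_centralizer, ← Subgroup.map_commutator, hC]
    exact Subgroup.map_bot π
  have hBCbar : ⁅Subgroup.map π B, Subgroup.map π C⁆ = ⊥ := by
    rw [← Subgroup.map_commutator, ← hD, Subgroup.map_eq_bot_iff, QuotientGroup.ker_mk']
  have hCBbar : ⁅Subgroup.map π C, Subgroup.map π B⁆ = ⊥ :=
    (Subgroup.commutator_comm _ _).trans hBCbar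
  have hquotcomm : ⁅(⊤ : Subgroup (H ⧸ D)), (⊤ : Subgroup (H ⧸ D))⁆ = (⊥ : Subgroup (H ⧸ D)) := by
    rw [commutator_eq_bot_iff_le_centralizer, ← hsupbar]
    apply sup_le
    · rw [← le_centralizer_iff]  -- centralizer (map B ⊔ map C) contains ...
      apply sup_le
      · exact le_centralizer_iff.mp hBbar
      · exact le_centralizer_iff.mp (commutator_eq_bot_iff_le_centralizer.mp hBCbar)
    · rw [← le_centralizer_iff]
      apply sup_le
      · rw [le_centralizer_iff]
        exact commutator_eq_bot_iff_le_centralizer.mp hCBbar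
      · exact le_centralizer_iff.mp hCbar
  -- therefore ⁅⊤,⊤⁆ ≤ D
  have hcommD : ⁅(⊤ : Subgroup H), ⊤⁆ ≤ D := by
    rw [← QuotientGroup.ker_mk' D, ← Subgroup.map_eq_bot_iff, Subgroup.map_commutator,
      hmaptop]
    exact hquotcomm
  exact le_bot_iff.mp ((commutator_mono hcommD le_rfl).trans_eq hDcent)

-- γ₂, γ₃ notations

local notation "γ₂" => (⁅(⊤ : Subgroup G), (⊤ : Subgroup G)⁆ : Subgroup G)
local notation "γ₃" => (⁅(⁅(⊤ : Subgroup G), (⊤ : Subgroup G)⁆ : Subgroup G), (⊤ : Subgroup G)⁆ : Subgroup G)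

-- main: if G is generated by three normal-closure-abelian subgroups A,B,C, then γ₃ ≤ A
lemma gamma3_le_of_sup_eq_top {A B C : Subgroup G} [A.Normal] [B.Normal] [C.Normal]
    (hA : ⁅A, A⁆ = ⊥) (hB : ⁅B, B⁆ = ⊥) (hC : ⁅C, C⁆ = ⊥)
    (hsup : A ⊔ B ⊔ C = ⊤) : γ₃ ≤ A := by
  let π : G →* G ⧸ A := QuotientGroup.mk' A
  have hπsurj : Function.Surjective π := QuotientGroup.mk'_surjective A
  have hmaptop : Subgroup.map π ⊤ = ⊤ := Subgroup.map_top_of_surjective π hπsurj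
  haveI : (Subgroup.map π B).Normal := Subgroup.Normal.map ‹B.Normal› π hπsurj
  haveI : (Subgroup.map π C).Normal := Subgroup.Normal.map ‹C.Normal› π hπsurj
  have hBbar : ⁅Subgroup.map π B, Subgroup.map π B⁆ = ⊥ := by
    rw [← Subgroup.map_commutator, hB]; exact Subgroup.map_bot π
  have hCbar : ⁅Subgroup.map π C, Subgroup.map π C⁆ = ⊥ := by
    rw [← Subgroup.map_commutator, hC]; exact Subgroup.map_bot π
  have hAbar : Subgroup.map π A = ⊥ := by
    rw [Subgroup.map_eq_bot_iff, QuotientGroup.ker_mk']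
  have hsupbar : Subgroup.map π B ⊔ Subgroup.map π C = ⊤ := by
    have := congrArg (Subgroup.map π) hsup
    rw [Subgroup.map_sup, Subgroup.map_sup, hAbar, bot_sup_eq, hmaptop] at this
    exact this
  have hq := nilpClassTwo_of_two_abelian_normal (Subgroup.map π B) (Subgroup.map π C)
    hBbar hCbar hsupbar
  rw [← QuotientGroup.ker_mk' A, ← Subgroup.map_eq_bot_iff, Subgroup.map_commutator,
    Subgroup.map_commutator, hmaptop]
  exact hq

lemma gamma4_eq_bot {A B C : Subgroup G} [A.Normal] [B.Normal] [C.Normal]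
    (hA : ⁅A, A⁆ = ⊥) (hB : ⁅B, B⁆ = ⊥) (hC : ⁅C, C⁆ = ⊥)
    (hsup : A ⊔ B ⊔ C = ⊤) : ⁅(γ₃ : Subgroup G), (⊤ : Subgroup G)⁆ = ⊥ := by
  have h3A : γ₃ ≤ A := gamma3_le_of_sup_eq_top hA hB hC hsup
  have h3B : γ₃ ≤ B := by
    apply gamma3_le_of_sup_eq_top hB hA hC
    rw [← hsup]; ac_rfl
  have h3C : γ₃ ≤ C := by
    apply gamma3_le_of_sup_eq_top hC hA hB
    rw [← hsup]; ac_rfl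
  have cA : (⁅(γ₃ : Subgroup G), A⁆ : Subgroup G) = ⊥ :=
    le_bot_iff.mp ((commutator_mono h3A le_rfl).trans (le_of_eq hA))
  have cB : (⁅(γ₃ : Subgroup G), B⁆ : Subgroup G) = ⊥ :=
    le_bot_iff.mp ((commutator_mono h3B le_rfl).trans (le_of_eq hB))
  have cC : (⁅(γ₃ : Subgroup G), C⁆ : Subgroup G) = ⊥ :=
    le_bot_iff.mp ((commutator_mono h3C le_rfl).trans (le_of_eq hC))
  have hAc : A ≤ centralizer γ₃ :=
    le_centralizer_iff.mp (commutator_eq_bot_iff_le_centralizer.mp cA)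
  have hBc : B ≤ centralizer γ₃ :=
    le_centralizer_iff.mp (commutator_eq_bot_iff_le_centralizer.mp cB)
  have hCc : C ≤ centralizer γ₃ :=
    le_centralizer_iff.mp (commutator_eq_bot_iff_le_centralizer.mp cC)
  have htop : (⊤ : Subgroup G) ≤ centralizer γ₃ := by
    have := sup_le (sup_le hAc hBc) hCc
    rwa [hsup] at this
  exact commutator_eq_bot_iff_le_centralizer.mpr (le_centralizer_iff.mp htop)

open Subgroup



/-- If there is a homomorphism to `ℤ` hitting `1`, then an E-group is abelian. -/
lemma comm_of_hom_int (hE : IsEGroup G) (π : G →* Multiplicative ℤ)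
    (hs : ∃ x : G, π x = Multiplicative.ofAdd 1) (x y : G) : x * y = y * x := by
  have hcent : ∀ z : G, π z = Multiplicative.ofAdd 1 → z ∈ Subgroup.center G := by
    intro z hz
    rw [Subgroup.mem_center_iff]
    intro g
    have := hE ((zpowersHom G g).comp π) z
    simp only [MonoidHom.comp_apply, hz, zpowersHom_apply, toAdd_ofAdd,
      zpow_one] at this
    exact this.symm
  obtain ⟨x0, hx0⟩ := hs
  have hx0c : x0 ∈ Subgroup.center G := hcent x0 hx0
  have hall : ∀ z : G, z ∈ Subgroup.center G := by
    intro z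
    set m : ℤ := Multiplicative.toAdd (π z) with hm
    have h1 : π (z * x0 ^ (1 - m)) = Multiplicative.ofAdd 1 := by
      rw [map_mul, map_zpow, hx0]
      rw [← ofAdd_zsmul]
      rw [show π z = Multiplicative.ofAdd m by rw [hm]; simp]
      rw [← ofAdd_add]
      norm_num
    have h2 : z * x0 ^ (1 - m) ∈ Subgroup.center G := hcent _ h1
    have h3 : x0 ^ (1 - m) ∈ Subgroup.center G := zpow_mem hx0c _
    have : z = (z * x0 ^ (1 - m)) * (x0 ^ (1 - m))⁻¹ := by group
    rw [this]
    exact mul_mem h2 (inv_mem h3)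
  exact (Subgroup.mem_center_iff.mp (hall y)) x

/-- A finitely generated infinite commutative group admits a hom onto ℤ hitting 1. -/
lemma exists_hom_int (H : Type*) [CommGroup H] [Group.FG H] [Infinite H] :
    ∃ π : H →* Multiplicative ℤ, ∃ x : H, π x = Multiplicative.ofAdd 1 := by
  haveI : AddGroup.FG (Additive H) := AddGroup.fg_iff_mul_fg.mpr ‹_›
  obtain ⟨n, ι, hι, p, hp, e, ⟨f⟩⟩ := AddCommGroup.equiv_free_prod_directSum_zmod (Additive H)
  haveI : ∀ i : ι, NeZero (p i ^ e i) := fun i => ⟨pow_ne_zero _ (hp i).pos.ne'⟩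
  have hn : n ≠ 0 := by
    rintro rfl
    haveI : Finite (Fin 0 →₀ ℤ) := by
      apply Finite.of_equiv PUnit
      exact (Equiv.equivPUnit (Fin 0 →₀ ℤ)).symm
    haveI : Finite (DirectSum ι fun i => ZMod (p i ^ e i)) := by
      haveI : ∀ i : ι, Finite (ZMod (p i ^ e i)) := fun i => inferInstance
      exact Finite.of_equiv (∀ i : ι, ZMod (p i ^ e i))
        (DFinsupp.equivFunOnFintype (ι := ι)).symm
    haveI : Finite (Additive H) := Finite.of_equiv _ f.symm.toEquiv
    exact not_finite (Additive H)
  let i0 : Fin n := ⟨0, Nat.pos_of_ne_zero hn⟩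
  let g : Additive H →+ ℤ :=
    (Finsupp.applyAddHom i0).comp ((AddMonoidHom.fst _ _).comp f.toAddMonoidHom)
  refine ⟨AddMonoidHom.toMultiplicativeRight g, ?_⟩
  refine ⟨Additive.toMul (f.symm (Finsupp.single i0 1, 0)), ?_⟩
  have : g (f.symm (Finsupp.single i0 1, 0)) = 1 := by
    simp [g, Finsupp.applyAddHom]
  simp only [AddMonoidHom.coe_toMultiplicativeRight, Function.comp_apply]
  rw [show Additive.ofMul (Additive.toMul (f.symm (Finsupp.single i0 1, 0)))
      = f.symm (Finsupp.single i0 1, 0) from rfl, this]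

lemma comm_mul_expand (u z w : G) : ⁅u, z * w⁆ = ⁅u, z⁆ * (z * ⁅u, w⁆ * z⁻¹) := by
  simp only [commutatorElement_def]
  group

lemma finite_of_finite_abelianization
    (h4 : (⁅(γ₃ : Subgroup G), (⊤ : Subgroup G)⁆ : Subgroup G) = ⊥)
    [Group.FG G] [Finite (Abelianization G)] : Finite G := by
  -- γ₂ is commutative (three subgroups lemma)
  have h1 : (⁅(⁅(⊤ : Subgroup G), γ₂⁆ : Subgroup G), (⊤ : Subgroup G)⁆ : Subgroup G) = ⊥ := by
    rw [Subgroup.commutator_comm (⊤ : Subgroup G) γ₂]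
    exact h4
  have h22 : (⁅(γ₂ : Subgroup G), (γ₂ : Subgroup G)⁆ : Subgroup G) = ⊥ :=
    Subgroup.commutator_commutator_eq_bot_of_rotate h1 h4
  haveI hcommutative : IsMulCommutative (commutator G) :=
    le_centralizer_iff_isMulCommutative.mp (commutator_eq_bot_iff_le_centralizer.mp h22)
  -- γ₃ is central
  have hcent : ∀ t : G, t ∈ γ₃ → ∀ g : G, g * t = t * g := by
    intro t ht g
    have h := commutator_eq_bot_iff_le_centralizer.mp h4 ht
    exact Subgroup.mem_centralizer_iff.mp h g (by simp)
  set n := Nat.card (Abelianization G) with hn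
  have hnpos : 0 < n := Nat.card_pos
  have hpow : ∀ x : G, x ^ n ∈ commutator G := by
    intro x
    have h := pow_card_eq_one' (G := Abelianization G) (x := Abelianization.of x)
    rw [← map_pow] at h
    exact (QuotientGroup.eq_one_iff _).mp h
  -- step 1 : commutators of γ₂-elements with anything are killed by n
  have step1 : ∀ u z : G, u ∈ commutator G → ⁅u, z⁆ ^ n = 1 := by
    intro u z hu
    have hmul : ∀ z w : G, ⁅u, z * w⁆ = ⁅u, z⁆ * ⁅u, w⁆ := by
      intro z w
      rw [comm_mul_expand]
      congr 1
      have h3 : ⁅u, w⁆ ∈ γ₃ := Subgroup.commutator_mem_commutator hu (Subgroup.mem_top w)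
      rw [hcent _ h3 z]
      group
    let φ : G →* G := MonoidHom.mk' (fun z => ⁅u, z⁆) hmul
    have h := map_pow φ z n
    have hz : φ (z ^ n) = 1 := by
      show ⁅u, z ^ n⁆ = 1
      exact commutatorElement_eq_one_iff_commute.mpr
        (Subgroup.mul_comm_of_mem_isMulCommutative (H := commutator G) hu (hpow z))
    rw [hz] at h
    exact h.symm
  -- step 2 : ⁅x,y⁆ ^ n ∈ γ₃ for all x y
  have step2 : ∀ x y : G, ⁅x, y⁆ ^ n ∈ γ₃ := by
    intro x y
    haveI : (γ₃ : Subgroup G).Normal := inferInstance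
    let ψ : G →* G ⧸ (γ₃ : Subgroup G) := MonoidHom.mk'
      (fun z => QuotientGroup.mk ⁅x, z⁆) (by
        intro z w
        rw [comm_mul_expand, QuotientGroup.mk_mul]
        congr 1
        rw [QuotientGroup.eq]
        have : (z * ⁅x, w⁆ * z⁻¹)⁻¹ * ⁅x, w⁆ = ⁅z, ⁅x, w⁆⁻¹⁆ := by group
        rw [this]
        have hmem : ⁅x, w⁆⁻¹ ∈ γ₂ :=
          Subgroup.inv_mem _ (Subgroup.commutator_mem_commutator (mem_top x) (mem_top w))
        have : ⁅z, ⁅x, w⁆⁻¹⁆ ∈ (⁅(⊤ : Subgroup G), γ₂⁆ : Subgroup G) :=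
          Subgroup.commutator_mem_commutator (mem_top z) hmem
        rwa [Subgroup.commutator_comm (⊤ : Subgroup G) γ₂] at this)
    have h := map_pow ψ y n
    have hy : ψ (y ^ n) = 1 := by
      show (QuotientGroup.mk ⁅x, y ^ n⁆ : G ⧸ (γ₃ : Subgroup G)) = 1
      rw [QuotientGroup.eq_one_iff]
      have : ⁅x, y ^ n⁆ ∈ (⁅(⊤ : Subgroup G), γ₂⁆ : Subgroup G) :=
        Subgroup.commutator_mem_commutator (mem_top x) (hpow y)
      rwa [Subgroup.commutator_comm (⊤ : Subgroup G) γ₂] at this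
    rw [hy] at h
    have hxy : (QuotientGroup.mk ⁅x, y⁆ : G ⧸ (γ₃ : Subgroup G)) ^ n = 1 := h.symm
    rw [← QuotientGroup.mk_pow] at hxy
    exact (QuotientGroup.eq_one_iff _).mp hxy
  -- every element of γ₃ has finite order
  have torsion3 : ∀ t : G, t ∈ γ₃ → t ∈ commutator G ∧ IsOfFinOrder t := by
    intro t ht
    rw [Subgroup.commutator_def] at ht
    induction ht using Subgroup.closure_induction with
    | mem g hg =>
      obtain ⟨g₁, hg₁, g₂, _, rfl⟩ := hg
      constructor
      · exact Subgroup.commutator_mem_commutator (mem_top g₁) (mem_top g₂)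
      · exact isOfFinOrder_iff_pow_eq_one.mpr ⟨n, hnpos, step1 g₁ g₂ hg₁⟩
    | one => exact ⟨Subgroup.one_mem _, IsOfFinOrder.one⟩
    | mul x y hx hy ihx ihy =>
      refine ⟨Subgroup.mul_mem _ ihx.1 ihy.1, ?_⟩
      have hcomm : Commute x y :=
        Subgroup.mul_comm_of_mem_isMulCommutative (H := commutator G) ihx.1 ihy.1
      exact hcomm.isOfFinOrder_mul ihx.2 ihy.2
    | inv x hx ihx => exact ⟨Subgroup.inv_mem _ ihx.1, ihx.2.inv⟩
  -- every element of γ₂ has finite order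
  have torsion2 : ∀ t : G, t ∈ commutator G → IsOfFinOrder t := by
    intro t ht
    rw [commutator_eq_closure] at ht
    have H : t ∈ commutator G ∧ IsOfFinOrder t := by
      induction ht using Subgroup.closure_induction with
      | mem g hg =>
        obtain ⟨g₁, g₂, rfl⟩ := hg
        constructor
        · exact Subgroup.commutator_mem_commutator (mem_top g₁) (mem_top g₂)
        · have h3 := (torsion3 _ (step2 g₁ g₂)).2
          exact h3.of_pow hnpos.ne'
      | one => exact ⟨Subgroup.one_mem _, IsOfFinOrder.one⟩
      | mul x y hx hy ihx ihy =>
        refine ⟨Subgroup.mul_mem _ ihx.1 ihy.1, ?_⟩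
        have hcomm : Commute x y :=
          Subgroup.mul_comm_of_mem_isMulCommutative (H := commutator G) ihx.1 ihy.1
        exact hcomm.isOfFinOrder_mul ihx.2 ihy.2
      | inv x hx ihx => exact ⟨Subgroup.inv_mem _ ihx.1, ihx.2.inv⟩
    exact H.2
  -- now conclude finiteness
  haveI : Finite (G ⧸ commutator G) := ‹Finite (Abelianization G)›
  haveI : (commutator G).FiniteIndex := Subgroup.finiteIndex_of_finite_quotient
  haveI : Group.FG (commutator G) := Subgroup.fg_of_index_ne_zero _
  have htor : Monoid.IsTorsion (commutator G) := by
    rintro ⟨t, ht⟩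
    rw [← Submonoid.isOfFinOrder_coe]
    exact torsion2 t ht
  letI : CommGroup (commutator G) := { (inferInstance : Group (commutator G)) with mul_comm := mul_comm' }
  haveI : Finite (commutator G) := CommGroup.finite_of_fg_torsion _ htor
  exact Finite.of_equiv _ (Subgroup.groupEquivQuotientProdSubgroup (s := commutator G)).symm

end Aux

/-- Every infinite group that can be generated by 3 elements and is an
`E`-group is abelian. -/
theorem infinite_three_generated_EGroup_comm
    {G : Type*} [Group G] [Infinite G]
    (hgen : ∃ a b c : G, Subgroup.closure {a, b, c} = ⊤)
    (hE : IsEGroup G) : ∀ x y : G, x * y = y * x := by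
  obtain ⟨a, b, c, hgen⟩ := hgen
  set A := Subgroup.normalClosure {a} with hA_def
  set B := Subgroup.normalClosure {b} with hB_def
  set C := Subgroup.normalClosure {c} with hC_def
  haveI : A.Normal := Subgroup.normalClosure_normal
  haveI : B.Normal := Subgroup.normalClosure_normal
  haveI : C.Normal := Subgroup.normalClosure_normal
  have hA : ⁅A, A⁆ = ⊥ := hE.commutator_normalClosure_eq_bot a
  have hB : ⁅B, B⁆ = ⊥ := hE.commutator_normalClosure_eq_bot b
  have hC : ⁅C, C⁆ = ⊥ := hE.commutator_normalClosure_eq_bot c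
  have hsup : A ⊔ B ⊔ C = ⊤ := by
    refine le_antisymm le_top ?_
    rw [← hgen, Subgroup.closure_le]
    rintro x hx
    rcases hx with rfl | rfl | rfl
    · exact (le_sup_left.trans le_sup_left : A ≤ A ⊔ B ⊔ C)
        (Subgroup.subset_normalClosure (Set.mem_singleton _))
    · exact (le_sup_right.trans le_sup_left : B ≤ A ⊔ B ⊔ C)
        (Subgroup.subset_normalClosure (Set.mem_singleton _))
    · exact (le_sup_right : C ≤ A ⊔ B ⊔ C)
        (Subgroup.subset_normalClosure (Set.mem_singleton _))
  have h4 := gamma4_eq_bot hA hB hC hsup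
  haveI : Group.FG G := Group.fg_iff.mpr
    ⟨{a, b, c}, hgen, (Set.finite_singleton c).insert b |>.insert a⟩
  cases finite_or_infinite (Abelianization G) with
  | inl hfin =>
    haveI := hfin
    haveI : Finite G := finite_of_finite_abelianization h4
    exact (not_finite G).elim
  | inr hinf =>
    haveI := hinf
    haveI : Group.FG (Abelianization G) :=
      Group.fg_of_surjective (f := Abelianization.of)
        (fun y => QuotientGroup.mk_surjective y)
    obtain ⟨π₀, xbar, hxbar⟩ := exists_hom_int (Abelianization G)
    obtain ⟨x0, rfl⟩ := QuotientGroup.mk_surjective xbar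
    exact comm_of_hom_int hE (π₀.comp Abelianization.of) ⟨x0, hxbar⟩
end

section
/- Let p be a prime and let G be a pℰ-group with exp(G/G') = p^r. Then the exponent of the derived subgroup G' equals the exponent of the quotient G/Z(G), and the exponent of G equals p^r times the exponent of G'. -/
open scoped commutatorElement

namespace PEpsAux

variable {G : Type*} [Group G]

private lemma cid1 (a b c : G) : ⁅a * b, c⁆ = a * ⁅b, c⁆ * a⁻¹ * ⁅a, c⁆ := by
  simp only [commutatorElement_def]; group

private lemma cid3 (a b : G) : ⁅a⁻¹, b⁆ = a⁻¹ * ⁅a, b⁆⁻¹ * a := by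
  simp only [commutatorElement_def]; group

private lemma cid4 (a b : G) : ⁅a, b⁻¹⁆ = b⁻¹ * ⁅a, b⁆⁻¹ * b := by
  simp only [commutatorElement_def]; group

private lemma comm_one_left (t : G) : ⁅(1 : G), t⁆ = 1 := by
  simp only [commutatorElement_def]; group

section Engel

variable (h2 : ∀ x y : G, ⁅⁅x, y⁆, y⁆ = 1)
include h2

private lemma commR (x y : G) : Commute ⁅x, y⁆ y :=
  commutatorElement_eq_one_iff_commute.mp (h2 x y)

private lemma commL (x y : G) : Commute ⁅x, y⁆ x := by
  have h := (commR h2 y x).inv_left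
  rwa [commutatorElement_inv] at h

private lemma inv_right (u z : G) : ⁅u, z⁻¹⁆ = ⁅u, z⁆⁻¹ := by
  have h : z * ⁅u, z⁆⁻¹ = ⁅u, z⁆⁻¹ * z := ((commR h2 u z).inv_left.symm).eq
  rw [cid4, mul_assoc, ← h, inv_mul_cancel_left]

private lemma comm_conj (x y : G) : Commute x (y * x * y⁻¹) := by
  have h : y * x * y⁻¹ = ⁅y, x⁆ * x := by simp only [commutatorElement_def]; group
  rw [h]
  exact ((commR h2 y x).symm).mul_right (Commute.refl x)

private lemma comm_self (u z : G) : Commute u ⁅u, z⁆ := by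
  have h1 : Commute u (z * u⁻¹ * z⁻¹) := by
    have := (comm_conj h2 u z).inv_right
    rwa [show (z * u * z⁻¹)⁻¹ = z * u⁻¹ * z⁻¹ by group] at this
  have h : ⁅u, z⁆ = u * (z * u⁻¹ * z⁻¹) := by simp only [commutatorElement_def]; group
  rw [h]
  exact (Commute.refl u).mul_right h1

private lemma pow_left_comm (x y : G) : ∀ n : ℕ, ⁅x ^ n, y⁆ = ⁅x, y⁆ ^ n := by
  intro n
  induction n with
  | zero => simp only [pow_zero, comm_one_left]
  | succ n ih =>
    have hc : x * ⁅x, y⁆ ^ n = ⁅x, y⁆ ^ n * x := ((comm_self h2 x y).pow_right n).eq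
    calc ⁅x ^ (n+1), y⁆ = ⁅x * x ^ n, y⁆ := by rw [pow_succ']
      _ = x * ⁅x ^ n, y⁆ * x⁻¹ * ⁅x, y⁆ := cid1 _ _ _
      _ = x * ⁅x, y⁆ ^ n * x⁻¹ * ⁅x, y⁆ := by rw [ih]
      _ = ⁅x, y⁆ ^ n * ⁅x, y⁆ := by rw [hc, mul_inv_cancel_right]
      _ = ⁅x, y⁆ ^ (n+1) := (pow_succ _ _).symm


section Module

variable (a : G)

omit h2 in
private lemma conj_mem' (g x : G) (hx : x ∈ Subgroup.normalClosure ({a} : Set G)) :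
    g * x * g⁻¹ ∈ Subgroup.normalClosure ({a} : Set G) :=
  Subgroup.normalClosure_normal.conj_mem x hx g

omit h2 in
private lemma N_comm (hcc : ∀ α β : G, Commute (α * a * α⁻¹) (β * a * β⁻¹))
    {u v : G} (hu : u ∈ Subgroup.normalClosure ({a} : Set G))
    (hv : v ∈ Subgroup.normalClosure ({a} : Set G)) : Commute u v := by
  refine Subgroup.closure_induction₂ (k := Group.conjugatesOfSet ({a} : Set G))
    (p := fun x y _ _ => Commute x y) ?_ ?_ ?_ ?_ ?_ ?_ ?_ hu hv
  · intro x y hx hy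
    rw [Group.mem_conjugatesOfSet_iff] at hx hy
    obtain ⟨ax, hax, hcx⟩ := hx
    obtain ⟨ay, hay, hcy⟩ := hy
    rw [Set.mem_singleton_iff] at hax hay
    subst hax hay
    rw [isConj_iff] at hcx hcy
    obtain ⟨α, rfl⟩ := hcx
    obtain ⟨β, rfl⟩ := hcy
    exact hcc α β
  · intro x _; exact Commute.one_left x
  · intro x _; exact Commute.one_right x
  · intro x y z _ _ _ h1 h2; exact h1.mul_left h2
  · intro y z x _ _ _ h1 h2; exact h1.mul_right h2
  · intro x y _ _ h; exact h.inv_left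
  · intro x y _ _ h; exact h.inv_right

private lemma hcc' : ∀ α β : G, Commute (α * a * α⁻¹) (β * a * β⁻¹) := by
  intro α β
  have h := comm_conj h2 (α * a * α⁻¹) (β * α⁻¹)
  rwa [show β * α⁻¹ * (α * a * α⁻¹) * (β * α⁻¹)⁻¹ = β * a * β⁻¹ by group] at h

private lemma NcommE {u v : G} (hu : u ∈ Subgroup.normalClosure ({a} : Set G))
    (hv : v ∈ Subgroup.normalClosure ({a} : Set G)) : u * v = v * u :=
  (N_comm a (hcc' h2 a) hu hv).eq

omit h2 in
private lemma commN_mem {m : G} (t : G) (hm : m ∈ Subgroup.normalClosure ({a} : Set G)) :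
    ⁅m, t⁆ ∈ Subgroup.normalClosure ({a} : Set G) := by
  have h : ⁅m, t⁆ = m * (t * m⁻¹ * t⁻¹) := by simp only [commutatorElement_def]; group
  rw [h]
  exact mul_mem hm (conj_mem' a t m⁻¹ (inv_mem hm))

private lemma modP1 {m m' : G} (t : G) (hm : m ∈ Subgroup.normalClosure ({a} : Set G))
    (hm' : m' ∈ Subgroup.normalClosure ({a} : Set G)) :
    ⁅m * m', t⁆ = ⁅m, t⁆ * ⁅m', t⁆ := by
  have h : m * ⁅m', t⁆ = ⁅m', t⁆ * m := NcommE h2 a hm (commN_mem a t hm')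
  calc ⁅m * m', t⁆ = m * ⁅m', t⁆ * m⁻¹ * ⁅m, t⁆ := cid1 _ _ _
    _ = ⁅m', t⁆ * ⁅m, t⁆ := by rw [h, mul_inv_cancel_right]
    _ = ⁅m, t⁆ * ⁅m', t⁆ := NcommE h2 a (commN_mem a t hm') (commN_mem a t hm)

private lemma modP2 {m : G} (t : G) (hm : m ∈ Subgroup.normalClosure ({a} : Set G)) :
    ⁅m⁻¹, t⁆ = ⁅m, t⁆⁻¹ := by
  have h : ⁅m⁻¹ * m, t⁆ = ⁅m⁻¹, t⁆ * ⁅m, t⁆ := modP1 h2 a t (inv_mem hm) hm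
  rw [inv_mul_cancel, comm_one_left] at h
  exact eq_inv_of_mul_eq_one_left h.symm

private lemma modP4 {m : G} (t u : G) (hm : m ∈ Subgroup.normalClosure ({a} : Set G)) :
    ⁅m, t * u⁆ = ⁅m, t⁆ * ⁅m, u⁆ * ⁅⁅m, u⁆, t⁆⁻¹ := by
  have hfree : ⁅m, t * u⁆ = ⁅m, t⁆ * ⁅m, u⁆ * ⁅⁅m, u⁆⁻¹, t⁆ := by
    simp only [commutatorElement_def]; group
  rw [hfree, modP2 h2 a t (commN_mem a u hm)]


private lemma master {m : G} (b c : G) (hm : m ∈ Subgroup.normalClosure ({a} : Set G)) :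
    (⁅⁅m, b⁆, c⁆ * ⁅⁅⁅m, b⁆, c⁆, b⁆⁻¹) * ⁅⁅m, c⁆, b⁆ *
      (⁅⁅⁅m, c⁆, b⁆, c⁆ * ⁅⁅⁅⁅m, c⁆, b⁆, c⁆, b⁆⁻¹)⁻¹ = 1 := by
  have hu : ⁅m, b⁆ ∈ Subgroup.normalClosure ({a} : Set G) := commN_mem a b hm
  have hv : ⁅m, c⁆ ∈ Subgroup.normalClosure ({a} : Set G) := commN_mem a c hm
  have hw : ⁅⁅m, c⁆, b⁆ ∈ Subgroup.normalClosure ({a} : Set G) := commN_mem a b hv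
  have h := h2 m (b * c)
  rw [modP4 h2 a b c hm] at h
  rw [modP1 h2 a (b * c) (mul_mem hu hv) (inv_mem hw)] at h
  rw [modP1 h2 a (b * c) hu hv] at h
  rw [modP2 h2 a (b * c) hw] at h
  rw [modP4 h2 a b c hu, h2 m b, one_mul] at h
  rw [modP4 h2 a b c hv, h2 m c, comm_one_left, inv_one, mul_one, mul_one] at h
  rw [modP4 h2 a b c hw, h2 ⁅m, c⁆ b, one_mul] at h
  exact h

private lemma sandwichS1 {m : G} (b c : G) (hm : m ∈ Subgroup.normalClosure ({a} : Set G)) :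
    ⁅⁅⁅m, b⁆, c⁆, b⁆ = ⁅⁅⁅⁅m, c⁆, b⁆, c⁆, b⁆ := by
  have hu : ⁅m, b⁆ ∈ Subgroup.normalClosure ({a} : Set G) := commN_mem a b hm
  have hv : ⁅m, c⁆ ∈ Subgroup.normalClosure ({a} : Set G) := commN_mem a c hm
  have hT1 : ⁅⁅m, b⁆, c⁆ ∈ Subgroup.normalClosure ({a} : Set G) := commN_mem a c hu
  have hT2 : ⁅⁅⁅m, b⁆, c⁆, b⁆ ∈ Subgroup.normalClosure ({a} : Set G) := commN_mem a b hT1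
  have hT3 : ⁅⁅m, c⁆, b⁆ ∈ Subgroup.normalClosure ({a} : Set G) := commN_mem a b hv
  have hW : ⁅⁅⁅m, c⁆, b⁆, c⁆ ∈ Subgroup.normalClosure ({a} : Set G) := commN_mem a c hT3
  have hAB := mul_inv_eq_one.mp (master h2 a b c hm)
  have h := congrArg (fun z => ⁅z, b⁆) hAB
  beta_reduce at h
  rw [modP1 h2 a b (mul_mem hT1 (inv_mem hT2)) hT3] at h
  rw [modP1 h2 a b hT1 (inv_mem hT2)] at h
  rw [modP2 h2 a b hT2] at h
  rw [h2 ⁅⁅m, b⁆, c⁆ b, inv_one, mul_one] at h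
  rw [h2 ⁅m, c⁆ b, mul_one] at h
  rw [modP1 h2 a b hW (inv_mem (commN_mem a b hW))] at h
  rw [modP2 h2 a b (commN_mem a b hW)] at h
  rw [h2 ⁅⁅⁅m, c⁆, b⁆, c⁆ b, inv_one, mul_one] at h
  exact h

private lemma sandwich {m : G} (b c : G) (hm : m ∈ Subgroup.normalClosure ({a} : Set G)) :
    ⁅⁅⁅m, b⁆, c⁆, b⁆ = 1 := by
  have hv : ⁅m, c⁆ ∈ Subgroup.normalClosure ({a} : Set G) := commN_mem a c hm
  have h1 := sandwichS1 h2 a b c hv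
  rw [h2 m c, comm_one_left, comm_one_left, comm_one_left] at h1
  exact (sandwichS1 h2 a b c hm).trans h1

private lemma manti {m : G} (b c : G) (hm : m ∈ Subgroup.normalClosure ({a} : Set G)) :
    ⁅⁅m, b⁆, c⁆ * ⁅⁅m, c⁆, b⁆ = 1 := by
  have h := master h2 a b c hm
  rw [sandwich h2 a b c hm, sandwich h2 a c b hm] at h
  rw [comm_one_left, inv_one, mul_one, mul_one, inv_one, mul_one] at h
  exact h

private lemma msq {m : G} (b c d : G) (hm : m ∈ Subgroup.normalClosure ({a} : Set G)) :
    ⁅⁅⁅m, d⁆, c⁆, b⁆ * ⁅⁅⁅m, d⁆, c⁆, b⁆ = 1 := by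
  have hm1 : ⁅m, b⁆ ∈ Subgroup.normalClosure ({a} : Set G) := commN_mem a b hm
  have hmc : ⁅m, c⁆ ∈ Subgroup.normalClosure ({a} : Set G) := commN_mem a c hm
  have hmd : ⁅m, d⁆ ∈ Subgroup.normalClosure ({a} : Set G) := commN_mem a d hm
  have hmdc : ⁅⁅m, d⁆, c⁆ ∈ Subgroup.normalClosure ({a} : Set G) := commN_mem a c hmd
  have hA : ⁅⁅m, b⁆, c⁆ ∈ Subgroup.normalClosure ({a} : Set G) := commN_mem a c hm1
  have hB : ⁅⁅m, b⁆, d⁆ ∈ Subgroup.normalClosure ({a} : Set G) := commN_mem a d hm1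
  have hC : ⁅⁅⁅m, b⁆, d⁆, c⁆ ∈ Subgroup.normalClosure ({a} : Set G) := commN_mem a c hB
  have hK : ⁅⁅⁅m, d⁆, c⁆, b⁆ ∈ Subgroup.normalClosure ({a} : Set G) := commN_mem a b hmdc
  -- the anti identity for pair (b, c*d)
  have hE0 : ⁅⁅m, c * d⁆, b⁆ = ⁅⁅m, b⁆, c * d⁆⁻¹ :=
    eq_inv_of_mul_eq_one_right (manti h2 a b (c * d) hm)
  rw [modP4 h2 a c d hm] at hE0
  rw [modP1 h2 a b (mul_mem hmc hmd) (inv_mem hmdc)] at hE0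
  rw [modP1 h2 a b hmc hmd] at hE0
  rw [modP2 h2 a b hmdc] at hE0
  rw [eq_inv_of_mul_eq_one_right (manti h2 a b c hm)] at hE0
  rw [eq_inv_of_mul_eq_one_right (manti h2 a b d hm)] at hE0
  rw [modP4 h2 a c d hm1] at hE0
  -- hE0 : (A⁻¹ * B⁻¹) * K⁻¹ = ((A * B) * C⁻¹)⁻¹  (with A = ⁅⁅m,b⁆,c⁆ etc.)
  have hE : ⁅⁅m, b⁆, c⁆⁻¹ * ⁅⁅m, b⁆, d⁆⁻¹ * ⁅⁅⁅m, d⁆, c⁆, b⁆⁻¹ =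
      ⁅⁅⁅m, b⁆, d⁆, c⁆ * (⁅⁅m, b⁆, d⁆⁻¹ * ⁅⁅m, b⁆, c⁆⁻¹) := by
    rw [hE0]; group
  have hKC : ⁅⁅⁅m, d⁆, c⁆, b⁆⁻¹ = ⁅⁅⁅m, b⁆, d⁆, c⁆ := by
    have step : ⁅⁅⁅m, d⁆, c⁆, b⁆⁻¹ =
        ⁅⁅m, b⁆, d⁆ * ⁅⁅m, b⁆, c⁆ *
          (⁅⁅⁅m, b⁆, d⁆, c⁆ * (⁅⁅m, b⁆, d⁆⁻¹ * ⁅⁅m, b⁆, c⁆⁻¹)) := by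
      rw [← hE]; group
    rw [step]
    have s1 : ⁅⁅⁅m, b⁆, d⁆, c⁆ * (⁅⁅m, b⁆, d⁆⁻¹ * ⁅⁅m, b⁆, c⁆⁻¹) =
        ⁅⁅m, b⁆, d⁆⁻¹ * ⁅⁅m, b⁆, c⁆⁻¹ * ⁅⁅⁅m, b⁆, d⁆, c⁆ := by
      rw [← mul_assoc, NcommE h2 a hC (inv_mem hB), mul_assoc,
        NcommE h2 a hC (inv_mem hA), ← mul_assoc]
    rw [s1]
    have s2 : ⁅⁅m, b⁆, d⁆ * ⁅⁅m, b⁆, c⁆ = ⁅⁅m, b⁆, c⁆ * ⁅⁅m, b⁆, d⁆ := NcommE h2 a hB hA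
    calc ⁅⁅m, b⁆, d⁆ * ⁅⁅m, b⁆, c⁆ *
          (⁅⁅m, b⁆, d⁆⁻¹ * ⁅⁅m, b⁆, c⁆⁻¹ * ⁅⁅⁅m, b⁆, d⁆, c⁆)
        = ⁅⁅m, b⁆, d⁆ * ⁅⁅m, b⁆, c⁆ * ⁅⁅m, b⁆, d⁆⁻¹ * ⁅⁅m, b⁆, c⁆⁻¹ *
            ⁅⁅⁅m, b⁆, d⁆, c⁆ := by group
      _ = ⁅⁅m, b⁆, c⁆ * ⁅⁅m, b⁆, d⁆ * ⁅⁅m, b⁆, d⁆⁻¹ * ⁅⁅m, b⁆, c⁆⁻¹ *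
            ⁅⁅⁅m, b⁆, d⁆, c⁆ := by rw [s2]
      _ = ⁅⁅⁅m, b⁆, d⁆, c⁆ := by group
  -- now convert C to K
  have hCK : ⁅⁅⁅m, b⁆, d⁆, c⁆ = ⁅⁅⁅m, d⁆, c⁆, b⁆ := by
    rw [eq_inv_of_mul_eq_one_left (manti h2 a b d hm)]
    rw [modP2 h2 a c (commN_mem a b hmd)]
    rw [eq_inv_of_mul_eq_one_left (manti h2 a b c hmd)]
    rw [inv_inv]
  have : ⁅⁅⁅m, d⁆, c⁆, b⁆⁻¹ = ⁅⁅⁅m, d⁆, c⁆, b⁆ := hKC.trans hCK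
  calc ⁅⁅⁅m, d⁆, c⁆, b⁆ * ⁅⁅⁅m, d⁆, c⁆, b⁆
      = ⁅⁅⁅m, d⁆, c⁆, b⁆ * ⁅⁅⁅m, d⁆, c⁆, b⁆⁻¹ := by rw [this]
    _ = 1 := mul_inv_cancel _

end Module

omit h2 in
private lemma mem_ncl (x : G) : x ∈ Subgroup.normalClosure ({x} : Set G) :=
  Subgroup.subset_normalClosure (Set.mem_singleton x)

private lemma anti (x y z : G) : ⁅⁅x, y⁆, z⁆ = ⁅⁅x, z⁆, y⁆⁻¹ :=
  eq_inv_of_mul_eq_one_left (manti h2 x y z (mem_ncl x))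

private lemma sandwich_g (x y z : G) : ⁅⁅⁅x, y⁆, z⁆, y⁆ = 1 :=
  sandwich h2 x y z (mem_ncl x)

private lemma firstswap (x y z : G) : ⁅⁅y, x⁆, z⁆ = ⁅⁅x, y⁆, z⁆⁻¹ := by
  have h : ⁅y, x⁆ = ⁅x, y⁆⁻¹ := (commutatorElement_inv x y).symm
  rw [h, modP2 h2 ⁅x, y⁆ z (mem_ncl ⁅x, y⁆)]

private lemma cyc (x y z : G) : ⁅⁅y, z⁆, x⁆ = ⁅⁅x, y⁆, z⁆ := by
  rw [anti h2 y z x, firstswap h2 x y z, inv_inv]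

private lemma cube (x y z : G) :
    ⁅⁅x, y⁆, z⁆ * ⁅⁅x, y⁆, z⁆ * ⁅⁅x, y⁆, z⁆ = 1 := by
  have hw : (y⁻¹ * ⁅⁅y, x⁻¹⁆, z⁻¹⁆ * y) * (z⁻¹ * ⁅⁅z, y⁻¹⁆, x⁻¹⁆ * z) *
      (x⁻¹ * ⁅⁅x, z⁻¹⁆, y⁻¹⁆ * x) = 1 := by
    simp only [commutatorElement_def]; group
  -- simplify term 1
  have t1a : ⁅y, x⁻¹⁆ = ⁅x, y⁆ := by rw [inv_right h2 y x, commutatorElement_inv]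
  have t1 : ⁅⁅y, x⁻¹⁆, z⁻¹⁆ = ⁅⁅x, y⁆, z⁆⁻¹ := by
    rw [t1a, inv_right h2 ⁅x, y⁆ z]
  have c1 : Commute ⁅⁅x, y⁆, z⁆⁻¹ y :=
    (commutatorElement_eq_one_iff_commute.mp (sandwich_g h2 x y z)).inv_left
  have e1 : y⁻¹ * ⁅⁅y, x⁻¹⁆, z⁻¹⁆ * y = ⁅⁅x, y⁆, z⁆⁻¹ := by
    rw [t1, mul_assoc, c1.eq, ← mul_assoc, inv_mul_cancel, one_mul]
  -- term 2
  have t2a : ⁅z, y⁻¹⁆ = ⁅y, z⁆ := by rw [inv_right h2 z y, commutatorElement_inv]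
  have t2 : ⁅⁅z, y⁻¹⁆, x⁻¹⁆ = ⁅⁅x, y⁆, z⁆⁻¹ := by
    rw [t2a, inv_right h2 ⁅y, z⁆ x, cyc h2 x y z]
  have c2 : Commute ⁅⁅x, y⁆, z⁆⁻¹ z := (commR h2 ⁅x, y⁆ z).inv_left
  have e2 : z⁻¹ * ⁅⁅z, y⁻¹⁆, x⁻¹⁆ * z = ⁅⁅x, y⁆, z⁆⁻¹ := by
    rw [t2, mul_assoc, c2.eq, ← mul_assoc, inv_mul_cancel, one_mul]
  -- term 3
  have t3 : ⁅⁅x, z⁻¹⁆, y⁻¹⁆ = ⁅⁅x, y⁆, z⁆⁻¹ := by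
    rw [inv_right h2 x z, modP2 h2 ⁅x, z⁆ y⁻¹ (mem_ncl ⁅x, z⁆),
      inv_right h2 ⁅x, z⁆ y, inv_inv, anti h2 x z y]
  have c3 : Commute ⁅⁅x, y⁆, z⁆⁻¹ x := by
    have h := commR h2 ⁅y, z⁆ x
    rw [cyc h2 x y z] at h
    exact h.inv_left
  have e3 : x⁻¹ * ⁅⁅x, z⁻¹⁆, y⁻¹⁆ * x = ⁅⁅x, y⁆, z⁆⁻¹ := by
    rw [t3, mul_assoc, c3.eq, ← mul_assoc, inv_mul_cancel, one_mul]
  rw [e1, e2, e3] at hw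
  have h9 : (⁅⁅x, y⁆, z⁆ * ⁅⁅x, y⁆, z⁆ * ⁅⁅x, y⁆, z⁆)⁻¹ = 1 := by
    rw [← hw]; group
  rw [← inv_one, ← h9, inv_inv]

private lemma gamma4 (x y z w : G) : ⁅⁅⁅x, y⁆, z⁆, w⁆ = 1 := by
  set X := ⁅⁅⁅x, y⁆, z⁆, w⁆ with hX
  have hX2 : X * X = 1 := msq h2 x w z y (mem_ncl x)
  have hP3 : ⁅⁅x, y⁆, z⁆ ^ 3 = 1 := by
    have := cube h2 x y z
    rw [show (3 : ℕ) = 2 + 1 by rfl, pow_succ, pow_two]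
    exact this
  have hX3 : X * X * X = 1 := by
    have h := pow_left_comm h2 ⁅⁅x, y⁆, z⁆ w 3
    rw [hP3, comm_one_left] at h
    rw [show X * X * X = X ^ 3 by rw [pow_succ, pow_two], hX]
    exact h.symm
  rw [hX2, one_mul] at hX3
  exact hX3


omit h2 in
private lemma cid2 (a b c : G) : ⁅a, b * c⁆ = ⁅a, b⁆ * (b * ⁅a, c⁆ * b⁻¹) := by
  simp only [commutatorElement_def]; group

omit h2 in
private lemma central_conj {z : G} (hz : z ∈ Subgroup.center G) (g : G) :
    g * z * g⁻¹ = z := by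
  rw [Subgroup.mem_center_iff] at hz
  rw [hz g, mul_inv_cancel_right]

omit h2 in
private lemma central_conj2 {z : G} (hz : z ∈ Subgroup.center G) (g : G) :
    g⁻¹ * z * g = z := by
  rw [Subgroup.mem_center_iff] at hz
  rw [mul_assoc, ← hz g, inv_mul_cancel_left]

private lemma comm_center {g : G} (hg : g ∈ commutator G) (u : G) :
    ⁅g, u⁆ ∈ Subgroup.center G := by
  let S : Subgroup G :=
    { carrier := {g : G | ∀ u : G, ⁅g, u⁆ ∈ Subgroup.center G}
      one_mem' := by
        intro u
        rw [comm_one_left]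
        exact Subgroup.one_mem _
      mul_mem' := by
        intro g h hgS hhS u
        rw [cid1, central_conj (hhS u) g]
        exact Subgroup.mul_mem _ (hhS u) (hgS u)
      inv_mem' := by
        intro g hgS u
        rw [cid3, central_conj2 (Subgroup.inv_mem _ (hgS u)) g]
        exact Subgroup.inv_mem _ (hgS u) }
  have hle : commutator G ≤ S := by
    rw [commutator_def]
    refine Subgroup.commutator_le.mpr ?_
    intro g1 _ g2 _
    intro u
    refine Subgroup.mem_center_iff.mpr ?_
    intro w
    exact ((commutatorElement_eq_one_iff_commute.mp (gamma4 h2 g1 g2 u w)).symm).eq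
  exact hle hg u

private lemma Kabelian {g h : G} (hg : g ∈ commutator G) (hh : h ∈ commutator G) :
    Commute g h := by
  have key : ∀ x y : G, Commute g ⁅x, y⁆ := by
    intro x y
    have hom2 : ∀ t u : G, ⁅g, t * u⁆ = ⁅g, t⁆ * ⁅g, u⁆ := by
      intro t u
      rw [cid2, central_conj (comm_center h2 hg u) t]
    have hinv : ∀ t : G, ⁅g, t⁻¹⁆ = ⁅g, t⁆⁻¹ := by
      intro t
      rw [cid4, central_conj2 (Subgroup.inv_mem _ (comm_center h2 hg t)) t]
    have hexp : ⁅g, ⁅x, y⁆⁆ = ⁅g, x⁆ * (⁅g, y⁆ * (⁅g, x⁆⁻¹ * ⁅g, y⁆⁻¹)) := by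
      rw [show ⁅x, y⁆ = x * (y * (x⁻¹ * y⁻¹)) by simp only [commutatorElement_def]; group,
        hom2, hom2, hom2, hinv, hinv]
    have hcz : ⁅g, x⁆ * ⁅g, y⁆ = ⁅g, y⁆ * ⁅g, x⁆ :=
      ((Subgroup.mem_center_iff.mp (comm_center h2 hg x)) ⁅g, y⁆).symm
    have : ⁅g, ⁅x, y⁆⁆ = 1 := by
      rw [hexp, ← mul_assoc, hcz]
      group
    exact commutatorElement_eq_one_iff_commute.mp this
  rw [commutator_eq_closure] at hh
  induction hh using Subgroup.closure_induction with
  | mem x hx =>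
    obtain ⟨u, v, rfl⟩ := hx
    exact key u v
  | one => exact Commute.one_right g
  | mul x y _ _ hx hy => exact hx.mul_right hy
  | inv x _ hx => exact hx.inv_right

end Engel
end PEpsAux

/-- For a prime `p`, a finite `p`-group `G` is a `pℰ`-group if it is a 2-Engel
group and there is `r ≥ 0` with `Ω_r(G) ≤ Z(G)` and `exp (G/G') = p ^ r`,
where `Ω_r(G)` is the subgroup generated by the elements `x` with
`x ^ (p ^ r) = 1`. -/
def IsPEpsilonGroup (p : ℕ) (G : Type*) [Group G] : Prop :=
  IsPGroup p G ∧ (∀ x y : G, ⁅⁅x, y⁆, y⁆ = 1) ∧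
    ∃ r : ℕ, Subgroup.closure {x : G | x ^ p ^ r = 1} ≤ Subgroup.center G ∧
      Monoid.exponent (G ⧸ commutator G) = p ^ r

/-- If `G` is a `pℰ`-group with `exp (G/G') = p ^ r`, then
`exp G' = exp (G/Z(G))` and `exp G = p ^ r * exp G'`. -/
theorem pEpsilonGroup_exponent_commutator
    (p r : ℕ) (hp : p.Prime) {G : Type*} [Group G] [Finite G]
    (hG : IsPEpsilonGroup p G)
    (hr : Monoid.exponent (G ⧸ commutator G) = p ^ r) :
    Monoid.exponent (commutator G) = Monoid.exponent (G ⧸ Subgroup.center G) ∧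
    Monoid.exponent G = p ^ r * Monoid.exponent (commutator G) := by
  obtain ⟨hpG, hEng, r', hΩ', hr'⟩ := hG
  have hrr : r' = r := Nat.pow_right_injective hp.two_le (hr'.symm.trans hr)
  have hΩ : Subgroup.closure {x : G | x ^ p ^ r = 1} ≤ Subgroup.center G := by
    rwa [hrr] at hΩ'
  clear hΩ' hr' hrr
  set m := Monoid.exponent (commutator G) with hm
  -- exp (G/Z) ∣ exp G'
  have hKdvd : Monoid.exponent (G ⧸ Subgroup.center G) ∣ m := by
    apply Monoid.exponent_dvd_of_forall_pow_eq_one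
    intro gbar
    obtain ⟨x, rfl⟩ := QuotientGroup.mk'_surjective (Subgroup.center G) gbar
    rw [← map_pow]
    rw [QuotientGroup.mk'_apply, QuotientGroup.eq_one_iff]
    refine Subgroup.mem_center_iff.mpr (fun w => ?_)
    have hcomm1 : ⁅x ^ m, w⁆ = 1 := by
      rw [PEpsAux.pow_left_comm hEng]
      have hmem : ⁅x, w⁆ ∈ commutator G :=
        Subgroup.commutator_mem_commutator (Subgroup.mem_top x) (Subgroup.mem_top w)
      have hk := Monoid.pow_exponent_eq_one (⟨⁅x, w⁆, hmem⟩ : commutator G)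
      rw [Subtype.ext_iff] at hk
      simpa using hk
    exact ((commutatorElement_eq_one_iff_commute.mp hcomm1).symm).eq
  -- exp G' ∣ exp (G/Z)
  have claim : ∀ g ∈ commutator G, g ^ Monoid.exponent (G ⧸ Subgroup.center G) = 1 := by
    intro g hg
    rw [commutator_eq_closure] at hg
    induction hg using Subgroup.closure_induction with
    | mem c hc =>
      obtain ⟨u, v, rfl⟩ := hc
      have hx : ((QuotientGroup.mk' (Subgroup.center G)) u) ^
          Monoid.exponent (G ⧸ Subgroup.center G) = 1 := Monoid.pow_exponent_eq_one _
      rw [← map_pow, QuotientGroup.mk'_apply, QuotientGroup.eq_one_iff] at hx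
      rw [← PEpsAux.pow_left_comm hEng]
      exact commutatorElement_eq_one_iff_commute.mpr
        ((Subgroup.mem_center_iff.mp hx v).symm)
    | one => exact one_pow _
    | mul a b ha hb iha ihb =>
      have hamem : a ∈ commutator G := by rw [commutator_eq_closure]; exact ha
      have hbmem : b ∈ commutator G := by rw [commutator_eq_closure]; exact hb
      rw [(PEpsAux.Kabelian hEng hamem hbmem).mul_pow, iha, ihb, one_mul]
    | inv a ha iha => rw [inv_pow, iha, inv_one]
  have hdvdK : m ∣ Monoid.exponent (G ⧸ Subgroup.center G) := by
    apply Monoid.exponent_dvd_of_forall_pow_eq_one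
    rintro ⟨g, hg⟩
    rw [Subtype.ext_iff]
    simpa using claim g hg
  have exp_eq : m = Monoid.exponent (G ⧸ Subgroup.center G) :=
    Nat.dvd_antisymm hdvdK hKdvd
  refine ⟨exp_eq, ?_⟩
  -- second part
  have hxK : ∀ x : G, x ^ p ^ r ∈ commutator G := by
    intro x
    have hx : ((QuotientGroup.mk' (commutator G)) x) ^ p ^ r = 1 := by
      rw [← hr]; exact Monoid.pow_exponent_eq_one _
    rwa [← map_pow, QuotientGroup.mk'_apply, QuotientGroup.eq_one_iff] at hx
  have d1 : Monoid.exponent G ∣ p ^ r * m := by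
    apply Monoid.exponent_dvd_of_forall_pow_eq_one
    intro x
    rw [pow_mul]
    have hk := Monoid.pow_exponent_eq_one (⟨x ^ p ^ r, hxK x⟩ : commutator G)
    rw [Subtype.ext_iff] at hk
    simpa using hk
  have d2 : p ^ r * m ∣ Monoid.exponent G := by
    by_cases hm1 : m = 1
    · rw [hm1, mul_one, ← hr]
      exact MonoidHom.exponent_dvd (QuotientGroup.mk'_surjective (commutator G))
    · haveI : Fact p.Prime := ⟨hp⟩
      have hK : IsPGroup p (commutator G) := hpG.to_subgroup _
      obtain ⟨kk, hkcard⟩ := IsPGroup.iff_card.mp hK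
      have hmcard : m ∣ p ^ kk := by
        rw [← hkcard]
        exact Monoid.exponent_dvd.mpr (fun g => _root_.orderOf_dvd_natCard g)
      obtain ⟨s, hs_le, hms⟩ := (Nat.dvd_prime_pow hp).mp hmcard
      have hsne : s ≠ 0 := by
        intro h0
        apply hm1
        rw [hms, h0, pow_zero]
      obtain ⟨t, rfl⟩ := Nat.exists_eq_succ_of_ne_zero hsne
      -- find an element whose image in G/Z has order exactly p^(t+1)
      have hnotall : ¬ ∀ gbar : G ⧸ Subgroup.center G, gbar ^ p ^ t = 1 := by
        intro hall
        have hd := Monoid.exponent_dvd_of_forall_pow_eq_one hall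
        rw [← exp_eq, hms] at hd
        have := (Nat.pow_dvd_pow_iff_le_right hp.one_lt).mp hd
        omega
      push_neg at hnotall
      obtain ⟨gbar, hgbar⟩ := hnotall
      obtain ⟨x, rfl⟩ := QuotientGroup.mk'_surjective (Subgroup.center G) gbar
      have hxZ : x ^ p ^ t ∉ Subgroup.center G := by
        intro hmem
        exact hgbar (by rw [← map_pow, QuotientGroup.mk'_apply, QuotientGroup.eq_one_iff]
                        exact hmem)
      have hx_pow_ne : x ^ (p ^ t * p ^ r) ≠ 1 := by
        intro h
        apply hxZ
        apply hΩ
        apply Subgroup.subset_closure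
        show (x ^ p ^ t) ^ p ^ r = 1
        rw [← pow_mul]
        exact h
      have horder1 : ¬ orderOf x ∣ p ^ (r + t) := by
        rw [orderOf_dvd_iff_pow_eq_one]
        intro h
        apply hx_pow_ne
        have hexp : p ^ t * p ^ r = p ^ (r + t) := by rw [← pow_add, Nat.add_comm]
        rw [hexp]
        exact h
      have horder2 : orderOf x ∣ p ^ (r + (t + 1)) := by
        have h1 : orderOf x ∣ Monoid.exponent G := Monoid.order_dvd_exponent x
        have h2 : Monoid.exponent G ∣ p ^ (r + (t + 1)) := by
          rw [pow_add]
          rw [← hms]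
          exact d1
      
        exact h1.trans h2
      obtain ⟨tt, htt_le, hord⟩ := (Nat.dvd_prime_pow hp).mp horder2
      have htt : tt = r + (t + 1) := by
        by_contra hne
        apply horder1
        rw [hord]
        exact pow_dvd_pow p (by omega)
      have hfin : p ^ r * m = orderOf x := by
        rw [hms, ← pow_add, hord, htt]
      rw [hfin]
      exact Monoid.order_dvd_exponent x
  exact Nat.dvd_antisymm d1 d2
end

section
/- Let p be a prime and let G be a pℰ-group with exp(G/G') = p^r. If G is nilpotent of class exactly 3, then p = 3 and the exponent of the derived subgroup G' equals 3^(r+1). -/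
open scoped commutatorElement

/-- If `G` is a `pℰ`-group with `exp (G/G') = p ^ r` which is nilpotent of
class exactly 3, then `p = 3` and `exp G' = 3 ^ (r + 1)`. -/
theorem pEpsilonGroup_class_three_exponent_commutator
    (p r : ℕ) (hp : p.Prime) {G : Type*} [Group G] [Finite G]
    (hG : IsPEpsilonGroup p G)
    (hr : Monoid.exponent (G ⧸ commutator G) = p ^ r)
    (hcl : (⊤ : Subgroup G).lowerCentralSeries 3 = ⊥ ∧ (⊤ : Subgroup G).lowerCentralSeries 2 ≠ ⊥) :
    p = 3 ∧ Monoid.exponent (commutator G) = 3 ^ (r + 1) := by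
  classical
  obtain ⟨hpG, hE, r', hΩ, hr'⟩ := hG
  have hrr : r' = r := Nat.pow_right_injective hp.two_le (hr'.symm.trans hr)
  rw [hrr] at hΩ
  -- γ₃ is central
  have hγ : (⊤ : Subgroup G).lowerCentralSeries 2 ≤ Subgroup.center G := by
    have h := hcl.1
    rw [show (⊤ : Subgroup G).lowerCentralSeries 3 = ⁅(⊤ : Subgroup G).lowerCentralSeries 2, ⊤⁆ from
      Subgroup.lowerCentralSeries_succ (S := ⊤) (n := 2)] at h
    have h2 := Subgroup.commutator_eq_bot_iff_le_centralizer.mp h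
    rwa [Subgroup.coe_top, Subgroup.centralizer_univ] at h2
  have cmem : ∀ a b : G, ⁅a, b⁆ ∈ commutator G := fun a b => by
    rw [commutator_def]
    exact Subgroup.commutator_mem_commutator (Subgroup.mem_top a) (Subgroup.mem_top b)
  have t2mem : ∀ u : G, u ∈ commutator G → ∀ g : G,
      ⁅u, g⁆ ∈ (⊤ : Subgroup G).lowerCentralSeries 2 := by
    intro u hu g
    rw [show (⊤ : Subgroup G).lowerCentralSeries 2 = ⁅(⊤ : Subgroup G).lowerCentralSeries 1, ⊤⁆ from
      Subgroup.lowerCentralSeries_succ (S := ⊤) (n := 1)]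
    exact Subgroup.commutator_mem_commutator (by rwa [Subgroup.top_lowerCentralSeries_one]) (Subgroup.mem_top g)
  have hz : ∀ u : G, u ∈ commutator G → ∀ g h : G, Commute ⁅u, g⁆ h := fun u hu g h =>
    ((Subgroup.mem_center_iff.mp (hγ (t2mem u hu g))) h).symm
  have hzc : ∀ u : G, u ∈ commutator G → ∀ g h : G, h * ⁅u, g⁆ * h⁻¹ = ⁅u, g⁆ := by
    intro u hu g h
    rw [← (hz u hu g h).eq, mul_inv_cancel_right]
  have hconj : ∀ u g : G, g * u * g⁻¹ = u * ⁅u⁻¹, g⁆ := fun u g => by group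
  have hlin1 : ∀ u v g : G, u ∈ commutator G → v ∈ commutator G →
      ⁅u * v, g⁆ = ⁅u, g⁆ * ⁅v, g⁆ := by
    intro u v g hu hv
    have e : ⁅u * v, g⁆ = u * ⁅v, g⁆ * u⁻¹ * ⁅u, g⁆ := by group
    rw [e, hzc v hv g u]
    exact (hz v hv g _).eq
  have hinv1 : ∀ u g : G, u ∈ commutator G → ⁅u⁻¹, g⁆ = ⁅u, g⁆⁻¹ := by
    intro u g hu
    have h1 : ⁅u * u⁻¹, g⁆ = ⁅u, g⁆ * ⁅u⁻¹, g⁆ := hlin1 u u⁻¹ g hu (inv_mem hu)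
    rw [mul_inv_cancel, commutatorElement_one_left] at h1
    exact (eq_inv_of_mul_eq_one_right h1.symm)
  have hlin2 : ∀ u g h : G, u ∈ commutator G → ⁅u, g * h⁆ = ⁅u, g⁆ * ⁅u, h⁆ := by
    intro u g h hu
    have e : ⁅u, g * h⁆ = ⁅u, g⁆ * (g * ⁅u, h⁆ * g⁻¹) := by group
    rw [e, hzc u hu h g]
  have hinv2 : ∀ u g : G, u ∈ commutator G → ⁅u, g⁻¹⁆ = ⁅u, g⁆⁻¹ := by
    intro u g hu
    have h1 : ⁅u, g * g⁻¹⁆ = ⁅u, g⁆ * ⁅u, g⁻¹⁆ := hlin2 u g g⁻¹ hu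
    rw [mul_inv_cancel, commutatorElement_one_right] at h1
    exact (eq_inv_of_mul_eq_one_right h1.symm)
  -- antisymmetry in the last two arguments
  have hanti : ∀ x y z : G, ⁅⁅x, z⁆, y⁆ = ⁅⁅x, y⁆, z⁆⁻¹ := by
    intro x y z
    have h1 : ⁅⁅x, y * z⁆, y * z⁆ = 1 := hE x (y * z)
    have hA : ⁅x, y * z⁆ ∈ commutator G := cmem _ _
    rw [hlin2 _ y z hA] at h1
    have hd : ⁅x, y * z⁆ = ⁅x, y⁆ * ⁅x, z⁆ * ⁅⁅x, z⁆⁻¹, y⁆ := by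
      have e : ⁅x, y * z⁆ = ⁅x, y⁆ * (y * ⁅x, z⁆ * y⁻¹) := by group
      rw [e, hconj ⁅x, z⁆ y, ← mul_assoc]
    have m1 : (⁅x, y⁆ : G) ∈ commutator G := cmem x y
    have m2 : (⁅x, z⁆ : G) ∈ commutator G := cmem x z
    have m3 : (⁅⁅x, z⁆⁻¹, y⁆ : G) ∈ commutator G := cmem _ _
    have key : ∀ w : G, ⁅⁅x, y * z⁆, w⁆ = ⁅⁅x, y⁆, w⁆ * ⁅⁅x, z⁆, w⁆ := by
      intro w
      rw [hd, hlin1 _ _ w (mul_mem m1 m2) m3, hlin1 _ _ w m1 m2]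
      have h0 : ⁅⁅⁅x, z⁆⁻¹, y⁆, w⁆ = 1 :=
        commutatorElement_eq_one_iff_commute.mpr (hz _ (inv_mem m2) y w)
      rw [h0, mul_one]
    rw [key y, key z, hE x y, hE x z, one_mul, mul_one] at h1
    exact eq_inv_of_mul_eq_one_left h1
  -- antisymmetry in the first two arguments
  have hanti1 : ∀ x y z : G, ⁅⁅y, x⁆, z⁆ = ⁅⁅x, y⁆, z⁆⁻¹ := by
    intro x y z
    rw [show (⁅y, x⁆ : G) = ⁅x, y⁆⁻¹ from (commutatorElement_inv x y).symm,
      hinv1 _ z (cmem x y)]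
  -- triple commutators have order dividing 3 (Hall–Witt + antisymmetry)
  have hcube3 : ∀ x y z : G, ⁅⁅x, y⁆, z⁆ ^ 3 = 1 := by
    intro x y z
    have red : ∀ a b c : G, ⁅⁅a, b⁻¹⁆, c⁻¹⁆ = ⁅⁅a, b⁆, c⁆ := by
      intro a b c
      have e0 : ⁅a, b⁻¹⁆ = b⁻¹ * ⁅b, a⁆ * (b⁻¹)⁻¹ := by group
      have e1 : ⁅a, b⁻¹⁆ = ⁅b, a⁆ * ⁅⁅b, a⁆⁻¹, b⁻¹⁆ := by
        rw [e0, hconj ⁅b, a⁆ b⁻¹]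
      rw [e1, hlin1 _ _ _ (cmem b a) (cmem _ _)]
      have h0 : ⁅⁅⁅b, a⁆⁻¹, b⁻¹⁆, c⁻¹⁆ = 1 :=
        commutatorElement_eq_one_iff_commute.mpr (hz _ (inv_mem (cmem b a)) b⁻¹ c⁻¹)
      rw [h0, mul_one, hinv2 _ c (cmem b a), hanti1 a b c, inv_inv]
    have hw : (y⁻¹ * ⁅⁅y, x⁻¹⁆, z⁻¹⁆ * (y⁻¹)⁻¹) * (z⁻¹ * ⁅⁅z, y⁻¹⁆, x⁻¹⁆ * (z⁻¹)⁻¹) *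
        (x⁻¹ * ⁅⁅x, z⁻¹⁆, y⁻¹⁆ * (x⁻¹)⁻¹) = 1 := by group
    rw [red y x z, red z y x, red x z y, hzc _ (cmem y x) z y⁻¹, hzc _ (cmem z y) x z⁻¹,
      hzc _ (cmem x z) y x⁻¹, hanti1 x y z, hanti z x y, hanti1 x z y, hanti x y z] at hw
    simp only [inv_inv] at hw
    have h3 : (⁅⁅x, y⁆, z⁆⁻¹) ^ 3 = 1 := by
      rw [pow_succ, pow_succ, pow_one]; exact hw
    rw [inv_pow] at h3
    exact inv_eq_one.mp h3
  -- ⁅u, v⁆ has order dividing 3 for u in the commutator subgroup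
  have hgen : ∀ v u : G, u ∈ commutator G → ⁅u, v⁆ ^ 3 = 1 := by
    intro v u hu
    rw [commutator_eq_closure] at hu
    induction hu using Subgroup.closure_induction with
    | mem w hw => obtain ⟨a, b, rfl⟩ := hw; exact hcube3 a b v
    | one => simp
    | mul a b ha hb iha ihb =>
      have ha' : a ∈ commutator G := by rw [commutator_eq_closure]; exact ha
      have hb' : b ∈ commutator G := by rw [commutator_eq_closure]; exact hb
      rw [hlin1 a b v ha' hb', (hz a ha' v _).mul_pow, iha, ihb, one_mul]
    | inv a ha iha =>
      have ha' : a ∈ commutator G := by rw [commutator_eq_closure]; exact ha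
      rw [hinv1 a v ha', inv_pow, iha, inv_one]
  -- every element of γ₃ has order dividing 3
  have hγcube : ∀ g ∈ (⊤ : Subgroup G).lowerCentralSeries 2, g ^ 3 = 1 := by
    have hS : (⊤ : Subgroup G).lowerCentralSeries 2 ≤
        ({ carrier := {g : G | g ^ 3 = 1 ∧ ∀ h, Commute g h}
           one_mem' := ⟨one_pow 3, fun h => Commute.one_left h⟩
           mul_mem' := by
             rintro a b ⟨ha1, ha2⟩ ⟨hb1, hb2⟩
             refine ⟨?_, fun h => (ha2 h).mul_left (hb2 h)⟩
             rw [((hb2 a).symm).mul_pow, ha1, hb1, one_mul]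
           inv_mem' := by
             rintro a ⟨ha1, ha2⟩
             exact ⟨by rw [inv_pow, ha1, inv_one], fun h => (ha2 h).inv_left⟩ } : Subgroup G) := by
      rw [show (⊤ : Subgroup G).lowerCentralSeries 2 = ⁅(⊤ : Subgroup G).lowerCentralSeries 1, ⊤⁆ from
        Subgroup.lowerCentralSeries_succ (S := ⊤) (n := 1)]
      refine Subgroup.commutator_le.mpr fun u hu v _ => ?_
      rw [Subgroup.top_lowerCentralSeries_one] at hu
      exact ⟨hgen v u hu, hz u hu v⟩
    exact fun g hg => (hS hg).1
  -- p = 3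
  have hp3 : p = 3 := by
    obtain ⟨g, hg, hg1⟩ : ∃ g ∈ (⊤ : Subgroup G).lowerCentralSeries 2, g ≠ 1 := by
      by_contra h
      push_neg at h
      exact hcl.2 ((Subgroup.eq_bot_iff_forall _).mpr h)
    obtain ⟨k, hk⟩ := hpG g
    have ho3 : orderOf g ∣ 3 := orderOf_dvd_of_pow_eq_one (hγcube g hg)
    have hop : orderOf g ∣ p ^ k := orderOf_dvd_of_pow_eq_one hk
    have hone : orderOf g ≠ 1 := fun h => hg1 (orderOf_eq_one_iff.mp h)
    have ho : orderOf g = 3 := (Nat.prime_three.eq_one_or_self_of_dvd _ ho3).resolve_left hone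
    have h3p : (3 : ℕ) ∣ p := Nat.Prime.dvd_of_dvd_pow Nat.prime_three (ho ▸ hop)
    exact ((Nat.prime_dvd_prime_iff_eq Nat.prime_three hp).mp h3p).symm
  subst hp3
  refine ⟨rfl, ?_⟩
  -- power formula
  have swap_aux : ∀ a b s t : G, s * b = b * s → a * s * (b * t) = a * b * (s * t) := by
    intro a b s t h
    rw [mul_assoc a s, ← mul_assoc s b, h, mul_assoc b, ← mul_assoc a b]
  have gE2 : ∀ a b c : G, ⁅a * b, c⁆ = a * ⁅b, c⁆ * a⁻¹ * ⁅a, c⁆ := by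
    intro a b c; group
  have hpowK : ∀ x y : G, ∀ n : ℕ, ∃ t ∈ (⊤ : Subgroup G).lowerCentralSeries 2,
      ⁅x ^ n, y⁆ = ⁅x, y⁆ ^ n * t := by
    intro x y n
    induction n with
    | zero => exact ⟨1, one_mem _, by simp⟩
    | succ n ih =>
      obtain ⟨t, ht, he⟩ := ih
      refine ⟨⁅⁅x, y⁆⁻¹, x ^ n⁆ * t,
        mul_mem (t2mem _ (inv_mem (cmem x y)) _) ht, ?_⟩
      have hcs : ⁅⁅x, y⁆⁻¹, x ^ n⁆ * ⁅x, y⁆ ^ n = ⁅x, y⁆ ^ n * ⁅⁅x, y⁆⁻¹, x ^ n⁆ :=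
        (hz _ (inv_mem (cmem x y)) _ _).eq
      rw [pow_succ x n, gE2 (x ^ n) x y, hconj ⁅x, y⁆ (x ^ n), he,
        swap_aux _ _ _ _ hcs, ← pow_succ']
  -- ⁅x,y⁆ ^ 3 ^ r lies in γ₃
  have hpow3r : ∀ x y : G, ⁅x, y⁆ ^ 3 ^ r ∈ (⊤ : Subgroup G).lowerCentralSeries 2 := by
    intro x y
    have hx : x ^ 3 ^ r ∈ commutator G := by
      have h1 : ((x : G ⧸ commutator G)) ^ 3 ^ r = 1 := by
        rw [← hr]; exact Monoid.pow_exponent_eq_one _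
      rwa [← QuotientGroup.mk_pow (N := commutator G) x (3 ^ r), QuotientGroup.eq_one_iff] at h1
    obtain ⟨t, ht, he⟩ := hpowK x y (3 ^ r)
    have h2 : ⁅x, y⁆ ^ 3 ^ r = ⁅x ^ 3 ^ r, y⁆ * t⁻¹ := eq_mul_inv_of_mul_eq he.symm
    rw [h2]
    exact mul_mem (t2mem _ hx y) (inv_mem ht)
  have hcompow : ∀ x y : G, ⁅x, y⁆ ^ 3 ^ (r + 1) = 1 := by
    intro x y
    rw [pow_succ, pow_mul]
    exact hγcube _ (hpow3r x y)
  -- the commutator subgroup is abelian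
  have hbase : ∀ x y : G, ∀ v ∈ commutator G, Commute ⁅x, y⁆ v := by
    intro x y v hv
    rw [commutator_eq_closure] at hv
    induction hv using Subgroup.closure_induction with
    | mem w hw =>
      obtain ⟨a, b, rfl⟩ := hw
      rw [← commutatorElement_eq_one_iff_commute, commutatorElement_def a b,
        hlin2 _ _ _ (cmem x y), hlin2 _ _ _ (cmem x y), hlin2 _ _ _ (cmem x y),
        hinv2 _ _ (cmem x y), hinv2 _ _ (cmem x y), ← commutatorElement_def,
        commutatorElement_eq_one_iff_commute]
      exact hz _ (cmem x y) a _
    | one => exact Commute.one_right _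
    | mul a b ha hb iha ihb => exact iha.mul_right ihb
    | inv a ha iha => exact iha.inv_right
  have hKcomm : ∀ u ∈ commutator G, ∀ v ∈ commutator G, Commute u v := by
    intro u hu v hv
    rw [commutator_eq_closure] at hu
    induction hu using Subgroup.closure_induction with
    | mem w hw => obtain ⟨a, b, rfl⟩ := hw; exact hbase a b v hv
    | one => exact Commute.one_left _
    | mul a b ha hb iha ihb => exact iha.mul_left ihb
    | inv a ha iha => exact iha.inv_left
  have hKpow : ∀ g ∈ commutator G, g ^ 3 ^ (r + 1) = 1 := by
    intro g hg
    rw [commutator_eq_closure] at hg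
    induction hg using Subgroup.closure_induction with
    | mem w hw => obtain ⟨a, b, rfl⟩ := hw; exact hcompow a b
    | one => simp
    | mul a b ha hb iha ihb =>
      have ha' : a ∈ commutator G := by rw [commutator_eq_closure]; exact ha
      have hb' : b ∈ commutator G := by rw [commutator_eq_closure]; exact hb
      rw [(hKcomm a ha' b hb').mul_pow, iha, ihb, one_mul]
    | inv a ha iha => rw [inv_pow, iha, inv_one]
  have hdvd : Monoid.exponent ↥(commutator G) ∣ 3 ^ (r + 1) :=
    Monoid.exponent_dvd_of_forall_pow_eq_one fun g =>
      Subtype.ext (by simpa using hKpow (g : G) g.2)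
  have hndvd : ¬ Monoid.exponent ↥(commutator G) ∣ 3 ^ r := by
    intro hd
    have hK3 : ∀ g ∈ commutator G, g ^ 3 ^ r = 1 := by
      intro g hg
      obtain ⟨c, hc⟩ := hd
      have h1 : (⟨g, hg⟩ : ↥(commutator G)) ^ 3 ^ r = 1 := by
        rw [hc, pow_mul, Monoid.pow_exponent_eq_one, one_pow]
      simpa using congrArg Subtype.val h1
    have hKc : commutator G ≤ Subgroup.center G :=
      le_trans (fun g hg => Subgroup.subset_closure (hK3 g hg)) hΩ
    apply hcl.2
    rw [show (⊤ : Subgroup G).lowerCentralSeries 2 = ⁅(⊤ : Subgroup G).lowerCentralSeries 1, ⊤⁆ from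
      Subgroup.lowerCentralSeries_succ (S := ⊤) (n := 1), Subgroup.top_lowerCentralSeries_one,
      Subgroup.commutator_eq_bot_iff_le_centralizer]
    exact le_trans hKc (Subgroup.center_le_centralizer _)
  obtain ⟨k, hkle, hke⟩ := (Nat.dvd_prime_pow Nat.prime_three).mp hdvd
  have hk : k = r + 1 := by
    rcases Nat.lt_or_ge k (r + 1) with h | h
    · exact absurd (hke ▸ pow_dvd_pow 3 (Nat.lt_succ_iff.mp h)) hndvd
    · omega
  rw [hke, hk]
end

section
/- Every pℰ-group that can be generated by 2 elements is either abelian or isomorphic to the quaternion group Q8 of order 8. -/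
open scoped commutatorElement

private lemma commute_all {G : Type*} [Group G] {S : Set G} (hS : Subgroup.closure S = ⊤)
    {z : G} (h : ∀ s ∈ S, Commute z s) : ∀ x : G, Commute z x := by
  intro x
  have hx : x ∈ Subgroup.closure S := by rw [hS]; exact Subgroup.mem_top x
  have hle : Subgroup.closure S ≤ Subgroup.centralizer {z} := by
    rw [Subgroup.closure_le]
    intro s hs
    rw [SetLike.mem_coe, Subgroup.mem_centralizer_iff]
    intro g hg
    rw [Set.mem_singleton_iff] at hg
    subst hg
    exact (h s hs).eq
  exact (Subgroup.mem_centralizer_iff.mp (hle hx)) z rfl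

private lemma pair_mem {G : Type*} [Group G] {a b s : G} (hs : s ∈ ({a, b} : Set G)) :
    s = a ∨ s = b := by
  rw [Set.mem_insert_iff, Set.mem_singleton_iff] at hs; exact hs

private lemma commute_of_gen {G : Type*} [Group G] {a b : G}
    (hS : Subgroup.closure {a, b} = ⊤) (hab : Commute a b) :
    ∀ x y : G, Commute x y := by
  have ha : ∀ x : G, Commute a x := commute_all hS (by
    intro s hs
    rcases pair_mem hs with rfl | rfl
    · exact Commute.refl s
    · exact hab)
  have hb : ∀ x : G, Commute b x := commute_all hS (by
    intro s hs
    rcases pair_mem hs with rfl | rfl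
    · exact (ha b).symm
    · exact Commute.refl s)
  intro x y
  exact (commute_all hS (fun s hs => by
    rcases pair_mem hs with rfl | rfl
    exacts [(ha y).symm, (hb y).symm]) x).symm


private lemma arith_core {p r t : ℕ} (hp : p.Prime) (ht : 1 ≤ t) (htr : t ≤ r) {i j : ℤ}
    (HZ : ∀ k m : ℤ, ((p:ℤ)^t ∣ (k*i + m*j - k*m*(((p^r).choose 2 : ℕ) : ℤ))) →
      ((p:ℤ)^t ∣ k ∧ (p:ℤ)^t ∣ m)) :
    p = 2 ∧ r = 1 ∧ t = 1 ∧ ¬ (2:ℤ) ∣ i ∧ ¬ (2:ℤ) ∣ j := by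
  set T : ℤ := (((p^r).choose 2 : ℕ) : ℤ) with hT
  have hp2 : 2 ≤ p := hp.two_le
  have hpz : (1:ℤ) < (p:ℤ) := by exact_mod_cast hp.one_lt
  have hdpos : (0:ℤ) < (p:ℤ)^t := by positivity
  have hd2 : (2:ℤ) ≤ (p:ℤ)^t := by
    calc (2:ℤ) ≤ (p:ℤ) := by exact_mod_cast hp2
    _ = (p:ℤ)^1 := (pow_one _).symm
    _ ≤ (p:ℤ)^t := pow_le_pow_right₀ (by omega) ht
  have hnd1 : ¬ ((p:ℤ)^t ∣ 1) := by
    intro h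
    have := Int.le_of_dvd one_pos h
    omega
  -- p does not divide i
  have h_i : ¬ (p:ℤ) ∣ i := by
    rintro ⟨i', rfl⟩
    have h1 : (p:ℤ)^t ∣ ((p:ℤ)^(t-1) * ((p:ℤ) * i') + 0*j - (p:ℤ)^(t-1)*0*T) := by
      have : (p:ℤ)^(t-1) * ((p:ℤ) * i') = (p:ℤ)^t * i' := by
        rw [← mul_assoc, ← pow_succ]
        congr 2
        omega
      rw [this]
      ring_nf
      exact ⟨i', by ring⟩
    have h2 := (HZ _ 0 h1).1
    have h3 : (p:ℤ)^t ≤ (p:ℤ)^(t-1) := Int.le_of_dvd (by positivity) h2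
    have h4 : (p:ℤ)^(t-1) < (p:ℤ)^t := pow_lt_pow_right₀ hpz (by omega)
    omega
  have h_j : ¬ (p:ℤ) ∣ j := by
    rintro ⟨j', rfl⟩
    have h1 : (p:ℤ)^t ∣ (0*i + (p:ℤ)^(t-1) * ((p:ℤ) * j') - 0*((p:ℤ)^(t-1))*T) := by
      have : (p:ℤ)^(t-1) * ((p:ℤ) * j') = (p:ℤ)^t * j' := by
        rw [← mul_assoc, ← pow_succ]
        congr 2
        omega
      rw [this]
      ring_nf
      exact ⟨j', by ring⟩
    have h2 := (HZ 0 _ h1).2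
    have h3 : (p:ℤ)^t ≤ (p:ℤ)^(t-1) := Int.le_of_dvd (by positivity) h2
    have h4 : (p:ℤ)^(t-1) < (p:ℤ)^t := pow_lt_pow_right₀ hpz (by omega)
    omega
  -- p divides j - T
  have h_jT : (p:ℤ) ∣ (j - T) := by
    by_contra hcon
    have hcop : IsCoprime ((p:ℤ)) (j - T) := ((Int.prime_iff_natAbs_prime.mpr (by simpa using hp)).coprime_iff_not_dvd).mpr hcon
    obtain ⟨u, v, huv⟩ := (hcop.pow_left : IsCoprime ((p:ℤ)^t) (j - T))
    have h1 : (p:ℤ)^t ∣ (1*i + (-(i*v))*j - 1*(-(i*v))*T) := by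
      have : 1*i + (-(i*v))*j - 1*(-(i*v))*T = i * (1 - v*(j - T)) := by ring
      rw [this]
      have : 1 - v * (j - T) = u * (p:ℤ)^t := by linarith [huv]
      rw [this]
      exact ⟨i*u, by ring⟩
    exact hnd1 (by simpa using (HZ 1 (-(i*v)) h1).1)
  have h_T : ¬ (p:ℤ) ∣ T := fun h => h_j (by
    have : j = (j - T) + T := by ring
    rw [this]
    exact dvd_add h_jT h)
  have h_Tn : ¬ p ∣ (p^r).choose 2 := by
    intro h
    exact h_T (by rw [hT]; exact_mod_cast h)
  have hr1 : 1 ≤ r := le_trans ht htr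
  -- p = 2
  have hp2' : p = 2 := by
    rcases hp.eq_two_or_odd' with h2 | hodd
    · exact h2
    · exfalso
      apply h_Tn
      have hodd' : Odd (p^r) := hodd.pow
      have h2d : 2 ∣ p^r - 1 := (Nat.Odd.sub_odd hodd' odd_one).two_dvd
      rw [Nat.choose_two_right, Nat.mul_div_assoc _ h2d]
      exact dvd_mul_of_dvd_left (dvd_pow_self p (by omega)) _
  subst hp2'
  -- r = 1
  have hr : r = 1 := by
    by_contra hcon
    have hr2 : 2 ≤ r := by omega
    apply h_Tn
    have : 2^r * (2^r - 1) / 2 = 2^(r-1) * (2^r - 1) := by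
      have : 2^r = 2 * 2^(r-1) := by
        rw [← pow_succ']
        congr 1
        omega
      rw [this, mul_assoc, Nat.mul_div_cancel_left _ (by norm_num)]
    rw [Nat.choose_two_right, this]
    exact dvd_mul_of_dvd_left (dvd_pow_self 2 (by omega)) _
  have htt : t = 1 := by omega
  refine ⟨rfl, hr, htt, by simpa using h_i, by simpa using h_j⟩


section
variable {G : Type*} [Group G] {a b c : G}

private lemma conj_a (hc : c = ⁅a, b⁆) (hcz : ∀ x : G, Commute c x) (k : ℤ) :
    b * a ^ k * b⁻¹ = a ^ k * c ^ (-k) := by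
  have h1 : b * a * b⁻¹ = a * c⁻¹ := by
    have h2 : c⁻¹ * a = b * a * b⁻¹ := by
      rw [hc, commutatorElement_def]; group
    rw [← h2, ((hcz a).inv_left).eq]
  calc b * a ^ k * b⁻¹ = (MulAut.conj b) (a ^ k) := by
        simp [MulAut.conj_apply, mul_assoc]
    _ = ((MulAut.conj b) a) ^ k := map_zpow _ _ _
    _ = (a * c⁻¹) ^ k := by rw [MulAut.conj_apply, h1]
    _ = a ^ k * (c⁻¹) ^ k := ((hcz a).symm.inv_right).mul_zpow k
    _ = a ^ k * c ^ (-k) := by rw [inv_zpow, zpow_neg]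

private lemma conj_b_a (hc : c = ⁅a, b⁆) (hcz : ∀ x : G, Commute c x) (m k : ℤ) :
    b ^ m * a ^ k * b ^ (-m) = a ^ k * c ^ (-(k * m)) := by
  induction m using Int.induction_on with
  | zero => simp
  | succ i ih =>
      have e1 : b ^ ((i:ℤ) + 1) = b ^ (i:ℤ) * b := zpow_add_one b i
      have e2 : b ^ (-((i:ℤ) + 1)) = b⁻¹ * b ^ (-(i:ℤ)) := by
        rw [← zpow_neg_one, ← zpow_add]
        congr 1
        ring
      calc b ^ ((i:ℤ)+1) * a ^ k * b ^ (-((i:ℤ)+1))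
          = b ^ (i:ℤ) * (b * a ^ k * b⁻¹) * b ^ (-(i:ℤ)) := by
            rw [e1, e2]; group
        _ = b ^ (i:ℤ) * (a ^ k * c ^ (-k)) * b ^ (-(i:ℤ)) := by rw [conj_a hc hcz]
        _ = (b ^ (i:ℤ) * a ^ k * b ^ (-(i:ℤ))) * c ^ (-k) := by
            rw [mul_assoc (b ^ (i:ℤ)), mul_assoc (b ^ (i:ℤ)), mul_assoc,
              ((hcz b).zpow_zpow (-k) (-(i:ℤ))).eq, mul_assoc, mul_assoc]
        _ = a ^ k * c ^ (-(k * i)) * c ^ (-k) := by rw [ih]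
        _ = a ^ k * c ^ (-(k * ((i:ℤ)+1))) := by
            rw [mul_assoc, ← zpow_add]
            congr 2
            ring
  | pred i ih =>
      have hinv : b⁻¹ * a ^ k * b = a ^ k * c ^ k := by
        have h := conj_a hc hcz k
        have h2 : b⁻¹ * (a ^ k * c ^ (-k)) * b = a ^ k := by rw [← h]; group
        have h3 : b⁻¹ * (a ^ k * c ^ (-k)) * b = (b⁻¹ * a ^ k * b) * c ^ (-k) := by
          calc b⁻¹ * (a ^ k * c ^ (-k)) * b = b⁻¹ * a ^ k * (c ^ (-k) * b) := by group
            _ = b⁻¹ * a ^ k * (b * c ^ (-k)) := by rw [((hcz b).zpow_left (-k)).eq]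
            _ = (b⁻¹ * a ^ k * b) * c ^ (-k) := by group
        have h4 : (b⁻¹ * a ^ k * b) * c ^ (-k) = a ^ k := by rw [← h3]; exact h2
        calc b⁻¹ * a ^ k * b = ((b⁻¹ * a ^ k * b) * c ^ (-k)) * c ^ k := by
              rw [mul_assoc _ _ (c ^ k), ← zpow_add]; simp
          _ = a ^ k * c ^ k := by rw [h4]
      have e1 : b ^ (-(i:ℤ) - 1) = b ^ (-(i:ℤ)) * b⁻¹ := by
        rw [← zpow_neg_one, ← zpow_add, sub_eq_add_neg]
      have e2 : b ^ (-(-(i:ℤ) - 1)) = b * b ^ ((i:ℤ)) := by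
        rw [show -(-(i:ℤ) - 1) = 1 + i by ring, zpow_add, zpow_one]
      calc b ^ (-(i:ℤ)-1) * a ^ k * b ^ (-(-(i:ℤ)-1))
          = b ^ (-(i:ℤ)) * (b⁻¹ * a ^ k * b) * b ^ ((i:ℤ)) := by rw [e1, e2]; group
        _ = b ^ (-(i:ℤ)) * (a ^ k * c ^ k) * b ^ ((i:ℤ)) := by rw [hinv]
        _ = (b ^ (-(i:ℤ)) * a ^ k * b ^ ((i:ℤ))) * c ^ k := by
            rw [mul_assoc (b ^ (-(i:ℤ))), mul_assoc (b ^ (-(i:ℤ))), mul_assoc,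
              ((hcz b).zpow_zpow k ((i:ℤ))).eq, mul_assoc, mul_assoc]
        _ = (b ^ (-(i:ℤ)) * a ^ k * b ^ (-(-(i:ℤ)))) * c ^ k := by norm_num
        _ = a ^ k * c ^ (-(k * (-(i:ℤ)))) * c ^ k := by rw [ih]
        _ = a ^ k * c ^ (-(k * (-(i:ℤ) - 1))) := by
            rw [mul_assoc, ← zpow_add]
            congr 2
            ring

private lemma swap_ba (hc : c = ⁅a, b⁆) (hcz : ∀ x : G, Commute c x) (m k : ℤ) :
    b ^ m * a ^ k = a ^ k * c ^ (-(k * m)) * b ^ m := by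
  have h := conj_b_a hc hcz m k
  calc b ^ m * a ^ k = (b ^ m * a ^ k * b ^ (-m)) * b ^ m := by
        rw [mul_assoc, ← zpow_add]; simp
    _ = a ^ k * c ^ (-(k * m)) * b ^ m := by rw [h]

end

section
variable {G : Type*} [Group G] {a b c : G}

private lemma nf_mul (hc : c = ⁅a, b⁆) (hcz : ∀ x : G, Commute c x)
    (k m n k' m' n' : ℤ) :
    (a^k * b^m * c^n) * (a^k' * b^m' * c^n')
      = a^(k+k') * b^(m+m') * c^(n + n' - k'*m) := by
  have hs := swap_ba hc hcz m k'
  have h2 : c^n * b^m' = b^m' * c^n := ((hcz (b^m')).zpow_left n).eq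
  have h4 : c^(-(k'*m)) * b^(m+m') = b^(m+m') * c^(-(k'*m)) :=
    ((hcz (b^(m+m'))).zpow_left (-(k'*m))).eq
  have h1 : c^n * a^k' = a^k' * c^n := ((hcz (a^k')).zpow_left n).eq
  calc (a^k * b^m * c^n) * (a^k' * b^m' * c^n')
      = (a^k * b^m) * (c^n * a^k') * (b^m' * c^n') := by group
    _ = (a^k * b^m) * (a^k' * c^n) * (b^m' * c^n') := by rw [h1]
    _ = a^k * (b^m * a^k') * ((c^n * b^m') * c^n') := by group
    _ = a^k * (a^k' * c^(-(k'*m)) * b^m) * ((b^m' * c^n) * c^n') := by rw [hs, h2]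
    _ = (a^k * a^k') * (c^(-(k'*m)) * b^(m+m')) * (c^n * c^n') := by group
    _ = (a^k * a^k') * (b^(m+m') * c^(-(k'*m))) * (c^n * c^n') := by rw [h4]
    _ = a^(k+k') * b^(m+m') * c^(n + n' - k'*m) := by group

private lemma nf_pow (hc : c = ⁅a, b⁆) (hcz : ∀ x : G, Commute c x)
    (k m n : ℤ) : ∀ N : ℕ,
    (a^k * b^m * c^n)^N
      = a^(k*N) * b^(m*N) * c^(n*N - k*m*(N.choose 2 : ℤ)) := by
  intro N
  induction N with
  | zero => simp
  | succ N ih =>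
      rw [pow_succ, ih, nf_mul hc hcz]
      congr 1
      · congr 1
        · congr 1; push_cast; ring
        · congr 1; push_cast; ring
      · congr 1
        push_cast [Nat.choose_succ_succ, Nat.choose_one_right]
        ring

end


private lemma iso_quaternion {G : Type*} [Group G] {A B : G}
    (hgen : Subgroup.closure {A, B} = ⊤)
    (hc : ⁅A, B⁆ = A^2) (hB2 : B^2 = A^2) (hA4 : A^4 = 1) (hA2 : A^2 ≠ 1) :
    Nonempty (G ≃* QuaternionGroup 2) := by
  haveI : NeZero (2*2) := ⟨by norm_num⟩
  haveI : Fact (Nat.Prime 2) := ⟨Nat.prime_two⟩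
  have hord : orderOf A = 4 := by
    have h := orderOf_eq_prime_pow (x := A) (p := 2) (n := 1)
      (by norm_num; exact hA2) (by norm_num; exact hA4)
    simpa using h
  have h0 : A * B * A⁻¹ * B⁻¹ = A^2 := by rw [← commutatorElement_def]; exact hc
  have h1 : B * A⁻¹ * B⁻¹ = A := by
    have h1' : A * (B * A⁻¹ * B⁻¹) = A * A := by
      calc A * (B * A⁻¹ * B⁻¹) = A * B * A⁻¹ * B⁻¹ := by group
        _ = A^2 := h0
        _ = A * A := sq A
    exact mul_left_cancel h1'
  have hBA : B * A * B⁻¹ = A⁻¹ := by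
    calc B * A * B⁻¹ = (B * A⁻¹ * B⁻¹)⁻¹ := by group
      _ = A⁻¹ := by rw [h1]
  have hconj : ∀ v : ℕ, B * A^v * B⁻¹ = (A^v)⁻¹ := by
    intro v
    calc B * A^v * B⁻¹ = (MulAut.conj B) (A^v) := by simp [MulAut.conj_apply, mul_assoc]
      _ = ((MulAut.conj B) A)^v := map_pow _ _ _
      _ = (A⁻¹)^v := by rw [MulAut.conj_apply]; rw [hBA]
      _ = (A^v)⁻¹ := inv_pow A v
  have hswap2 : ∀ v : ℕ, B * A^v = (A^v)⁻¹ * B := by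
    intro v
    calc B * A^v = (B * A^v * B⁻¹) * B := by group
      _ = (A^v)⁻¹ * B := by rw [hconj]
  have hswap3 : ∀ v : ℕ, A^v * B = B * (A^v)⁻¹ := by
    intro v
    have e : A^v * (B * A^v) = B := by rw [hswap2 v]; group
    calc A^v * B = (A^v * (B * A^v)) * (A^v)⁻¹ := by group
      _ = B * (A^v)⁻¹ := by rw [e]
  have hAdd : ∀ i j : ZMod (2*2), A^(i+j).val = A^(i.val) * A^(j.val) := by
    intro i j
    rw [ZMod.val_add]
    rw [show (i.val + j.val) % (2*2) = (i.val + j.val) % orderOf A by rw [hord]]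
    rw [pow_mod_orderOf, pow_add]
  set f : QuaternionGroup 2 → G := fun x =>
    match x with
    | .a i => A ^ i.val
    | .xa i => B * A ^ i.val
    with hf
  have key2 : ∀ u w : ZMod (2*2), A^(u.val) * (B * A^(w.val)) = B * A^((w - u).val) := by
    intro u w
    have e1 : A^(u.val) * A^((w-u).val) = A^(w.val) := by
      rw [← hAdd]
      congr 1
      ring_nf
    calc A^(u.val) * (B * A^(w.val)) = (A^(u.val) * B) * A^(w.val) := by group
      _ = (B * (A^(u.val))⁻¹) * A^(w.val) := by rw [hswap3]
      _ = B * ((A^(u.val))⁻¹ * A^(w.val)) := by group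
      _ = B * ((A^(u.val))⁻¹ * (A^(u.val) * A^((w-u).val))) := by rw [e1]
      _ = B * A^((w - u).val) := by group
  have hmul : ∀ x y : QuaternionGroup 2, f (x * y) = f x * f y := by
    rintro (i | i) (j | j)
    · rw [QuaternionGroup.a_mul_a]
      show A^(i+j).val = A^(i.val) * A^(j.val)
      exact hAdd i j
    · rw [QuaternionGroup.a_mul_xa]
      show B * A^((j - i).val) = A^(i.val) * (B * A^(j.val))
      exact (key2 i j).symm
    · rw [QuaternionGroup.xa_mul_a]
      show B * A^((i+j).val) = (B * A^(i.val)) * A^(j.val)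
      rw [hAdd]; group
    · rw [QuaternionGroup.xa_mul_xa]
      show A^(((2:ℕ) + j - i : ZMod (2*2)).val) = (B * A^(i.val)) * (B * A^(j.val))
      have e2 : ((2:ℕ) : ZMod (2*2)).val = 2 := by decide
      have e3 : A^((((2:ℕ):ZMod (2*2)) + j - i).val) * A^(i.val)
          = A^((((2:ℕ):ZMod (2*2)) + j).val) := by
        rw [← hAdd]
        congr 1
        ring_nf
      have e4 : A^((((2:ℕ):ZMod (2*2)) + j).val) = A^2 * A^(j.val) := by
        rw [hAdd, e2]
      have e5 : A^((((2:ℕ):ZMod (2*2)) + j - i).val)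
          = A^2 * A^(j.val) * (A^(i.val))⁻¹ := by
        rw [← e4, ← e3]; group
      have e6 : (B * A^(i.val)) * (B * A^(j.val)) = B^2 * ((A^(i.val))⁻¹ * A^(j.val)) := by
        calc (B * A^(i.val)) * (B * A^(j.val)) = B * (A^(i.val) * B) * A^(j.val) := by group
          _ = B * (B * (A^(i.val))⁻¹) * A^(j.val) := by rw [hswap3]
          _ = B^2 * ((A^(i.val))⁻¹ * A^(j.val)) := by rw [sq]; group
      rw [e5, e6, hB2]
      have hcomm : (A^(i.val))⁻¹ * A^(j.val) = A^(j.val) * (A^(i.val))⁻¹ :=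
        (((Commute.refl A).pow_pow (i.val) (j.val)).inv_left).eq
      rw [hcomm]; group
  set f' : QuaternionGroup 2 →* G := MonoidHom.mk' f hmul with hf'
  have hinj : Function.Injective f' := by
    rw [injective_iff_map_eq_one]
    rintro (i | i) h
    · have h' : A^(i.val) = 1 := h
      have hdvd : 4 ∣ i.val := by rw [← hord]; exact orderOf_dvd_of_pow_eq_one h'
      have hlt : i.val < 4 := i.val_lt
      have h0 : i.val = 0 := Nat.eq_zero_of_dvd_of_lt hdvd hlt
      have : i = 0 := by
        have := (ZMod.natCast_rightInverse (n := 2*2) i).symm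
        rw [this, h0]
        rfl
      rw [this, QuaternionGroup.one_def]
    · exfalso
      have h' : B * A^(i.val) = 1 := h
      have hB : B = (A^(i.val))⁻¹ := eq_inv_of_mul_eq_one_left h'
      have hcomm : Commute A B := by
        rw [hB]
        exact ((Commute.refl A).pow_right (i.val)).inv_right
      have := commutatorElement_eq_one_iff_commute.mpr hcomm
      rw [hc] at this
      exact hA2 this
  have hsurj : Function.Surjective f' := by
    have hsub : Subgroup.closure {A, B} ≤ f'.range := by
      rw [Subgroup.closure_le]
      rintro s hs
      rw [Set.mem_insert_iff, Set.mem_singleton_iff] at hs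
      rcases hs with h | h
      · refine ⟨QuaternionGroup.a 1, ?_⟩
        rw [h]
        show A^((1 : ZMod (2*2)).val) = A
        rw [show ((1 : ZMod (2*2)).val) = 1 from rfl, pow_one]
      · refine ⟨QuaternionGroup.xa 0, ?_⟩
        rw [h]
        show B * A^((0 : ZMod (2*2)).val) = B
        rw [show ((0 : ZMod (2*2)).val) = 0 from rfl, pow_zero, mul_one]
    intro x
    have : x ∈ f'.range := hsub (by rw [hgen]; exact Subgroup.mem_top x)
    exact this
  exact ⟨(MulEquiv.ofBijective f' ⟨hinj, hsurj⟩).symm⟩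

/-- Every `pℰ`-group that can be generated by 2 elements is either abelian or
isomorphic to the quaternion group `Q₈` of order 8. -/
theorem two_generated_pEpsilonGroup_comm_or_quaternion
    (p : ℕ) (hp : p.Prime) {G : Type*} [Group G] [Finite G]
    (hG : IsPEpsilonGroup p G)
    (hgen : ∃ a b : G, Subgroup.closure {a, b} = ⊤) :
    (∀ x y : G, x * y = y * x) ∨ Nonempty (G ≃* QuaternionGroup 2) := by
  obtain ⟨a, b, hgen⟩ := hgen
  obtain ⟨hpg, hEngel, r, hOmega, hexp⟩ := hG
  by_cases hab : Commute a b
  · exact Or.inl fun x y => commute_of_gen hgen hab x y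
  right
  set c : G := ⁅a, b⁆ with hcdef
  have hc : c = ⁅a, b⁆ := hcdef
  have hc1 : c ≠ 1 := fun h => hab (commutatorElement_eq_one_iff_commute.mp h)
  have hcb : Commute c b := commutatorElement_eq_one_iff_commute.mp (hEngel a b)
  have hca : Commute c a := by
    have h := commutatorElement_eq_one_iff_commute.mp (hEngel b a)
    have h2 := h.inv_left
    rw [commutatorElement_inv] at h2
    exact h2
  have hcz : ∀ x : G, Commute c x := commute_all hgen (by
    intro s hs
    rcases pair_mem hs with rfl | rfl
    exacts [hca, hcb])
  -- zpowers c is normal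
  haveI hnorm : (Subgroup.zpowers c).Normal := by
    constructor
    intro n hn g
    obtain ⟨k, rfl⟩ := Subgroup.mem_zpowers_iff.mp hn
    have : g * c ^ k * g⁻¹ = c ^ k := by
      rw [← ((hcz g).zpow_left k).eq]
      group
    rw [this]
    exact Subgroup.zpowers_le.mpr (Subgroup.mem_zpowers c) (Subgroup.mem_zpowers_iff.mpr ⟨k, rfl⟩)
  -- commutator G ≤ zpowers c
  have hcomm_le : commutator G ≤ Subgroup.zpowers c := by
    rw [commutator_def, Subgroup.commutator_le]
    intro g1 _ g2 _
    set π := QuotientGroup.mk' (Subgroup.zpowers c) with hπ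
    have hgenQ : Subgroup.closure {π a, π b} = ⊤ := by
      have hs : Function.Surjective π := QuotientGroup.mk'_surjective _
      have := Subgroup.map_top_of_surjective π hs
      rw [← hgen, MonoidHom.map_closure] at this
      rw [← this]
      congr 1
      rw [Set.image_insert_eq, Set.image_singleton]
    have habQ : Commute (π a) (π b) := by
      rw [← commutatorElement_eq_one_iff_commute, ← map_commutatorElement]
      rw [← hcdef]
      exact (QuotientGroup.eq_one_iff c).mpr (Subgroup.mem_zpowers c)
    have hcommQ := commute_of_gen hgenQ habQ
    have : π ⁅g1, g2⁆ = 1 := by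
      rw [map_commutatorElement]
      exact commutatorElement_eq_one_iff_commute.mpr (hcommQ (π g1) (π g2))
    exact (QuotientGroup.eq_one_iff _).mp this
  set q : ℕ := p ^ r with hqdef
  have hq_mem : ∀ x : G, ∃ k : ℤ, x ^ q = c ^ k := by
    intro x
    have h1 := Monoid.pow_exponent_eq_one (QuotientGroup.mk' (commutator G) x)
    rw [hexp] at h1
    have h2 : (QuotientGroup.mk' (commutator G)) (x ^ q) = 1 := by
      rw [map_pow]
      exact h1
    have h3 : x ^ q ∈ commutator G := (QuotientGroup.eq_one_iff _).mp h2
    obtain ⟨k, hk⟩ := Subgroup.mem_zpowers_iff.mp (hcomm_le h3)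
    exact ⟨k, hk.symm⟩
  have hcentral : ∀ x : G, x ^ q = 1 → ∀ g : G, Commute x g := by
    intro x hx g
    have hmem : x ∈ Subgroup.closure {y : G | y ^ p ^ r = 1} :=
      Subgroup.subset_closure (by exact hx)
    exact ((Subgroup.mem_center_iff.mp (hOmega hmem)) g).symm
  obtain ⟨i, hi⟩ := hq_mem a
  obtain ⟨j, hj⟩ := hq_mem b
  -- c ^ q = 1
  have hcq : c ^ q = 1 := by
    have h1 := conj_a hc hcz (q : ℤ)
    rw [zpow_natCast, hi] at h1
    have h2 : b * c ^ i * b⁻¹ = c ^ i := by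
      rw [← ((hcz b).zpow_left i).eq]
      group
    rw [h2] at h1
    have h3 : c ^ i * (1:G) = c ^ i * c ^ (-(q:ℤ)) := by rw [mul_one]; exact h1
    have h4 : (1:G) = c ^ (-(q:ℤ)) := mul_left_cancel h3
    have h5 : c ^ (q:ℤ) = 1 := by
      rw [zpow_neg] at h4
      rw [← inv_inv (c ^ (q:ℤ)), ← h4, inv_one]
    rw [← zpow_natCast]
    exact h5
  have hdq : orderOf c ∣ q := orderOf_dvd_of_pow_eq_one hcq
  obtain ⟨t0, ht0r, ht0⟩ := (Nat.dvd_prime_pow hp).mp hdq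
  have ht1 : 1 ≤ t0 := by
    by_contra hcon
    have : t0 = 0 := by omega
    rw [this, pow_zero] at ht0
    exact hc1 (orderOf_eq_one_iff.mp ht0)
  -- the divisibility criterion
  have HZ : ∀ k m : ℤ, ((p:ℤ)^t0 ∣ (k*i + m*j - k*m*((q.choose 2 : ℕ) : ℤ))) →
      ((p:ℤ)^t0 ∣ k ∧ (p:ℤ)^t0 ∣ m) := by
    intro k m hdvd
    set T : ℤ := ((q.choose 2 : ℕ) : ℤ) with hT
    set x : G := a ^ k * b ^ m with hx
    have hxq : x ^ q = c ^ (k*i + m*j - k*m*T) := by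
      have h1 : x = a ^ k * b ^ m * c ^ (0:ℤ) := by rw [hx, zpow_zero, mul_one]
      rw [h1, nf_pow hc hcz k m 0 q]
      have ea : a ^ (k * (q:ℤ)) = c ^ (i * k) := by
        rw [mul_comm k, zpow_mul, zpow_natCast, hi, ← zpow_mul, mul_comm]
      have eb : b ^ (m * (q:ℤ)) = c ^ (j * m) := by
        rw [mul_comm m, zpow_mul, zpow_natCast, hj, ← zpow_mul, mul_comm]
      rw [ea, eb, ← zpow_add, ← zpow_add]
      congr 1
      ring
    have hxq1 : x ^ q = 1 := by
      rw [hxq]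
      rw [← orderOf_dvd_iff_zpow_eq_one]
      have : ((orderOf c : ℕ) : ℤ) = (p:ℤ)^t0 := by rw [ht0]; push_cast; ring
      rw [this]
      exact hdvd
    have hxb := hcentral x hxq1 b
    have hxa := hcentral x hxq1 a
    constructor
    · -- c ^ k = 1
      have h5 : a^k * b^(m+1) = (a^k * c^(-k)) * b^(m+1) := by
        calc a^k * b^(m+1) = x * b := by rw [hx]; group
          _ = b * x := hxb.eq
          _ = (b^(1:ℤ) * a^k) * b^m := by rw [hx]; group
          _ = (a^k * c^(-(k*(1:ℤ))) * b^(1:ℤ)) * b^m := by rw [swap_ba hc hcz (1:ℤ) k]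
          _ = (a^k * c^(-k)) * b^(m+1) := by
              rw [show (-(k*(1:ℤ))) = -k by ring]
              group
      have h6 : a^k = a^k * c^(-k) := mul_right_cancel h5
      have h7 : c^(-k) = 1 := (left_eq_mul.mp h6).symm ▸ rfl
      have h8 : c ^ k = 1 := by
        rw [zpow_neg, inv_eq_one] at h7
        exact h7
      rw [← orderOf_dvd_iff_zpow_eq_one] at h8
      have : ((orderOf c : ℕ) : ℤ) = (p:ℤ)^t0 := by rw [ht0]; push_cast; ring
      rw [← this]
      exact h8
    · -- c ^ m = 1
      have h5 : a^(k+1) * b^m = (a^(k+1) * c^(-m)) * b^m := by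
        calc a^(k+1) * b^m = a * x := by rw [hx]; group
          _ = x * a := hxa.eq.symm
          _ = a^k * (b^m * a^(1:ℤ)) := by rw [hx]; group
          _ = a^k * (a^(1:ℤ) * c^(-((1:ℤ)*m)) * b^m) := by rw [swap_ba hc hcz m (1:ℤ)]
          _ = (a^(k+1) * c^(-m)) * b^m := by
              rw [show (-((1:ℤ)*m)) = -m by ring]
              group
      have h6 : a^(k+1) = a^(k+1) * c^(-m) := mul_right_cancel h5
      have h7 : c^(-m) = 1 := (left_eq_mul.mp h6).symm ▸ rfl
      have h8 : c ^ m = 1 := by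
        rw [zpow_neg, inv_eq_one] at h7
        exact h7
      rw [← orderOf_dvd_iff_zpow_eq_one] at h8
      have : ((orderOf c : ℕ) : ℤ) = (p:ℤ)^t0 := by rw [ht0]; push_cast; ring
      rw [← this]
      exact h8
  obtain ⟨hp2, hr1, ht01, hi2, hj2⟩ := arith_core hp ht1 ht0r (by
    rw [hqdef] at HZ
    exact HZ)
  -- now p = 2, r = 1, orderOf c = 2
  have hq2 : q = 2 := by rw [hqdef, hp2, hr1, pow_one]
  have hoc : orderOf c = 2 := by rw [ht0, ht01, hp2, pow_one]
  have hc2 : c ^ 2 = 1 := by rw [← hoc]; exact pow_orderOf_eq_one c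
  have hc2z : c ^ (2:ℤ) = 1 := by rw [show ((2:ℤ)) = ((2:ℕ):ℤ) by norm_num, zpow_natCast]; exact hc2
  have hodd : ∀ w : ℤ, ¬ (2:ℤ) ∣ w → c ^ w = c := by
    intro w hw
    obtain ⟨l, hl⟩ : ∃ l, w = 2*l + 1 := by
      refine ⟨w / 2, ?_⟩
      omega
    rw [hl, zpow_add, zpow_mul, hc2z, one_zpow, one_mul, zpow_one]
  have ha2 : a ^ 2 = c := by
    have := hi
    rw [hq2] at this
    rw [this, hodd i hi2]
  have hb2 : b ^ 2 = c := by
    have := hj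
    rw [hq2] at this
    rw [this, hodd j hj2]
  have ha4 : a ^ 4 = 1 := by
    rw [show (4:ℕ) = 2*2 by norm_num, pow_mul, ha2]
    exact hc2
  have ha2ne : a ^ 2 ≠ 1 := by rw [ha2]; exact hc1
  exact iso_quaternion hgen (by rw [← hcdef, ← ha2]) (by rw [hb2, ha2]) ha4 ha2ne
end
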